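/- arXiv:2109.13569 — 5 statements merged into one kernel-verified Lean document; each statement's English description precedes it below -/
import Mathlib

section
/- Let (y*, u*) solve the quasi-generalized equation −A(y,u) ∈ B(y − Φ(y,u), u) under the standing assumptions (with constants ε, μ_A, L_A), with Φ uniformly L_Φ-Lipschitz in its first variable on B_ε(y*) for u ∈ 𝒰 and L_Φ ∈ [0,1), and assume the smallness condition: either (a) L_Φ < μ_A/L_A, or (b) L_Φ < 2√γ_A/(1 + γ_A) with γ_A = L_A/μ_A and A(·,u) is on the open ball U_ε(y*) the Fréchet derivative of a real-valued function g(·,u) for each u ∈ 𝒰. Then for each u ∈ 𝒰 the equation −A(y,u) ∈ B(y − Φ(y,u), u) has at most one solution y ∈ B_ε(y*). -/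
open Filter Topology Metric Set
open scoped RealInnerProductSpace

section Aux

variable {Y : Type*} [NormedAddCommGroup Y] [InnerProductSpace ℝ Y] [CompleteSpace Y]

lemma seg_deriv {F : Y → Y} {G : Y → ℝ} {c : Y} {ε : ℝ}
    (hd : ∀ y ∈ ball c ε, HasFDerivAt G ((InnerProductSpace.toDual ℝ Y (F y) : Y →L[ℝ] ℝ)) y)
    {x z : Y} (hx : x ∈ ball c ε) (hz : z ∈ ball c ε) {t : ℝ} (ht : t ∈ Icc (0:ℝ) 1) :
    HasDerivAt (fun s : ℝ => G (x + s • (z - x))) ⟪F (x + t • (z - x)), z - x⟫ t := by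
  have hmem : x + t • (z - x) ∈ ball c ε := by
    have hrw : x + t • (z - x) = (1 - t) • x + t • z := by module
    rw [hrw]
    exact (convex_ball c ε) hx hz (by linarith [ht.2]) ht.1 (by ring)
  have hpath : HasDerivAt (fun s : ℝ => x + s • (z - x)) (z - x) t := by
    simpa using ((hasDerivAt_id t).smul_const (z - x)).const_add x
  have := (hd _ hmem).comp_hasDerivAt t hpath
  simp only [InnerProductSpace.toDual_apply_apply] at this
  exact this

lemma seg_bounds {F : Y → Y} {G : Y → ℝ} {c : Y} {ε μ L : ℝ}
    (hd : ∀ y ∈ ball c ε, HasFDerivAt G ((InnerProductSpace.toDual ℝ Y (F y) : Y →L[ℝ] ℝ)) y)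
    (hmono : ∀ y₁ ∈ closedBall c ε, ∀ y₂ ∈ closedBall c ε,
      μ * ‖y₂ - y₁‖ ^ 2 ≤ ⟪F y₂ - F y₁, y₂ - y₁⟫)
    (hlip : ∀ y₁ ∈ closedBall c ε, ∀ y₂ ∈ closedBall c ε, ‖F y₂ - F y₁‖ ≤ L * ‖y₂ - y₁‖)
    {x z : Y} (hx : x ∈ ball c ε) (hz : z ∈ ball c ε) :
    μ / 2 * ‖z - x‖ ^ 2 ≤ G z - G x - ⟪F x, z - x⟫ ∧
      G z - G x - ⟪F x, z - x⟫ ≤ L / 2 * ‖z - x‖ ^ 2 := by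
  set v := z - x with hv
  have hmem : ∀ t ∈ Icc (0:ℝ) 1, x + t • v ∈ ball c ε := by
    intro t ht
    have hrw : x + t • v = (1 - t) • x + t • z := by rw [hv]; module
    rw [hrw]
    exact (convex_ball c ε) hx hz (by linarith [ht.2]) ht.1 (by ring)
  have hcb : ∀ t ∈ Icc (0:ℝ) 1, x + t • v ∈ closedBall c ε := fun t ht =>
    ball_subset_closedBall (hmem t ht)
  -- directional bounds on the derivative difference
  have hkey : ∀ t ∈ Icc (0:ℝ) 1,
      μ * t * ‖v‖ ^ 2 ≤ ⟪F (x + t • v) - F x, v⟫ ∧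
      ⟪F (x + t • v) - F x, v⟫ ≤ L * t * ‖v‖ ^ 2 := by
    intro t ht
    have hxc : x ∈ closedBall c ε := ball_subset_closedBall hx
    have h1 := hmono x hxc _ (hcb t ht)
    have h2 := hlip x hxc _ (hcb t ht)
    have hsub : x + t • v - x = t • v := by abel
    rw [hsub] at h1 h2
    have hnorm : ‖t • v‖ = t * ‖v‖ := by
      rw [norm_smul, Real.norm_eq_abs, abs_of_nonneg ht.1]
    rw [hnorm] at h1 h2
    have hinner : ⟪F (x + t • v) - F x, t • v⟫ = t * ⟪F (x + t • v) - F x, v⟫ :=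
      real_inner_smul_right _ _ _
    rw [hinner] at h1
    constructor
    · rcases eq_or_lt_of_le ht.1 with h0 | h0
      · simp [← h0]
      · nlinarith
    · calc ⟪F (x + t • v) - F x, v⟫ ≤ ‖F (x + t • v) - F x‖ * ‖v‖ := real_inner_le_norm _ _
        _ ≤ L * (t * ‖v‖) * ‖v‖ := by
            apply mul_le_mul_of_nonneg_right h2 (norm_nonneg _)
        _ = L * t * ‖v‖ ^ 2 := by ring
  have hD : ∀ t ∈ Icc (0:ℝ) 1,
      HasDerivAt (fun s : ℝ => G (x + s • v)) ⟪F (x + t • v), v⟫ t :=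
    fun t ht => seg_deriv hd hx hz ht
  have hq : ∀ (k : ℝ) (t : ℝ), t ∈ Icc (0:ℝ) 1 →
      HasDerivAt (fun s : ℝ => G (x + s • v) - s * ⟪F x, v⟫ - k / 2 * s ^ 2 * ‖v‖ ^ 2)
        (⟪F (x + t • v) - F x, v⟫ - k * t * ‖v‖ ^ 2) t := by
    intro k t ht
    have h1 := ((hD t ht).sub ((hasDerivAt_id t).mul_const ⟪F x, v⟫)).sub
      (((hasDerivAt_pow 2 t).const_mul (k / 2)).mul_const (‖v‖ ^ 2))
    simp only [id_eq] at h1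
    convert h1 using 1
    · rfl
    · rfl
    · rfl
    rw [inner_sub_left]
    push_cast
    ring
  have key : ∀ k : ℝ, (∀ t ∈ Ioo (0:ℝ) 1, 0 ≤ ⟪F (x + t • v) - F x, v⟫ - k * t * ‖v‖ ^ 2) →
      k / 2 * ‖v‖ ^ 2 ≤ G z - G x - ⟪F x, v⟫ := by
    intro k hk
    have hmonoq : MonotoneOn
        (fun s : ℝ => G (x + s • v) - s * ⟪F x, v⟫ - k / 2 * s ^ 2 * ‖v‖ ^ 2) (Icc 0 1) := by
      apply monotoneOn_of_hasDerivWithinAt_nonneg (convex_Icc 0 1)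
        (f' := fun t => ⟪F (x + t • v) - F x, v⟫ - k * t * ‖v‖ ^ 2)
      · intro t ht
        exact (hq k t ht).continuousAt.continuousWithinAt
      · intro t ht
        rw [interior_Icc] at ht
        exact (hq k t (Ioo_subset_Icc_self ht)).hasDerivWithinAt
      · intro t ht
        rw [interior_Icc] at ht
        exact hk t ht
    have h01 := hmonoq (left_mem_Icc.2 zero_le_one) (right_mem_Icc.2 zero_le_one) zero_le_one
    simp only [zero_smul, add_zero, one_smul, zero_mul, zero_pow, mul_zero, sub_zero,
      one_pow, mul_one, one_mul] at h01
    have hxz : x + v = z := by rw [hv]; abel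
    rw [hxz] at h01
    linarith
  have keyU : ∀ k : ℝ, (∀ t ∈ Ioo (0:ℝ) 1, ⟪F (x + t • v) - F x, v⟫ - k * t * ‖v‖ ^ 2 ≤ 0) →
      G z - G x - ⟪F x, v⟫ ≤ k / 2 * ‖v‖ ^ 2 := by
    intro k hk
    have hantiq : AntitoneOn
        (fun s : ℝ => G (x + s • v) - s * ⟪F x, v⟫ - k / 2 * s ^ 2 * ‖v‖ ^ 2) (Icc 0 1) := by
      apply antitoneOn_of_deriv_nonpos (convex_Icc 0 1)
      · intro t ht
        exact (hq k t ht).continuousAt.continuousWithinAt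
      · intro t ht
        rw [interior_Icc] at ht
        exact (hq k t (Ioo_subset_Icc_self ht)).differentiableAt.differentiableWithinAt
      · intro t ht
        rw [interior_Icc] at ht
        rw [(hq k t (Ioo_subset_Icc_self ht)).deriv]
        exact hk t ht
    have h01 := hantiq (left_mem_Icc.2 zero_le_one) (right_mem_Icc.2 zero_le_one) zero_le_one
    simp only [zero_smul, add_zero, one_smul, zero_mul, zero_pow, mul_zero, sub_zero,
      one_pow, mul_one, one_mul] at h01
    have hxz : x + v = z := by rw [hv]; abel
    rw [hxz] at h01
    linarith
  constructor
  · exact key μ fun t ht => by linarith [(hkey t (Ioo_subset_Icc_self ht)).1]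
  · exact keyU L fun t ht => by linarith [(hkey t (Ioo_subset_Icc_self ht)).2]

lemma pair_coco {F : Y → Y} {G : Y → ℝ} {c : Y} {ε μ L : ℝ} (hμL : μ < L)
    (hd : ∀ y ∈ ball c ε, HasFDerivAt G ((InnerProductSpace.toDual ℝ Y (F y) : Y →L[ℝ] ℝ)) y)
    (hmono : ∀ y₁ ∈ closedBall c ε, ∀ y₂ ∈ closedBall c ε,
      μ * ‖y₂ - y₁‖ ^ 2 ≤ ⟪F y₂ - F y₁, y₂ - y₁⟫)
    (hlip : ∀ y₁ ∈ closedBall c ε, ∀ y₂ ∈ closedBall c ε, ‖F y₂ - F y₁‖ ≤ L * ‖y₂ - y₁‖)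
    {x y : Y} (hx : x ∈ ball c ε) (hy : y ∈ ball c ε)
    (hz1 : x - (L - μ)⁻¹ • (F x - F y - μ • (x - y)) ∈ ball c ε)
    (hz2 : y + (L - μ)⁻¹ • (F x - F y - μ • (x - y)) ∈ ball c ε) :
    ‖F x - F y - μ • (x - y)‖ ^ 2 / (L - μ) ≤ ⟪F x - F y - μ • (x - y), x - y⟫ := by
  set t : ℝ := (L - μ)⁻¹ with htdef
  set b : Y := F x - F y - μ • (x - y) with hbdef
  set d : Y := x - y with hddef
  have hκ : 0 < L - μ := by linarith
  have htpos : 0 < t := inv_pos.2 hκ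
  have htκ : (L - μ) * t = 1 := mul_inv_cancel₀ (ne_of_gt hκ)
  -- scalar abbreviations
  have hbb : ‖b‖ ^ 2 = ⟪F x, b⟫ - ⟪F y, b⟫ - μ * ⟪d, b⟫ := by
    rw [← real_inner_self_eq_norm_sq, hbdef]
    rw [inner_sub_left, inner_sub_left, real_inner_smul_left]
  have hbd : ⟪b, d⟫ = ⟪F x, d⟫ - ⟪F y, d⟫ - μ * ‖d‖ ^ 2 := by
    rw [hbdef, inner_sub_left, inner_sub_left, real_inner_smul_left,
      real_inner_self_eq_norm_sq]
  have htb2 : ‖t • b‖ ^ 2 = t ^ 2 * ‖b‖ ^ 2 := by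
    rw [norm_smul, Real.norm_eq_abs, abs_of_nonneg htpos.le, mul_pow]
  -- E1 : upper bound from x to z₁
  have E1 := (seg_bounds hd hmono hlip hx hz1).2
  have E2 := (seg_bounds hd hmono hlip hy hz1).1
  have E3 := (seg_bounds hd hmono hlip hy hz2).2
  have E4 := (seg_bounds hd hmono hlip hx hz2).1
  have h1 : x - t • b - x = -(t • b) := by abel
  have h2 : x - t • b - y = d - t • b := by rw [hddef]; abel
  have h3 : y + t • b - y = t • b := by abel
  have h4 : y + t • b - x = -(d - t • b) := by rw [hddef]; abel
  rw [h1, inner_neg_right, real_inner_smul_right, norm_neg, htb2] at E1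
  rw [h2, inner_sub_right, real_inner_smul_right, norm_sub_sq_real, real_inner_smul_right,
    htb2] at E2
  rw [h3, real_inner_smul_right, htb2] at E3
  rw [h4, inner_neg_right, norm_neg, inner_sub_right, real_inner_smul_right,
    norm_sub_sq_real, real_inner_smul_right, htb2] at E4
  -- multiplied identity
  have hbbt : t * ‖b‖ ^ 2 = t * ⟪F x, b⟫ - t * ⟪F y, b⟫ - μ * (t * ⟪d, b⟫) := by
    rw [hbb]; ring
  have hgoal : ‖b‖ ^ 2 / (L - μ) = t * ‖b‖ ^ 2 := by
    rw [div_eq_mul_inv, mul_comm]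
  rw [hgoal]
  have hsq : (L - μ) * (t ^ 2 * ‖b‖ ^ 2) = t * ‖b‖ ^ 2 := by
    have : (L - μ) * t ^ 2 = t := by
      rw [pow_two, ← mul_assoc, htκ, one_mul]
    rw [← mul_assoc, this]
  nlinarith [E1, E2, E3, E4, hbbt, hbd, hsq]

lemma open_coco {F : Y → Y} {G : Y → ℝ} {c : Y} {ε μ L : ℝ} (hμ : 0 ≤ μ) (hμL : μ < L)
    (hd : ∀ y ∈ ball c ε, HasFDerivAt G ((InnerProductSpace.toDual ℝ Y (F y) : Y →L[ℝ] ℝ)) y)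
    (hmono : ∀ y₁ ∈ closedBall c ε, ∀ y₂ ∈ closedBall c ε,
      μ * ‖y₂ - y₁‖ ^ 2 ≤ ⟪F y₂ - F y₁, y₂ - y₁⟫)
    (hlip : ∀ y₁ ∈ closedBall c ε, ∀ y₂ ∈ closedBall c ε, ‖F y₂ - F y₁‖ ≤ L * ‖y₂ - y₁‖)
    {x y : Y} (hx : x ∈ ball c ε) (hy : y ∈ ball c ε) :
    ‖F x - F y - μ • (x - y)‖ ^ 2 / (L - μ) ≤ ⟪F x - F y - μ • (x - y), x - y⟫ := by
  rcases eq_or_ne x y with rfl | hxy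
  · simp
  have hκ : 0 < L - μ := by linarith
  set d : Y := x - y with hddef
  have hdne : d ≠ 0 := sub_ne_zero.2 hxy
  have hdpos : 0 < ‖d‖ := norm_pos_iff.2 hdne
  set ρ : ℝ := max ‖x - c‖ ‖y - c‖ with hρdef
  have hρ : ρ < ε := by
    apply max_lt
    · rw [← dist_eq_norm]; exact mem_ball.1 hx
    · rw [← dist_eq_norm]; exact mem_ball.1 hy
  -- choose n
  obtain ⟨n, hn⟩ := exists_nat_gt ((L - μ)⁻¹ * ((L + μ) * ‖d‖) / (ε - ρ))
  have hq : 0 < (L - μ)⁻¹ * ((L + μ) * ‖d‖) :=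
    mul_pos (inv_pos.2 hκ) (mul_pos (by linarith) hdpos)
  have hnpos : 0 < (n : ℝ) := lt_trans (div_pos hq (by linarith)) hn
  have hn0 : n ≠ 0 := by exact_mod_cast hnpos.ne'
  have hstepbound : (L - μ)⁻¹ * ((L + μ) * ‖d‖) / n < ε - ρ := by
    rw [div_lt_iff₀ hnpos]
    calc (L - μ)⁻¹ * ((L + μ) * ‖d‖)
        = ((L - μ)⁻¹ * ((L + μ) * ‖d‖) / (ε - ρ)) * (ε - ρ) :=
          (div_mul_cancel₀ _ (ne_of_gt (by linarith : (0:ℝ) < ε - ρ))).symm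
      _ < n * (ε - ρ) := mul_lt_mul_of_pos_right hn (by linarith)
      _ = (ε - ρ) * n := mul_comm _ _
  set p : ℕ → Y := fun i => y + ((i : ℝ) / n) • d with hpdef
  have hp0 : p 0 = y := by simp [hpdef]
  have hpn : p n = x := by
    have : ((n : ℝ) / n) = 1 := div_self (by exact_mod_cast hn0)
    simp [hpdef, this, hddef]
  have hpc : ∀ i ≤ n, ‖p i - c‖ ≤ ρ := by
    intro i hi
    have hs0 : (0:ℝ) ≤ (i : ℝ) / n := by positivity
    have hs1 : (i : ℝ) / n ≤ 1 := by
      rw [div_le_one hnpos]; exact_mod_cast hi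
    have hrw : p i - c = (1 - (i : ℝ)/n) • (y - c) + ((i : ℝ)/n) • (x - c) := by
      rw [hpdef, hddef]; module
    rw [hrw]
    calc ‖(1 - (i : ℝ)/n) • (y - c) + ((i : ℝ)/n) • (x - c)‖
        ≤ ‖(1 - (i : ℝ)/n) • (y - c)‖ + ‖((i : ℝ)/n) • (x - c)‖ := norm_add_le _ _
      _ = (1 - (i : ℝ)/n) * ‖y - c‖ + ((i : ℝ)/n) * ‖x - c‖ := by
          rw [norm_smul, norm_smul, Real.norm_eq_abs, Real.norm_eq_abs,
            abs_of_nonneg (by linarith), abs_of_nonneg hs0]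
      _ ≤ (1 - (i : ℝ)/n) * ρ + ((i : ℝ)/n) * ρ := by
          apply add_le_add
          · exact mul_le_mul_of_nonneg_left (le_max_right _ _) (by linarith)
          · exact mul_le_mul_of_nonneg_left (le_max_left _ _) hs0
      _ = ρ := by ring
  have hpball : ∀ i ≤ n, p i ∈ ball c ε := by
    intro i hi
    rw [mem_ball, dist_eq_norm]
    exact lt_of_le_of_lt (hpc i hi) hρ
  have hpstep : ∀ i, p (i + 1) - p i = (n : ℝ)⁻¹ • d := by
    intro i
    have : ((i : ℝ) + 1) / n = (i : ℝ)/n + (n:ℝ)⁻¹ := by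
      field_simp
    simp only [hpdef, Nat.cast_add, Nat.cast_one, this]
    module
  set bi : ℕ → Y := fun i => F (p (i + 1)) - F (p i) - μ • (p (i + 1) - p i) with hbidef
  have hbinorm : ∀ i < n, ‖bi i‖ ≤ (L + μ) * ‖d‖ / n := by
    intro i hi
    have h1 : ‖F (p (i+1)) - F (p i)‖ ≤ L * ‖p (i+1) - p i‖ :=
      hlip _ (ball_subset_closedBall (hpball i (le_of_lt hi)))
        _ (ball_subset_closedBall (hpball (i+1) hi))
    have h2 : ‖p (i+1) - p i‖ = ‖d‖ / n := by
      rw [hpstep i, norm_smul, Real.norm_eq_abs, abs_of_nonneg (inv_nonneg.2 hnpos.le),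
        inv_mul_eq_div]
    calc ‖bi i‖ ≤ ‖F (p (i+1)) - F (p i)‖ + ‖μ • (p (i+1) - p i)‖ := norm_sub_le _ _
      _ ≤ L * ‖p (i+1) - p i‖ + μ * ‖p (i+1) - p i‖ := by
          apply add_le_add h1
          rw [norm_smul, Real.norm_eq_abs, abs_of_nonneg hμ]
      _ = (L + μ) * ‖d‖ / n := by rw [h2]; ring
  -- per-pair inequality
  have hpair : ∀ i < n, ‖bi i‖ ^ 2 / (L - μ) ≤ (n : ℝ)⁻¹ * ⟪bi i, d⟫ := by
    intro i hi
    have hzmem : ∀ w : Y, ‖w - c‖ ≤ ρ + (L - μ)⁻¹ * ‖bi i‖ → w ∈ ball c ε := by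
      intro w hw
      rw [mem_ball, dist_eq_norm]
      have : (L - μ)⁻¹ * ‖bi i‖ ≤ (L - μ)⁻¹ * ((L + μ) * ‖d‖ / n) :=
        mul_le_mul_of_nonneg_left (hbinorm i hi) (inv_nonneg.2 hκ.le)
      have h3 : (L - μ)⁻¹ * ((L + μ) * ‖d‖ / n) = (L - μ)⁻¹ * ((L + μ) * ‖d‖) / n := by
        ring
      calc ‖w - c‖ ≤ ρ + (L - μ)⁻¹ * ‖bi i‖ := hw
        _ ≤ ρ + (L - μ)⁻¹ * ((L + μ) * ‖d‖) / n := by rw [← h3]; linarith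
        _ < ε := by linarith [hstepbound]
    have hz1 : p (i+1) - (L - μ)⁻¹ • (F (p (i+1)) - F (p i) - μ • (p (i+1) - p i)) ∈
        ball c ε := by
      apply hzmem
      calc ‖p (i+1) - (L - μ)⁻¹ • bi i - c‖
          = ‖(p (i+1) - c) - (L - μ)⁻¹ • bi i‖ := by rw [sub_right_comm]
        _ ≤ ‖p (i+1) - c‖ + ‖(L - μ)⁻¹ • bi i‖ := norm_sub_le _ _
        _ ≤ ρ + (L - μ)⁻¹ * ‖bi i‖ := by
            apply add_le_add (hpc (i+1) hi)
            rw [norm_smul, Real.norm_eq_abs, abs_of_nonneg (inv_nonneg.2 hκ.le)]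
    have hz2 : p i + (L - μ)⁻¹ • (F (p (i+1)) - F (p i) - μ • (p (i+1) - p i)) ∈
        ball c ε := by
      apply hzmem
      calc ‖p i + (L - μ)⁻¹ • bi i - c‖
          = ‖(p i - c) + (L - μ)⁻¹ • bi i‖ := by rw [add_sub_right_comm]
        _ ≤ ‖p i - c‖ + ‖(L - μ)⁻¹ • bi i‖ := norm_add_le _ _
        _ ≤ ρ + (L - μ)⁻¹ * ‖bi i‖ := by
            apply add_le_add (hpc i (le_of_lt hi))
            rw [norm_smul, Real.norm_eq_abs, abs_of_nonneg (inv_nonneg.2 hκ.le)]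
    have hpc2 := pair_coco hμL hd hmono hlip (hpball (i+1) hi) (hpball i (le_of_lt hi)) hz1 hz2
    have h5 : (⟪bi i, p (i + 1) - p i⟫ : ℝ) = (n : ℝ)⁻¹ * ⟪bi i, d⟫ := by
      rw [hpstep i, real_inner_smul_right]
    calc ‖bi i‖ ^ 2 / (L - μ) ≤ ⟪bi i, p (i + 1) - p i⟫ := hpc2
      _ = (n : ℝ)⁻¹ * ⟪bi i, d⟫ := h5
  -- telescoping sum
  have hsum : ∑ i ∈ Finset.range n, bi i = F x - F y - μ • d := by
    have h1 : ∑ i ∈ Finset.range n, (F (p (i+1)) - F (p i)) = F (p n) - F (p 0) :=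
      Finset.sum_range_sub (fun i => F (p i)) n
    have h2 : ∑ i ∈ Finset.range n, (μ • (p (i+1) - p i)) = μ • (p n - p 0) := by
      rw [← Finset.smul_sum, Finset.sum_range_sub (fun i => p i) n]
    calc ∑ i ∈ Finset.range n, bi i
        = ∑ i ∈ Finset.range n, (F (p (i+1)) - F (p i))
          - ∑ i ∈ Finset.range n, (μ • (p (i+1) - p i)) := by
          rw [← Finset.sum_sub_distrib]
      _ = F (p n) - F (p 0) - μ • (p n - p 0) := by rw [h1, h2]
      _ = F x - F y - μ • d := by rw [hpn, hp0, hddef]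
  have hb : F x - F y - μ • (x - y) = ∑ i ∈ Finset.range n, bi i := by
    rw [hsum, hddef]
  rw [hb]
  -- Cauchy-Schwarz on the sum of norms
  have hCS : ‖∑ i ∈ Finset.range n, bi i‖ ^ 2 ≤
      (n : ℝ) * ∑ i ∈ Finset.range n, ‖bi i‖ ^ 2 := by
    calc ‖∑ i ∈ Finset.range n, bi i‖ ^ 2 ≤ (∑ i ∈ Finset.range n, ‖bi i‖) ^ 2 := by
          apply pow_le_pow_left₀ (norm_nonneg _) (norm_sum_le _ _)
      _ ≤ (Finset.range n).card * ∑ i ∈ Finset.range n, ‖bi i‖ ^ 2 :=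
          sq_sum_le_card_mul_sum_sq
      _ = (n : ℝ) * ∑ i ∈ Finset.range n, ‖bi i‖ ^ 2 := by rw [Finset.card_range]
  calc ‖∑ i ∈ Finset.range n, bi i‖ ^ 2 / (L - μ)
      ≤ ((n : ℝ) * ∑ i ∈ Finset.range n, ‖bi i‖ ^ 2) / (L - μ) := by gcongr
    _ = ∑ i ∈ Finset.range n, (n : ℝ) * (‖bi i‖ ^ 2 / (L - μ)) := by
        rw [Finset.mul_sum, Finset.sum_div]
        congr 1
        ext i
        ring
    _ ≤ ∑ i ∈ Finset.range n, ⟪bi i, d⟫ := by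
        apply Finset.sum_le_sum
        intro i hi
        have := hpair i (Finset.mem_range.1 hi)
        have h4 := mul_le_mul_of_nonneg_left this hnpos.le
        calc (n : ℝ) * (‖bi i‖ ^ 2 / (L - μ)) ≤ (n : ℝ) * ((n : ℝ)⁻¹ * ⟪bi i, d⟫) := h4
          _ = ⟪bi i, d⟫ := by
            rw [← mul_assoc, mul_inv_cancel₀ hnpos.ne', one_mul]
    _ = ⟪∑ i ∈ Finset.range n, bi i, d⟫ := by rw [sum_inner]

lemma closed_coco {F : Y → Y} {G : Y → ℝ} {c : Y} {ε μ L : ℝ} (hε : 0 < ε)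
    (hμ : 0 ≤ μ) (hμL : μ < L)
    (hd : ∀ y ∈ ball c ε, HasFDerivAt G ((InnerProductSpace.toDual ℝ Y (F y) : Y →L[ℝ] ℝ)) y)
    (hmono : ∀ y₁ ∈ closedBall c ε, ∀ y₂ ∈ closedBall c ε,
      μ * ‖y₂ - y₁‖ ^ 2 ≤ ⟪F y₂ - F y₁, y₂ - y₁⟫)
    (hlip : ∀ y₁ ∈ closedBall c ε, ∀ y₂ ∈ closedBall c ε, ‖F y₂ - F y₁‖ ≤ L * ‖y₂ - y₁‖)
    {x y : Y} (hx : x ∈ closedBall c ε) (hy : y ∈ closedBall c ε) :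
    ‖F x - F y - μ • (x - y)‖ ^ 2 / (L - μ) ≤ ⟪F x - F y - μ • (x - y), x - y⟫ := by
  set X : ℝ → Y := fun t => c + t • (x - c) with hXdef
  set Z : ℝ → Y := fun t => c + t • (y - c) with hZdef
  have hX1 : X 1 = x := by simp [hXdef]
  have hZ1 : Z 1 = y := by simp [hZdef]
  have hmemX : ∀ w : Y, w ∈ closedBall c ε → ∀ t ∈ Ioo (0:ℝ) 1,
      c + t • (w - c) ∈ ball c ε := by
    intro w hw t ht
    rw [mem_ball, dist_eq_norm, add_sub_cancel_left, norm_smul, Real.norm_eq_abs,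
      abs_of_nonneg ht.1.le]
    have hwc : ‖w - c‖ ≤ ε := by rw [← dist_eq_norm]; exact mem_closedBall.1 hw
    calc t * ‖w - c‖ ≤ t * ε := mul_le_mul_of_nonneg_left hwc ht.1.le
      _ < 1 * ε := mul_lt_mul_of_pos_right ht.2 hε
      _ = ε := one_mul ε
  -- continuity
  have hFlip : LipschitzOnWith (Real.toNNReal L) F (closedBall c ε) := by
    apply LipschitzOnWith.of_dist_le_mul
    intro a ha b hb
    rw [dist_eq_norm, dist_eq_norm, Real.coe_toNNReal L (by linarith)]
    exact hlip b hb a ha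
  have hFcont : ContinuousOn F (closedBall c ε) := hFlip.continuousOn
  have hl : Filter.NeBot (𝓝[Iio (1:ℝ)] 1) := nhdsLT_neBot 1
  have hevIoo : ∀ᶠ t in 𝓝[Iio (1:ℝ)] 1, t ∈ Ioo (0:ℝ) 1 := by
    have h1 : ∀ᶠ t in 𝓝[Iio (1:ℝ)] 1, (0:ℝ) < t :=
      eventually_nhdsWithin_of_eventually_nhds (eventually_gt_nhds one_pos)
    have h2 : ∀ᶠ t in 𝓝[Iio (1:ℝ)] 1, t < 1 := eventually_mem_nhdsWithin
    filter_upwards [h1, h2] with t ht1 ht2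
    exact ⟨ht1, ht2⟩
  have hXcont : Continuous X := by
    apply continuous_const.add (continuous_id.smul continuous_const)
  have hZcont : Continuous Z := by
    apply continuous_const.add (continuous_id.smul continuous_const)
  have hXt' : Tendsto X (𝓝[Iio (1:ℝ)] 1) (𝓝 x) := by
    have := (hXcont.tendsto 1).mono_left (nhdsWithin_le_nhds (s := Iio (1:ℝ)))
    rwa [hX1] at this
  have hZt' : Tendsto Z (𝓝[Iio (1:ℝ)] 1) (𝓝 y) := by
    have := (hZcont.tendsto 1).mono_left (nhdsWithin_le_nhds (s := Iio (1:ℝ)))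
    rwa [hZ1] at this
  have hXt : Tendsto X (𝓝[Iio (1:ℝ)] 1) (𝓝[closedBall c ε] x) := by
    rw [tendsto_nhdsWithin_iff]
    refine ⟨hXt', ?_⟩
    filter_upwards [hevIoo] with t ht
    exact ball_subset_closedBall (hmemX x hx t ht)
  have hZt : Tendsto Z (𝓝[Iio (1:ℝ)] 1) (𝓝[closedBall c ε] y) := by
    rw [tendsto_nhdsWithin_iff]
    refine ⟨hZt', ?_⟩
    filter_upwards [hevIoo] with t ht
    exact ball_subset_closedBall (hmemX y hy t ht)
  have hFX : Tendsto (fun t => F (X t)) (𝓝[Iio (1:ℝ)] 1) (𝓝 (F x)) :=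
    (hFcont x hx).tendsto.comp hXt
  have hFZ : Tendsto (fun t => F (Z t)) (𝓝[Iio (1:ℝ)] 1) (𝓝 (F y)) :=
    (hFcont y hy).tendsto.comp hZt
  have hbt : Tendsto (fun t => F (X t) - F (Z t) - μ • (X t - Z t)) (𝓝[Iio (1:ℝ)] 1)
      (𝓝 (F x - F y - μ • (x - y))) :=
    (hFX.sub hFZ).sub ((hXt'.sub hZt').const_smul μ)
  have hφ : Tendsto
      (fun t => (⟪F (X t) - F (Z t) - μ • (X t - Z t), X t - Z t⟫ : ℝ)
        - ‖F (X t) - F (Z t) - μ • (X t - Z t)‖ ^ 2 / (L - μ)) (𝓝[Iio (1:ℝ)] 1)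
      (𝓝 (⟪F x - F y - μ • (x - y), x - y⟫ - ‖F x - F y - μ • (x - y)‖ ^ 2 / (L - μ))) := by
    exact (hbt.inner (hXt'.sub hZt')).sub (((hbt.norm.pow 2)).div_const (L - μ))
  have hnonneg : ∀ᶠ t in 𝓝[Iio (1:ℝ)] 1,
      (0:ℝ) ≤ ⟪F (X t) - F (Z t) - μ • (X t - Z t), X t - Z t⟫
        - ‖F (X t) - F (Z t) - μ • (X t - Z t)‖ ^ 2 / (L - μ) := by
    filter_upwards [hevIoo] with t ht
    have := open_coco hμ hμL hd hmono hlip (hmemX x hx t ht) (hmemX y hy t ht)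
    linarith
  have := ge_of_tendsto hφ hnonneg
  linarith

end Aux

/-- A set-valued operator `T : Y ⇉ Y` is maximally monotone. -/
def IsMaxMonotone {Y : Type*} [NormedAddCommGroup Y] [InnerProductSpace ℝ Y]
    (T : Y → Set Y) : Prop :=
  (∀ ⦃y₁ y₂ ξ₁ ξ₂⦄, ξ₁ ∈ T y₁ → ξ₂ ∈ T y₂ → 0 ≤ ⟪ξ₂ - ξ₁, y₂ - y₁⟫) ∧
  (∀ y ξ, (∀ y' ξ', ξ' ∈ T y' → 0 ≤ ⟪ξ - ξ', y - y'⟫) → ξ ∈ T y)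

/-- Lemma 4.5 / `lem:uniqueness`.
Under the standing assumptions and the smallness condition on `L_Φ`, for each `u ∈ 𝒰` the
quasi-generalized equation `0 ∈ A(y,u) + B(y − Φ(y,u), u)` has at most one solution in
`B_ε(y*)`. -/
theorem stmt_12
    {Y : Type*} [NormedAddCommGroup Y] [InnerProductSpace ℝ Y] [CompleteSpace Y]
    {U : Type*} [NormedAddCommGroup U] [NormedSpace ℝ U] [CompleteSpace U]
    (A : Y → U → Y) (B : Y → U → Set Y) (Φ : Y → U → Y) (𝒰 : Set U)
    (ystar : Y) (ustar : U)
    (h𝒰 : 𝒰 ∈ 𝓝 ustar) (hustar : ustar ∈ 𝒰)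
    (ε μA LA LΦ : ℝ) (hε : 0 < ε) (hμA : 0 < μA) (hLA : 0 < LA)
    -- standing assumptions
    (hmonoA : ∀ u ∈ 𝒰, ∀ y₁ ∈ closedBall ystar ε, ∀ y₂ ∈ closedBall ystar ε,
      μA * ‖y₂ - y₁‖ ^ 2 ≤ ⟪A y₂ u - A y₁ u, y₂ - y₁⟫)
    (hlipA : ∀ u ∈ 𝒰, ∀ y₁ ∈ closedBall ystar ε, ∀ y₂ ∈ closedBall ystar ε,
      ‖A y₂ u - A y₁ u‖ ≤ LA * ‖y₂ - y₁‖)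
    (hB : ∀ u ∈ 𝒰, IsMaxMonotone (fun y => B y u))
    -- Φ is uniformly L_Φ-Lipschitz in its first variable, L_Φ ∈ [0,1)
    (hLΦ : LΦ ∈ Set.Ico (0 : ℝ) 1)
    (hlipΦ : ∀ u ∈ 𝒰, ∀ y₁ ∈ closedBall ystar ε, ∀ y₂ ∈ closedBall ystar ε,
      ‖Φ y₂ u - Φ y₁ u‖ ≤ LΦ * ‖y₂ - y₁‖)
    -- (y*, u*) solves the quasi-generalized equation
    (hsol : -A ystar ustar ∈ B (ystar - Φ ystar ustar) ustar)
    -- smallness condition: (a) or (b)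
    (hsmall : LΦ < μA / LA ∨
      (LΦ < 2 * Real.sqrt (LA / μA) / (1 + LA / μA) ∧
        ∃ g : Y → U → ℝ, ∀ u ∈ 𝒰, ∀ y ∈ ball ystar ε,
          HasFDerivAt (fun z => g z u)
            ((InnerProductSpace.toDual ℝ Y (A y u) : Y →L[ℝ] ℝ)) y)) :
    ∀ u ∈ 𝒰, ∀ y₁ ∈ closedBall ystar ε, ∀ y₂ ∈ closedBall ystar ε,
      -A y₁ u ∈ B (y₁ - Φ y₁ u) u → -A y₂ u ∈ B (y₂ - Φ y₂ u) u → y₁ = y₂ := by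
  intro u hu y₁ hy₁ y₂ hy₂ h1 h2
  by_contra hne
  set d : Y := y₂ - y₁ with hddef
  set a : Y := A y₂ u - A y₁ u with hadef
  set r : ℝ := ‖d‖ with hrdef
  have hdne : d ≠ 0 := sub_ne_zero.2 (Ne.symm hne)
  have hr : 0 < r := norm_pos_iff.2 hdne
  have hmono' : μA * r ^ 2 ≤ ⟪a, d⟫ := hmonoA u hu y₁ hy₁ y₂ hy₂
  have hlip' : ‖a‖ ≤ LA * r := hlipA u hu y₁ hy₁ y₂ hy₂
  -- inequality from monotonicity of B
  have hBineq : ⟪a, d⟫ ≤ ‖a‖ * (LΦ * r) := by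
    have hmB := (hB u hu).1 h1 h2
    have e1 : -A y₂ u - -A y₁ u = -a := by rw [hadef]; abel
    have e2 : (y₂ - Φ y₂ u) - (y₁ - Φ y₁ u) = d - (Φ y₂ u - Φ y₁ u) := by
      rw [hddef]; abel
    rw [e1, e2, inner_neg_left, inner_sub_right] at hmB
    have h3 : ⟪a, Φ y₂ u - Φ y₁ u⟫ ≤ ‖a‖ * ‖Φ y₂ u - Φ y₁ u‖ := real_inner_le_norm _ _
    have h4 : ‖Φ y₂ u - Φ y₁ u‖ ≤ LΦ * r := hlipΦ u hu y₁ hy₁ y₂ hy₂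
    have h5 : ‖a‖ * ‖Φ y₂ u - Φ y₁ u‖ ≤ ‖a‖ * (LΦ * r) :=
      mul_le_mul_of_nonneg_left h4 (norm_nonneg a)
    linarith
  by_cases hcase : μA < LA
  · rcases hsmall with ha | ⟨hb, g, hg⟩
    · -- case (a)
      have h6' : ‖a‖ * (LΦ * r) ≤ LA * r * (LΦ * r) :=
        mul_le_mul_of_nonneg_right hlip' (mul_nonneg hLΦ.1 hr.le)
      have h6'' : LA * r * (LΦ * r) = LΦ * LA * r ^ 2 := by ring
      have h6 : μA * r ^ 2 ≤ LΦ * LA * r ^ 2 := by linarith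
      have hr2 : (0:ℝ) < r ^ 2 := by positivity
      have h7 : μA ≤ LΦ * LA := (mul_le_mul_iff_left₀ hr2).1 h6
      have h8 : μA / LA ≤ LΦ := (div_le_iff₀ hLA).2 (by linarith)
      linarith
    · -- case (b)
      have hco := closed_coco hε hμA.le hcase (fun y hy => hg u hu y hy)
        (hmonoA u hu) (hlipA u hu) hy₂ hy₁
      -- translate to scalars
      have e3 : (⟪A y₂ u - A y₁ u - μA • (y₂ - y₁), y₂ - y₁⟫ : ℝ) = ⟪a, d⟫ - μA * r ^ 2 := by
        rw [inner_sub_left, real_inner_smul_left, real_inner_self_eq_norm_sq]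
      have e4 : ‖A y₂ u - A y₁ u - μA • (y₂ - y₁)‖ ^ 2
          = ‖a‖ ^ 2 - 2 * μA * ⟪a, d⟫ + μA ^ 2 * r ^ 2 := by
        rw [norm_sub_sq_real, real_inner_smul_right, norm_smul, Real.norm_eq_abs,
          abs_of_nonneg hμA.le, mul_pow]
        ring
      rw [e3, e4] at hco
      have hinterp : ‖a‖ ^ 2 + μA * LA * r ^ 2 ≤ (μA + LA) * ⟪a, d⟫ := by
        have hκ : 0 < LA - μA := by linarith
        rw [div_le_iff₀ hκ] at hco
        nlinarith [hco]
      -- ‖a‖ > 0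
      have hP : 0 < ⟪a, d⟫ := lt_of_lt_of_le (by positivity) hmono'
      have hapos : 0 < ‖a‖ := by
        rcases lt_or_eq_of_le (norm_nonneg a) with h | h
        · exact h
        · exfalso; rw [← h] at hBineq; simp at hBineq; linarith
      -- AM-GM
      have hsq : Real.sqrt (μA * LA) ^ 2 = μA * LA := Real.sq_sqrt (by positivity)
      have hAMGM : 2 * Real.sqrt (μA * LA) * (‖a‖ * r) ≤ ‖a‖ ^ 2 + μA * LA * r ^ 2 := by
        nlinarith [sq_nonneg (‖a‖ - Real.sqrt (μA * LA) * r), hsq]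
      have hfin : 2 * Real.sqrt (μA * LA) * (‖a‖ * r) ≤ (μA + LA) * (‖a‖ * (LΦ * r)) := by
        calc 2 * Real.sqrt (μA * LA) * (‖a‖ * r) ≤ (μA + LA) * ⟪a, d⟫ := le_trans hAMGM hinterp
          _ ≤ (μA + LA) * (‖a‖ * (LΦ * r)) :=
            mul_le_mul_of_nonneg_left hBineq (by linarith)
      have hfin2 : 2 * Real.sqrt (μA * LA) ≤ (μA + LA) * LΦ := by
        have har : 0 < ‖a‖ * r := mul_pos hapos hr
        nlinarith [hfin, har]
      -- rewrite the bound in hb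
      have hkey : 2 * Real.sqrt (LA / μA) / (1 + LA / μA) = 2 * Real.sqrt (μA * LA) / (μA + LA) := by
        have h9 : Real.sqrt (LA / μA) * μA = Real.sqrt (μA * LA) := by
          rw [show μA * LA = (LA / μA) * μA ^ 2 by field_simp]
          rw [Real.sqrt_mul (by positivity) (μA ^ 2), Real.sqrt_sq hμA.le]
        have h10 : 1 + LA / μA = (μA + LA) / μA := by field_simp
        rw [h10, div_div_eq_mul_div, mul_assoc, h9]
      rw [hkey] at hb
      rw [lt_div_iff₀ (by linarith : (0:ℝ) < μA + LA)] at hb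
      linarith [hfin2, hb]
  · -- μA ≥ LA
    push_neg at hcase
    have ha' : ‖a‖ ≤ μA * r := le_trans hlip' (mul_le_mul_of_nonneg_right hcase hr.le)
    have h6' : ‖a‖ * (LΦ * r) ≤ μA * r * (LΦ * r) :=
      mul_le_mul_of_nonneg_right ha' (mul_nonneg hLΦ.1 hr.le)
    have h6'' : μA * r * (LΦ * r) = (μA * r ^ 2) * LΦ := by ring
    have h7 : μA * r ^ 2 * 1 ≤ μA * r ^ 2 * LΦ := by
      rw [mul_one]; linarith
    have hpos : (0:ℝ) < μA * r ^ 2 := by positivity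
    have := (mul_le_mul_iff_right₀ hpos).1 h7
    linarith [hLΦ.2]
end

section
/- Let (y*, u*) solve the quasi-generalized equation −A(y,u) ∈ B(y − Φ(y,u), u) under the standing assumptions (with constants ε, μ_A, L_A), with Φ continuous at (y*,u*), uniformly L_Φ-Lipschitz in its first variable on B_ε(y*) for u ∈ 𝒰 (L_Φ ∈ [0,1)), and satisfying the smallness condition: either (a) L_Φ < μ_A/L_A, or (b) L_Φ < 2√γ_A/(1 + γ_A) with γ_A = L_A/μ_A and A(·,u) is on U_ε(y*) the Fréchet derivative of a real-valued function g(·,u) for each u ∈ 𝒰. Let 𝒵, 𝒰̂ be neighborhoods of z* := y* − Φ(y*,u*) and u* on which (id − Φ(·,u))⁻¹ : 𝒵 → B_ε(y*) is well defined, and define Ã(z,u) := A((id − Φ(·,u))⁻¹(z), u). Then for every η > 0 with B_η(z*) ⊆ 𝒵 there exist constants μ_Ã, L_Ã > 0 such that ⟨Ã(z₂,u) − Ã(z₁,u), z₂ − z₁⟩ ≥ μ_Ã‖z₂ − z₁‖² and ‖Ã(z₂,u) − Ã(z₁,u)‖ ≤ L_Ã‖z₂ − z₁‖ for all z₁, z₂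 ∈ B_η(z*) and all u ∈ 𝒰̂. -/
open Filter Topology Metric Set
open scoped RealInnerProductSpace

set_option maxHeartbeats 2000000

theorem aux_bregman_lb {Y : Type*} [NormedAddCommGroup Y] [InnerProductSpace ℝ Y] [CompleteSpace Y]
    {c : Y} {ε : ℝ} {F : Y → Y} {g : Y → ℝ} {m : ℝ}
    (hd : ∀ y ∈ ball c ε, HasFDerivAt g ((InnerProductSpace.toDual ℝ Y (F y) : Y →L[ℝ] ℝ)) y)
    (hm : ∀ y₁ ∈ ball c ε, ∀ y₂ ∈ ball c ε, m * ‖y₂ - y₁‖ ^ 2 ≤ ⟪F y₂ - F y₁, y₂ - y₁⟫)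
    {a b : Y} (ha : a ∈ ball c ε) (hb : b ∈ ball c ε) :
    m / 2 * ‖b - a‖ ^ 2 ≤ g b - g a - ⟪F a, b - a⟫ := by
  set Δ := b - a with hΔ
  have hmem : ∀ t ∈ Icc (0:ℝ) 1, a + t • Δ ∈ ball c ε := fun t ht =>
    (convex_ball c ε).add_smul_sub_mem ha hb ht
  have hpath : ∀ t : ℝ, HasDerivAt (fun s : ℝ => a + s • Δ) Δ t := by
    intro t
    simpa using ((hasDerivAt_id t).smul_const Δ).const_add a
  have hψ : ∀ t ∈ Icc (0:ℝ) 1,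
      HasDerivAt (fun s : ℝ => g (a + s • Δ)) ⟪F (a + t • Δ), Δ⟫ t := by
    intro t ht
    have h1 := (hd _ (hmem t ht)).comp_hasDerivAt t (hpath t)
    simpa [Function.comp_def, InnerProductSpace.toDual_apply_apply] using h1
  set θ : ℝ → ℝ := fun t => g (a + t • Δ) - g a - t * ⟪F a, Δ⟫ - m / 2 * ‖Δ‖ ^ 2 * t ^ 2
    with hθdef
  have hθ : ∀ t ∈ Icc (0:ℝ) 1,
      HasDerivAt θ (⟪F (a + t • Δ), Δ⟫ - ⟪F a, Δ⟫ - m / 2 * ‖Δ‖ ^ 2 * (2 * t)) t := by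
    intro t ht
    have h1 := (((hψ t ht).sub_const (g a)).sub (hasDerivAt_mul_const ⟪F a, Δ⟫)).sub
      ((hasDerivAt_pow 2 t).const_mul (m / 2 * ‖Δ‖ ^ 2))
    refine h1.congr_deriv ?_
    push_cast
    ring
  have hmono : MonotoneOn θ (Icc 0 1) := by
    apply monotoneOn_of_deriv_nonneg (convex_Icc 0 1)
    · intro t ht; exact ((hθ t ht).continuousAt).continuousWithinAt
    · intro t ht
      rw [interior_Icc] at ht
      exact ((hθ t (Ioo_subset_Icc_self ht)).differentiableAt).differentiableWithinAt
    · intro t ht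
      rw [interior_Icc] at ht
      rw [(hθ t (Ioo_subset_Icc_self ht)).deriv]
      have ht0 : 0 < t := ht.1
      have hmm := hm a ha (a + t • Δ) (hmem t (Ioo_subset_Icc_self ht))
      have he1 : (a + t • Δ) - a = t • Δ := by abel
      rw [he1, norm_smul, real_inner_smul_right] at hmm
      have he2 : ⟪F (a + t • Δ) - F a, Δ⟫ = ⟪F (a + t • Δ), Δ⟫ - ⟪F a, Δ⟫ :=
        inner_sub_left _ _ _
      rw [he2] at hmm
      rw [Real.norm_eq_abs, abs_of_pos ht0] at hmm
      nlinarith [hmm, ht0]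
  have h01 : θ 0 ≤ θ 1 := hmono (by constructor <;> norm_num) (by constructor <;> norm_num)
    zero_le_one
  have hθ0 : θ 0 = 0 := by simp [hθdef]
  have hθ1 : θ 1 = g b - g a - ⟪F a, Δ⟫ - m / 2 * ‖Δ‖ ^ 2 := by
    have hab : a + Δ = b := by rw [hΔ]; abel
    simp [hθdef, hab]
  rw [hθ0, hθ1] at h01
  linarith

theorem aux_bregman_ub {Y : Type*} [NormedAddCommGroup Y] [InnerProductSpace ℝ Y] [CompleteSpace Y]
    {c : Y} {ε : ℝ} {F : Y → Y} {g : Y → ℝ} {L : ℝ}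
    (hd : ∀ y ∈ ball c ε, HasFDerivAt g ((InnerProductSpace.toDual ℝ Y (F y) : Y →L[ℝ] ℝ)) y)
    (hl : ∀ y₁ ∈ ball c ε, ∀ y₂ ∈ ball c ε, ‖F y₂ - F y₁‖ ≤ L * ‖y₂ - y₁‖)
    {a b : Y} (ha : a ∈ ball c ε) (hb : b ∈ ball c ε) :
    g b - g a - ⟪F a, b - a⟫ ≤ L / 2 * ‖b - a‖ ^ 2 := by
  set Δ := b - a with hΔ
  have hmem : ∀ t ∈ Icc (0:ℝ) 1, a + t • Δ ∈ ball c ε := fun t ht =>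
    (convex_ball c ε).add_smul_sub_mem ha hb ht
  have hpath : ∀ t : ℝ, HasDerivAt (fun s : ℝ => a + s • Δ) Δ t := by
    intro t
    simpa using ((hasDerivAt_id t).smul_const Δ).const_add a
  have hψ : ∀ t ∈ Icc (0:ℝ) 1,
      HasDerivAt (fun s : ℝ => g (a + s • Δ)) ⟪F (a + t • Δ), Δ⟫ t := by
    intro t ht
    have h1 := (hd _ (hmem t ht)).comp_hasDerivAt t (hpath t)
    simpa [Function.comp_def, InnerProductSpace.toDual_apply_apply] using h1
  set θ : ℝ → ℝ := fun t => t * ⟪F a, Δ⟫ + L / 2 * ‖Δ‖ ^ 2 * t ^ 2 - (g (a + t • Δ) - g a)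
    with hθdef
  have hθ : ∀ t ∈ Icc (0:ℝ) 1,
      HasDerivAt θ (⟪F a, Δ⟫ + L / 2 * ‖Δ‖ ^ 2 * (2 * t) - ⟪F (a + t • Δ), Δ⟫) t := by
    intro t ht
    have h1 := ((hasDerivAt_mul_const ⟪F a, Δ⟫).add
      ((hasDerivAt_pow 2 t).const_mul (L / 2 * ‖Δ‖ ^ 2))).sub ((hψ t ht).sub_const (g a))
    refine h1.congr_deriv ?_
    push_cast
    ring
  have hmono : MonotoneOn θ (Icc 0 1) := by
    apply monotoneOn_of_deriv_nonneg (convex_Icc 0 1)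
    · intro t ht; exact ((hθ t ht).continuousAt).continuousWithinAt
    · intro t ht
      rw [interior_Icc] at ht
      exact ((hθ t (Ioo_subset_Icc_self ht)).differentiableAt).differentiableWithinAt
    · intro t ht
      rw [interior_Icc] at ht
      rw [(hθ t (Ioo_subset_Icc_self ht)).deriv]
      have ht0 : 0 < t := ht.1
      have hll := hl a ha (a + t • Δ) (hmem t (Ioo_subset_Icc_self ht))
      have he1 : (a + t • Δ) - a = t • Δ := by abel
      rw [he1, norm_smul, Real.norm_eq_abs, abs_of_pos ht0] at hll
      have hcs : ⟪F (a + t • Δ) - F a, Δ⟫ ≤ ‖F (a + t • Δ) - F a‖ * ‖Δ‖ :=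
        real_inner_le_norm _ _
      have he2 : ⟪F (a + t • Δ) - F a, Δ⟫ = ⟪F (a + t • Δ), Δ⟫ - ⟪F a, Δ⟫ :=
        inner_sub_left _ _ _
      rw [he2] at hcs
      nlinarith [hcs, hll, ht0, norm_nonneg Δ, mul_le_mul_of_nonneg_right hll (norm_nonneg Δ)]
  have h01 : θ 0 ≤ θ 1 := hmono (by constructor <;> norm_num) (by constructor <;> norm_num)
    zero_le_one
  have hθ0 : θ 0 = 0 := by simp [hθdef]
  have hθ1 : θ 1 = ⟪F a, Δ⟫ + L / 2 * ‖Δ‖ ^ 2 - (g b - g a) := by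
    have hab : a + Δ = b := by rw [hΔ]; abel
    simp [hθdef, hab]
  rw [hθ0, hθ1] at h01
  linarith

theorem aux_half_coco {Y : Type*} [NormedAddCommGroup Y] [InnerProductSpace ℝ Y] [CompleteSpace Y]
    {c : Y} {ε : ℝ} {F : Y → Y} {g : Y → ℝ} {m L : ℝ}
    (hd : ∀ y ∈ ball c ε, HasFDerivAt g ((InnerProductSpace.toDual ℝ Y (F y) : Y →L[ℝ] ℝ)) y)
    (hm : ∀ y₁ ∈ ball c ε, ∀ y₂ ∈ ball c ε, m * ‖y₂ - y₁‖ ^ 2 ≤ ⟪F y₂ - F y₁, y₂ - y₁⟫)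
    (hl : ∀ y₁ ∈ ball c ε, ∀ y₂ ∈ ball c ε, ‖F y₂ - F y₁‖ ≤ L * ‖y₂ - y₁‖)
    (hK : 0 < L - m)
    {p q : Y} (hp : p ∈ ball c ε) (hq : q ∈ ball c ε)
    (hw : q - (L - m)⁻¹ • (F q - F p - m • (q - p)) ∈ ball c ε) :
    ‖F q - F p - m • (q - p)‖ ^ 2 / (2 * (L - m)) ≤
      g q - g p - ⟪F p, q - p⟫ - m / 2 * ‖q - p‖ ^ 2 := by
  set K := L - m with hKdef
  set Δh := F q - F p - m • (q - p) with hΔh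
  set w := q - K⁻¹ • Δh with hwdef
  have E1 : m / 2 * ‖w - p‖ ^ 2 ≤ g w - g p - ⟪F p, w - p⟫ := aux_bregman_lb hd hm hp hw
  have E2 : g w - g q - ⟪F q, w - q⟫ ≤ L / 2 * ‖w - q‖ ^ 2 := aux_bregman_ub hd hl hq hw
  have E3 : m / 2 * ‖w - q‖ ^ 2 ≤ g w - g q - ⟪F q, w - q⟫ := aux_bregman_lb hd hm hq hw
  -- identity pieces
  have hsplit : w - p = (w - q) + (q - p) := by abel
  have hn : ‖w - p‖ ^ 2 = ‖w - q‖ ^ 2 + 2 * ⟪w - q, q - p⟫ + ‖q - p‖ ^ 2 := by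
    rw [hsplit, norm_add_sq_real]
  have hip : ⟪F p, w - p⟫ = ⟪F p, w - q⟫ + ⟪F p, q - p⟫ := by
    rw [hsplit, inner_add_right]
  have hwq : w - q = -(K⁻¹ • Δh) := by rw [hwdef]; abel
  have hΔinner : ⟪Δh, w - q⟫ = -(K⁻¹ * ‖Δh‖ ^ 2) := by
    rw [hwq, inner_neg_right, real_inner_smul_right, real_inner_self_eq_norm_sq]
  have hwqnorm : ‖w - q‖ ^ 2 = K⁻¹ ^ 2 * ‖Δh‖ ^ 2 := by
    rw [hwq, norm_neg, norm_smul, Real.norm_eq_abs, abs_of_pos (inv_pos.mpr hK), mul_pow]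
  have hΔexp : ⟪Δh, w - q⟫ = ⟪F q, w - q⟫ - ⟪F p, w - q⟫ - m * ⟪q - p, w - q⟫ := by
    rw [hΔh]
    rw [inner_sub_left, inner_sub_left, real_inner_smul_left]
  have hcomm : ⟪w - q, q - p⟫ = ⟪q - p, w - q⟫ := real_inner_comm _ _
  -- combine: E p q = E p w - E q w - ⟪Δh, w - q⟫
  have key : g q - g p - ⟪F p, q - p⟫ - m / 2 * ‖q - p‖ ^ 2 =
      (g w - g p - ⟪F p, w - p⟫ - m / 2 * ‖w - p‖ ^ 2)
      - (g w - g q - ⟪F q, w - q⟫ - m / 2 * ‖w - q‖ ^ 2) - ⟪Δh, w - q⟫ := by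
    rw [hn, hip, hΔexp, ← hcomm]
    ring
  have hKinv : 0 < K⁻¹ := inv_pos.mpr hK
  have hNN : (0:ℝ) ≤ ‖Δh‖ ^ 2 := sq_nonneg _
  rw [key, hΔinner]
  rw [hwqnorm] at E2 ⊢
  have hfs : L / 2 * (K⁻¹ ^ 2 * ‖Δh‖ ^ 2) - m / 2 * (K⁻¹ ^ 2 * ‖Δh‖ ^ 2) =
      ‖Δh‖ ^ 2 * K⁻¹ / 2 := by
    field_simp [hKdef]
    ring
  have e2' : g w - g q - ⟪F q, w - q⟫ - m / 2 * (K⁻¹ ^ 2 * ‖Δh‖ ^ 2) ≤ ‖Δh‖ ^ 2 * K⁻¹ / 2 := by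
    linarith
  have hfin : ‖Δh‖ ^ 2 / (2 * K) = ‖Δh‖ ^ 2 * K⁻¹ - ‖Δh‖ ^ 2 * K⁻¹ / 2 := by
    field_simp
    ring
  linarith

theorem aux_local_coco {Y : Type*} [NormedAddCommGroup Y] [InnerProductSpace ℝ Y] [CompleteSpace Y]
    {c : Y} {ε : ℝ} {F : Y → Y} {g : Y → ℝ} {m L : ℝ}
    (hd : ∀ y ∈ ball c ε, HasFDerivAt g ((InnerProductSpace.toDual ℝ Y (F y) : Y →L[ℝ] ℝ)) y)
    (hm : ∀ y₁ ∈ ball c ε, ∀ y₂ ∈ ball c ε, m * ‖y₂ - y₁‖ ^ 2 ≤ ⟪F y₂ - F y₁, y₂ - y₁⟫)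
    (hl : ∀ y₁ ∈ ball c ε, ∀ y₂ ∈ ball c ε, ‖F y₂ - F y₁‖ ≤ L * ‖y₂ - y₁‖)
    (hK : 0 < L - m)
    {p q : Y} (hp : p ∈ ball c ε) (hq : q ∈ ball c ε)
    (hw1 : q - (L - m)⁻¹ • (F q - F p - m • (q - p)) ∈ ball c ε)
    (hw2 : p + (L - m)⁻¹ • (F q - F p - m • (q - p)) ∈ ball c ε) :
    ‖F q - F p - m • (q - p)‖ ^ 2 ≤ (L - m) * ⟪F q - F p - m • (q - p), q - p⟫ := by
  set K := L - m with hKdef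
  set Δh := F q - F p - m • (q - p) with hΔh
  have half1 : ‖Δh‖ ^ 2 / (2 * K) ≤ g q - g p - ⟪F p, q - p⟫ - m / 2 * ‖q - p‖ ^ 2 :=
    aux_half_coco hd hm hl hK hp hq hw1
  have hneg : F p - F q - m • (p - q) = -Δh := by rw [hΔh]; module
  have hw2' : p - K⁻¹ • (F p - F q - m • (p - q)) ∈ ball c ε := by
    rw [hneg, smul_neg, sub_neg_eq_add]
    exact hw2
  have half2 : ‖F p - F q - m • (p - q)‖ ^ 2 / (2 * K) ≤
      g p - g q - ⟪F q, p - q⟫ - m / 2 * ‖p - q‖ ^ 2 :=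
    aux_half_coco hd hm hl hK hq hp hw2'
  rw [hneg, norm_neg] at half2
  have hpq : p - q = -(q - p) := by abel
  have hinner2 : ⟪F q, p - q⟫ = -⟪F q, q - p⟫ := by rw [hpq, inner_neg_right]
  have hnormpq : ‖p - q‖ = ‖q - p‖ := norm_sub_rev _ _
  rw [hinner2, hnormpq] at half2
  have hsum : ⟪Δh, q - p⟫ = ⟪F q, q - p⟫ - ⟪F p, q - p⟫ - m * ‖q - p‖ ^ 2 := by
    rw [hΔh, inner_sub_left, inner_sub_left, real_inner_smul_left, real_inner_self_eq_norm_sq]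
  have h2K : 0 < 2 * K := by linarith
  have : ‖Δh‖ ^ 2 / (2 * K) + ‖Δh‖ ^ 2 / (2 * K) ≤ ⟪Δh, q - p⟫ := by
    rw [hsum]; linarith
  have hKK : ‖Δh‖ ^ 2 / K ≤ ⟪Δh, q - p⟫ := by
    have : ‖Δh‖ ^ 2 / (2 * K) + ‖Δh‖ ^ 2 / (2 * K) = ‖Δh‖ ^ 2 / K := by
      field_simp
      ring
    linarith [this]
  calc ‖Δh‖ ^ 2 = K * (‖Δh‖ ^ 2 / K) := by field_simp
    _ ≤ K * ⟪Δh, q - p⟫ := by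
        exact mul_le_mul_of_nonneg_left hKK (le_of_lt hK)

theorem aux_coco_ball {Y : Type*} [NormedAddCommGroup Y] [InnerProductSpace ℝ Y] [CompleteSpace Y]
    {c : Y} {ε : ℝ} {F : Y → Y} {g : Y → ℝ} {m L : ℝ}
    (hd : ∀ y ∈ ball c ε, HasFDerivAt g ((InnerProductSpace.toDual ℝ Y (F y) : Y →L[ℝ] ℝ)) y)
    (hm : ∀ y₁ ∈ ball c ε, ∀ y₂ ∈ ball c ε, m * ‖y₂ - y₁‖ ^ 2 ≤ ⟪F y₂ - F y₁, y₂ - y₁⟫)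
    (hl : ∀ y₁ ∈ ball c ε, ∀ y₂ ∈ ball c ε, ‖F y₂ - F y₁‖ ≤ L * ‖y₂ - y₁‖)
    (hm0 : 0 ≤ m) (hK : 0 < L - m)
    {x y : Y} (hx : x ∈ ball c ε) (hy : y ∈ ball c ε) :
    ‖F y - F x - m • (y - x)‖ ^ 2 ≤ (L - m) * ⟪F y - F x - m • (y - x), y - x⟫ := by
  rcases eq_or_ne y x with rfl | hne
  · simp
  set K := L - m with hKdef
  set d := ‖y - x‖ with hddef
  have hd0 : 0 < d := by
    rw [hddef, norm_pos_iff, sub_ne_zero]; exact hne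
  set R := max ‖x - c‖ ‖y - c‖ with hRdef
  have hRε : R < ε := by
    rw [hRdef, max_lt_iff]
    exact ⟨mem_ball_iff_norm.mp hx, mem_ball_iff_norm.mp hy⟩
  set ρ := ε - R with hρdef
  have hρ0 : 0 < ρ := by rw [hρdef]; linarith
  have hL0 : 0 < L := lt_of_le_of_lt hm0 (by linarith)
  obtain ⟨n, hn⟩ := exists_nat_gt ((L + m) / K * d / ρ)
  have hn0 : (0:ℝ) < n := lt_of_le_of_lt (by positivity) hn
  have hnne : (n:ℝ) ≠ 0 := ne_of_gt hn0
  have h1 : (L + m) / K * d < n * ρ := (div_lt_iff₀ hρ0).mp hn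
  have hroom : (L + m) / K * (d / n) < ρ := by
    rw [show (L + m) / K * (d / n) = ((L + m) / K * d) / n by ring, div_lt_iff₀ hn0]
    linarith
  -- the partition points
  set p : ℕ → Y := fun i => x + ((i : ℝ) / n) • (y - x) with hpdef
  have hp0 : p 0 = x := by simp [hpdef]
  have hpn : p n = y := by
    simp only [hpdef, div_self hnne, one_smul]
    abel
  have hpc : ∀ i ≤ n, ‖p i - c‖ ≤ R := by
    intro i hi
    set t := (i : ℝ) / n with htdef
    have ht0 : 0 ≤ t := by positivity
    have ht1 : t ≤ 1 := by
      rw [htdef, div_le_one hn0]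
      exact_mod_cast hi
    have hid : p i - c = (1 - t) • (x - c) + t • (y - c) := by
      simp only [hpdef, ← htdef]
      module
    calc ‖p i - c‖ = ‖(1 - t) • (x - c) + t • (y - c)‖ := by rw [hid]
      _ ≤ ‖(1 - t) • (x - c)‖ + ‖t • (y - c)‖ := norm_add_le _ _
      _ = (1 - t) * ‖x - c‖ + t * ‖y - c‖ := by
          rw [norm_smul, norm_smul, Real.norm_eq_abs, Real.norm_eq_abs,
            abs_of_nonneg (by linarith), abs_of_nonneg ht0]
      _ ≤ (1 - t) * R + t * R := by
          gcongr
          · exact le_max_left _ _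
          · exact le_max_right _ _
      _ = R := by ring
  have hpball : ∀ i ≤ n, p i ∈ ball c ε := by
    intro i hi
    rw [mem_ball_iff_norm]
    exact lt_of_le_of_lt (hpc i hi) hRε
  have hadj : ∀ i : ℕ, p (i + 1) - p i = ((1 : ℝ) / n) • (y - x) := by
    intro i
    have hsc : ((i : ℝ) + 1) / n - (i : ℝ) / n = 1 / n := by ring
    have : p (i + 1) - p i = (((i : ℕ) + 1 : ℝ) / n - (i : ℝ) / n) • (y - x) := by
      simp only [hpdef]
      module
    rw [this]
    push_cast
    rw [hsc]
  have hdadj : ∀ i : ℕ, ‖p (i + 1) - p i‖ = d / n := by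
    intro i
    rw [hadj i, norm_smul, Real.norm_eq_abs, abs_of_pos (by positivity), ← hddef]
    ring
  -- unit direction
  set e : Y := d⁻¹ • (y - x) with hedef
  have hde : y - x = d • e := by
    rw [hedef, smul_smul, mul_inv_cancel₀ (ne_of_gt hd0), one_smul]
  have he1 : ‖e‖ = 1 := by
    rw [hedef, norm_smul, Real.norm_eq_abs, abs_of_pos (inv_pos.mpr hd0), ← hddef]
    field_simp
  have hadje : ∀ i : ℕ, p (i + 1) - p i = (d / n) • e := by
    intro i
    rw [hadj i, hde, smul_smul]
    congr 1
    field_simp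
  -- per-pair quantities
  set Δh : ℕ → Y := fun i => F (p (i + 1)) - F (p i) - m • (p (i + 1) - p i) with hΔhdef
  set u : ℕ → ℝ := fun i => ⟪Δh i, e⟫ with hudef
  have hΔhb : ∀ i < n, ‖Δh i‖ ≤ (L + m) * (d / n) := by
    intro i hi
    have h1 : ‖F (p (i + 1)) - F (p i)‖ ≤ L * (d / n) := by
      have := hl (p i) (hpball i (le_of_lt hi)) (p (i + 1)) (hpball (i + 1) hi)
      rwa [hdadj i] at this
    have h2 : ‖m • (p (i + 1) - p i)‖ = m * (d / n) := by
      rw [norm_smul, Real.norm_eq_abs, abs_of_nonneg hm0, hdadj i]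
    calc ‖Δh i‖ ≤ ‖F (p (i + 1)) - F (p i)‖ + ‖m • (p (i + 1) - p i)‖ := norm_sub_le _ _
      _ ≤ L * (d / n) + m * (d / n) := by rw [h2]; linarith
      _ = (L + m) * (d / n) := by ring
  -- local coco for each adjacent pair
  have hcoco : ∀ i < n, ‖Δh i‖ ^ 2 ≤ K * ((d / n) * u i) := by
    intro i hi
    have hwmem : ∀ v : Y, ‖v‖ ≤ K⁻¹ * ‖Δh i‖ → ∀ z : Y, z ∈ ball c ε → ‖z - c‖ ≤ R →
        z + v ∈ ball c ε := by
      intro v hv z _ hzc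
      rw [mem_ball_iff_norm]
      have hvb : ‖v‖ ≤ (L + m) / K * (d / n) := by
        calc ‖v‖ ≤ K⁻¹ * ‖Δh i‖ := hv
          _ ≤ K⁻¹ * ((L + m) * (d / n)) := by
              apply mul_le_mul_of_nonneg_left (hΔhb i hi) (le_of_lt (inv_pos.mpr hK))
          _ = (L + m) / K * (d / n) := by ring
      calc ‖z + v - c‖ ≤ ‖z - c‖ + ‖v‖ := by
            rw [show z + v - c = (z - c) + v by abel]; exact norm_add_le _ _
        _ < R + ρ := by
            have := lt_of_le_of_lt hvb hroom
            linarith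
        _ = ε := by rw [hρdef]; ring
    have hw1 : p (i + 1) - K⁻¹ • Δh i ∈ ball c ε := by
      have : p (i + 1) - K⁻¹ • Δh i = p (i + 1) + (-(K⁻¹ • Δh i)) := by abel
      rw [this]
      apply hwmem _ _ _ (hpball (i + 1) hi) (hpc (i + 1) hi)
      rw [norm_neg, norm_smul, Real.norm_eq_abs, abs_of_pos (inv_pos.mpr hK)]
    have hw2 : p i + K⁻¹ • Δh i ∈ ball c ε := by
      apply hwmem _ _ _ (hpball i (le_of_lt hi)) (hpc i (le_of_lt hi))
      rw [norm_smul, Real.norm_eq_abs, abs_of_pos (inv_pos.mpr hK)]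
    have hthis : ‖Δh i‖ ^ 2 ≤ K * ⟪Δh i, p (i + 1) - p i⟫ :=
      aux_local_coco hd hm hl hK (hpball i (le_of_lt hi)) (hpball (i + 1) hi) hw1 hw2
    have h2 : ⟪Δh i, p (i + 1) - p i⟫ = (d / n) * u i := by
      rw [hadje i, real_inner_smul_right]
    rw [h2] at hthis
    exact hthis
  have hdn0 : 0 < d / n := by positivity
  have hu0 : ∀ i < n, 0 ≤ u i := by
    intro i hi
    by_contra hcon
    push_neg at hcon
    have h1 := hcoco i hi
    have hKdn : 0 < K * (d / ↑n) := mul_pos hK hdn0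
    nlinarith [h1, mul_neg_of_pos_of_neg hKdn hcon, sq_nonneg ‖Δh i‖]
  have hub : ∀ i < n, u i ≤ K * (d / n) := by
    intro i hi
    have hcs : u i ≤ ‖Δh i‖ := by
      calc u i ≤ ‖Δh i‖ * ‖e‖ := real_inner_le_norm _ _
        _ = ‖Δh i‖ := by rw [he1, mul_one]
    have hnb : ‖Δh i‖ ≤ K * (d / n) := by
      by_contra hcon
      push_neg at hcon
      have h1 := hcoco i hi
      have hKdn : 0 < K * (d / ↑n) := mul_pos hK hdn0
      have hpos : 0 < ‖Δh i‖ := lt_trans hKdn hcon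
      nlinarith [h1, mul_le_mul_of_nonneg_left hcs hKdn.le,
        mul_lt_mul_of_pos_right hcon hpos]
    linarith
  -- orthogonal parts
  set w : ℕ → Y := fun i => Δh i - (u i) • e with hwdef
  have hwsq : ∀ i < n, ‖w i‖ ^ 2 ≤ u i * (K * (d / n) - u i) := by
    intro i hi
    have hexp : ‖w i‖ ^ 2 = ‖Δh i‖ ^ 2 - (u i) ^ 2 := by
      have h0 : w i = Δh i - u i • e := by rw [hwdef]
      have h1 : ⟪Δh i, e⟫ = u i := by rw [hudef]
      rw [h0, norm_sub_sq_real, inner_smul_right, norm_smul, Real.norm_eq_abs, he1, mul_one,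
        h1, sq_abs]
      ring
    nlinarith [hcoco i hi]
  -- totals
  set H : Y := F y - F x - m • (y - x) with hHdef
  have hsumΔh : ∑ i ∈ Finset.range n, Δh i = H := by
    have : ∀ i, Δh i = (F (p (i + 1)) - m • p (i + 1)) - (F (p i) - m • p i) := by
      intro i
      have h0 : Δh i = F (p (i + 1)) - F (p i) - m • (p (i + 1) - p i) := by rw [hΔhdef]
      rw [h0]
      module
    rw [Finset.sum_congr rfl (fun i _ => this i), Finset.sum_range_sub
      (fun i => F (p i) - m • p i) n, hp0, hpn, hHdef]
    module
  set uT : ℝ := ⟪H, e⟫ with huTdef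
  have hsumu : ∑ i ∈ Finset.range n, u i = uT := by
    rw [huTdef, ← hsumΔh, sum_inner]
  have huT0 : 0 ≤ uT := by
    rw [← hsumu]
    exact Finset.sum_nonneg (fun i hi => hu0 i (Finset.mem_range.mp hi))
  have hsumb : ∑ i ∈ Finset.range n, (K * (d / n) - u i) = K * d - uT := by
    rw [Finset.sum_sub_distrib, Finset.sum_const, Finset.card_range, hsumu, nsmul_eq_mul]
    field_simp
  have hbT0 : 0 ≤ K * d - uT := by
    rw [← hsumb]
    exact Finset.sum_nonneg (fun i hi => by linarith [hub i (Finset.mem_range.mp hi)])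
  have hsumw : ∑ i ∈ Finset.range n, w i = H - uT • e := by
    have h0 : ∀ i, w i = Δh i - u i • e := fun i => by rw [hwdef]
    rw [Finset.sum_congr rfl (fun i _ => h0 i), Finset.sum_sub_distrib, hsumΔh,
      ← Finset.sum_smul, hsumu]
  -- Cauchy-Schwarz chaining
  have hCS : ‖H - uT • e‖ ≤ Real.sqrt uT * Real.sqrt (K * d - uT) := by
    calc ‖H - uT • e‖ = ‖∑ i ∈ Finset.range n, w i‖ := by rw [hsumw]
      _ ≤ ∑ i ∈ Finset.range n, ‖w i‖ := norm_sum_le _ _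
      _ ≤ ∑ i ∈ Finset.range n, Real.sqrt (u i) * Real.sqrt (K * (d / n) - u i) := by
          apply Finset.sum_le_sum
          intro i hi
          have hi' := Finset.mem_range.mp hi
          calc ‖w i‖ = Real.sqrt (‖w i‖ ^ 2) := (Real.sqrt_sq (norm_nonneg _)).symm
            _ ≤ Real.sqrt (u i * (K * (d / n) - u i)) := Real.sqrt_le_sqrt (hwsq i hi')
            _ = Real.sqrt (u i) * Real.sqrt (K * (d / n) - u i) :=
                Real.sqrt_mul (hu0 i hi') _
      _ ≤ Real.sqrt (∑ i ∈ Finset.range n, (Real.sqrt (u i)) ^ 2) *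
            Real.sqrt (∑ i ∈ Finset.range n, (Real.sqrt (K * (d / n) - u i)) ^ 2) :=
          Real.sum_mul_le_sqrt_mul_sqrt _ _ _
      _ = Real.sqrt uT * Real.sqrt (K * d - uT) := by
          rw [Finset.sum_congr rfl (fun i hi => Real.sq_sqrt (hu0 i (Finset.mem_range.mp hi))),
            Finset.sum_congr rfl (fun i hi => Real.sq_sqrt
              (by linarith [hub i (Finset.mem_range.mp hi)] : (0:ℝ) ≤ K * (d / n) - u i)),
            hsumu, hsumb]
  have hW2 : ‖H - uT • e‖ ^ 2 ≤ uT * (K * d - uT) := by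
    calc ‖H - uT • e‖ ^ 2 ≤ (Real.sqrt uT * Real.sqrt (K * d - uT)) ^ 2 := by
          apply pow_le_pow_left₀ (norm_nonneg _) hCS
      _ = uT * (K * d - uT) := by
          rw [mul_pow, Real.sq_sqrt huT0, Real.sq_sqrt hbT0]
  have hdecomp : ‖H‖ ^ 2 = uT ^ 2 + ‖H - uT • e‖ ^ 2 := by
    have : ‖H - uT • e‖ ^ 2 = ‖H‖ ^ 2 - 2 * (uT * uT) + uT ^ 2 := by
      rw [norm_sub_sq_real, inner_smul_right, norm_smul, Real.norm_eq_abs, he1, mul_one,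
        ← huTdef, sq_abs]
    rw [this]
    ring
  have hfinal : ⟪H, y - x⟫ = d * uT := by
    rw [hde, inner_smul_right, huTdef]
  rw [hHdef] at hdecomp hW2 hfinal ⊢
  rw [hfinal]
  nlinarith [hdecomp, hW2]

theorem aux_coco_closedBall {Y : Type*} [NormedAddCommGroup Y] [InnerProductSpace ℝ Y]
    [CompleteSpace Y]
    {c : Y} {ε : ℝ} {F : Y → Y} {g : Y → ℝ} {m L : ℝ} (hε : 0 < ε)
    (hd : ∀ y ∈ ball c ε, HasFDerivAt g ((InnerProductSpace.toDual ℝ Y (F y) : Y →L[ℝ] ℝ)) y)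
    (hm : ∀ y₁ ∈ closedBall c ε, ∀ y₂ ∈ closedBall c ε,
      m * ‖y₂ - y₁‖ ^ 2 ≤ ⟪F y₂ - F y₁, y₂ - y₁⟫)
    (hl : ∀ y₁ ∈ closedBall c ε, ∀ y₂ ∈ closedBall c ε, ‖F y₂ - F y₁‖ ≤ L * ‖y₂ - y₁‖)
    (hm0 : 0 ≤ m) (hK : 0 < L - m)
    {x y : Y} (hx : x ∈ closedBall c ε) (hy : y ∈ closedBall c ε) :
    ‖F y - F x - m • (y - x)‖ ^ 2 ≤ (L - m) * ⟪F y - F x - m • (y - x), y - x⟫ := by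
  have hm' : ∀ y₁ ∈ ball c ε, ∀ y₂ ∈ ball c ε, m * ‖y₂ - y₁‖ ^ 2 ≤ ⟪F y₂ - F y₁, y₂ - y₁⟫ :=
    fun y₁ h1 y₂ h2 => hm y₁ (ball_subset_closedBall h1) y₂ (ball_subset_closedBall h2)
  have hl' : ∀ y₁ ∈ ball c ε, ∀ y₂ ∈ ball c ε, ‖F y₂ - F y₁‖ ≤ L * ‖y₂ - y₁‖ :=
    fun y₁ h1 y₂ h2 => hl y₁ (ball_subset_closedBall h1) y₂ (ball_subset_closedBall h2)
  have hL0 : 0 ≤ L := le_trans hm0 (by linarith)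
  -- Lipschitz continuity of F on the closed ball
  have hFcont : ContinuousOn F (closedBall c ε) := by
    have : LipschitzOnWith (Real.toNNReal L) F (closedBall c ε) := by
      apply LipschitzOnWith.of_dist_le_mul
      intro a ha b hb
      rw [dist_eq_norm, dist_eq_norm]
      calc ‖F a - F b‖ ≤ L * ‖a - b‖ := hl b hb a ha
        _ = (Real.toNNReal L : ℝ) * ‖a - b‖ := by rw [Real.coe_toNNReal L hL0]
    exact this.continuousOn
  set xs : ℝ → Y := fun s => c + s • (x - c) with hxsdef
  set ys : ℝ → Y := fun s => c + s • (y - c) with hysdef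
  have hmemc : ∀ (z : Y), z ∈ closedBall c ε → ∀ s ∈ Icc (0:ℝ) 1,
      c + s • (z - c) ∈ closedBall c ε := by
    intro z hz s hs
    rw [mem_closedBall_iff_norm]
    have : c + s • (z - c) - c = s • (z - c) := by abel
    rw [this, norm_smul, Real.norm_eq_abs, abs_of_nonneg hs.1]
    calc s * ‖z - c‖ ≤ 1 * ε := by
          apply mul_le_mul hs.2 (mem_closedBall_iff_norm.mp hz) (norm_nonneg _) zero_le_one
      _ = ε := one_mul ε
  have hmemb : ∀ (z : Y), z ∈ closedBall c ε → ∀ s ∈ Ico (0:ℝ) 1,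
      c + s • (z - c) ∈ ball c ε := by
    intro z hz s hs
    rw [mem_ball_iff_norm]
    have : c + s • (z - c) - c = s • (z - c) := by abel
    rw [this, norm_smul, Real.norm_eq_abs, abs_of_nonneg hs.1]
    calc s * ‖z - c‖ ≤ s * ε := by
          apply mul_le_mul_of_nonneg_left (mem_closedBall_iff_norm.mp hz) hs.1
      _ < 1 * ε := by apply mul_lt_mul_of_pos_right hs.2 hε
      _ = ε := one_mul ε
  -- the inequality holds for all s ∈ [0,1)
  set φ : ℝ → ℝ := fun s => (L - m) * ⟪F (ys s) - F (xs s) - m • (ys s - xs s), ys s - xs s⟫ -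
    ‖F (ys s) - F (xs s) - m • (ys s - xs s)‖ ^ 2 with hφdef
  have hkey : ∀ s ∈ Ico (0:ℝ) 1, 0 ≤ φ s := by
    intro s hs
    have h1 := aux_coco_ball hd hm' hl' hm0 hK (hmemb x hx s hs) (hmemb y hy s hs)
    rw [hφdef]
    simp only
    linarith [h1]
  -- limit as s → 1⁻
  have hne : (𝓝[Iio (1:ℝ)] 1).NeBot := by infer_instance
  have hev : ∀ᶠ s in 𝓝[Iio (1:ℝ)] 1, 0 ≤ φ s := by
    have hIco : Ico (0:ℝ) 1 ∈ 𝓝[Iio (1:ℝ)] 1 := by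
      rw [← nhdsWithin_Ico_eq_nhdsLT (zero_lt_one)]
      exact self_mem_nhdsWithin
    filter_upwards [hIco] with s hs using hkey s hs
  -- tendsto
  have htx : Tendsto xs (𝓝[Iio (1:ℝ)] 1) (𝓝[closedBall c ε] x) := by
    rw [tendsto_nhdsWithin_iff]
    constructor
    · have hcont : Continuous xs := by
        rw [hxsdef]; exact continuous_const.add (continuous_id.smul continuous_const)
      have h1 : Tendsto xs (𝓝 1) (𝓝 (xs 1)) := hcont.tendsto 1
      have h2 : xs 1 = x := by rw [hxsdef]; simp
      rw [h2] at h1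
      exact h1.mono_left nhdsWithin_le_nhds
    · have hIco : Ico (0:ℝ) 1 ∈ 𝓝[Iio (1:ℝ)] 1 := by
        rw [← nhdsWithin_Ico_eq_nhdsLT (zero_lt_one)]
        exact self_mem_nhdsWithin
      filter_upwards [hIco] with s hs
      exact hmemc x hx s ⟨hs.1, le_of_lt hs.2⟩
  have hty : Tendsto ys (𝓝[Iio (1:ℝ)] 1) (𝓝[closedBall c ε] y) := by
    rw [tendsto_nhdsWithin_iff]
    constructor
    · have hcont : Continuous ys := by
        rw [hysdef]; exact continuous_const.add (continuous_id.smul continuous_const)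
      have h1 : Tendsto ys (𝓝 1) (𝓝 (ys 1)) := hcont.tendsto 1
      have h2 : ys 1 = y := by rw [hysdef]; simp
      rw [h2] at h1
      exact h1.mono_left nhdsWithin_le_nhds
    · have hIco : Ico (0:ℝ) 1 ∈ 𝓝[Iio (1:ℝ)] 1 := by
        rw [← nhdsWithin_Ico_eq_nhdsLT (zero_lt_one)]
        exact self_mem_nhdsWithin
      filter_upwards [hIco] with s hs
      exact hmemc y hy s ⟨hs.1, le_of_lt hs.2⟩
  have htx' : Tendsto xs (𝓝[Iio (1:ℝ)] 1) (𝓝 x) :=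
    (tendsto_nhdsWithin_iff.mp htx).1
  have hty' : Tendsto ys (𝓝[Iio (1:ℝ)] 1) (𝓝 y) :=
    (tendsto_nhdsWithin_iff.mp hty).1
  have hFx : Tendsto (fun s => F (xs s)) (𝓝[Iio (1:ℝ)] 1) (𝓝 (F x)) :=
    ((hFcont x hx).tendsto).comp htx
  have hFy : Tendsto (fun s => F (ys s)) (𝓝[Iio (1:ℝ)] 1) (𝓝 (F y)) :=
    ((hFcont y hy).tendsto).comp hty
  have hdiff : Tendsto (fun s => ys s - xs s) (𝓝[Iio (1:ℝ)] 1) (𝓝 (y - x)) :=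
    hty'.sub htx'
  have hΔh : Tendsto (fun s => F (ys s) - F (xs s) - m • (ys s - xs s)) (𝓝[Iio (1:ℝ)] 1)
      (𝓝 (F y - F x - m • (y - x))) :=
    (hFy.sub hFx).sub (hdiff.const_smul m)
  have hφT : Tendsto φ (𝓝[Iio (1:ℝ)] 1)
      (𝓝 ((L - m) * ⟪F y - F x - m • (y - x), y - x⟫ -
        ‖F y - F x - m • (y - x)‖ ^ 2)) := by
    apply Tendsto.sub
    · exact (hΔh.inner hdiff).const_mul (L - m)
    · exact (hΔh.norm).pow 2
  have := ge_of_tendsto hφT hev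
  linarith

/-- Lemma 4.9 / `lem:asm_tilde_A`.
The transformed operator `Ã(z,u) := A((id − Φ(·,u))⁻¹(z), u)` is uniformly strongly monotone
and Lipschitz on every closed ball `B_η(z*) ⊆ 𝒵`, uniformly in `u ∈ 𝒰̂`. -/
theorem stmt_14
    {Y : Type*} [NormedAddCommGroup Y] [InnerProductSpace ℝ Y] [CompleteSpace Y]
    {U : Type*} [NormedAddCommGroup U] [NormedSpace ℝ U] [CompleteSpace U]
    (A : Y → U → Y) (B : Y → U → Set Y) (Φ : Y → U → Y) (𝒰 : Set U)
    (ystar : Y) (ustar : U)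
    (h𝒰 : 𝒰 ∈ 𝓝 ustar) (hustar : ustar ∈ 𝒰)
    (ε μA LA LΦ : ℝ) (hε : 0 < ε) (hμA : 0 < μA) (hLA : 0 < LA)
    -- standing assumptions
    (hmonoA : ∀ u ∈ 𝒰, ∀ y₁ ∈ closedBall ystar ε, ∀ y₂ ∈ closedBall ystar ε,
      μA * ‖y₂ - y₁‖ ^ 2 ≤ ⟪A y₂ u - A y₁ u, y₂ - y₁⟫)
    (hlipA : ∀ u ∈ 𝒰, ∀ y₁ ∈ closedBall ystar ε, ∀ y₂ ∈ closedBall ystar ε,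
      ‖A y₂ u - A y₁ u‖ ≤ LA * ‖y₂ - y₁‖)
    (hB : ∀ u ∈ 𝒰, IsMaxMonotone (fun y => B y u))
    -- Φ: continuity at (y*,u*), uniform Lipschitz continuity, smallness of L_Φ
    (hΦcont : ContinuousAt (fun p : Y × U => Φ p.1 p.2) (ystar, ustar))
    (hLΦ : LΦ ∈ Set.Ico (0 : ℝ) 1)
    (hlipΦ : ∀ u ∈ 𝒰, ∀ y₁ ∈ closedBall ystar ε, ∀ y₂ ∈ closedBall ystar ε,
      ‖Φ y₂ u - Φ y₁ u‖ ≤ LΦ * ‖y₂ - y₁‖)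
    (hsmall : LΦ < μA / LA ∨
      (LΦ < 2 * Real.sqrt (LA / μA) / (1 + LA / μA) ∧
        ∃ g : Y → U → ℝ, ∀ u ∈ 𝒰, ∀ y ∈ ball ystar ε,
          HasFDerivAt (fun z => g z u)
            ((InnerProductSpace.toDual ℝ Y (A y u) : Y →L[ℝ] ℝ)) y))
    -- (y*, u*) solves the quasi-generalized equation
    (hsol : -A ystar ustar ∈ B (ystar - Φ ystar ustar) ustar)
    -- neighborhoods 𝒵 of z* and 𝒰̂ of u*, and the local inverse Ψ of id − Φ(·,u)
    (𝒵 : Set Y) (𝒰hat : Set U)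
    (h𝒵 : 𝒵 ∈ 𝓝 (ystar - Φ ystar ustar)) (h𝒰hat : 𝒰hat ∈ 𝓝 ustar) (hsub : 𝒰hat ⊆ 𝒰)
    (Ψ : Y → U → Y)
    (hΨ : ∀ z ∈ 𝒵, ∀ u ∈ 𝒰hat,
      Ψ z u ∈ closedBall ystar ε ∧ z = Ψ z u - Φ (Ψ z u) u) :
    ∀ η > (0 : ℝ), closedBall (ystar - Φ ystar ustar) η ⊆ 𝒵 →
      ∃ μAtilde > (0 : ℝ), ∃ LAtilde > (0 : ℝ),
        ∀ u ∈ 𝒰hat, ∀ z₁ ∈ closedBall (ystar - Φ ystar ustar) η,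
          ∀ z₂ ∈ closedBall (ystar - Φ ystar ustar) η,
            μAtilde * ‖z₂ - z₁‖ ^ 2 ≤ ⟪A (Ψ z₂ u) u - A (Ψ z₁ u) u, z₂ - z₁⟫ ∧
            ‖A (Ψ z₂ u) u - A (Ψ z₁ u) u‖ ≤ LAtilde * ‖z₂ - z₁‖ := by

  intro η hη hsubball
  obtain ⟨hLΦ0, hLΦ1⟩ := hLΦ
  have h1mLΦ : 0 < 1 - LΦ := by linarith
  have h1pLΦ : 0 < 1 + LΦ := by linarith
  have hLtilde : 0 < LA / (1 - LΦ) := div_pos hLA h1mLΦ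
  rcases subsingleton_or_nontrivial Y with hY | hY
  · refine ⟨1, one_pos, 1, one_pos, ?_⟩
    intro u hu z₁ hz₁ z₂ hz₂
    have hz : z₂ = z₁ := Subsingleton.elim _ _
    have hA : A (Ψ z₂ u) u = A (Ψ z₁ u) u := by
      rw [Subsingleton.elim (Ψ z₂ u) (Ψ z₁ u)]
    constructor
    · simp [hz, hA]
    · simp [hz, hA]
  -- nontrivial case; first derive μA ≤ LA
  have hμL : μA ≤ LA := by
    obtain ⟨v, hv⟩ := exists_ne (0 : Y)
    have hvn : 0 < ‖v‖ := norm_pos_iff.mpr hv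
    set y₂ := ystar + (ε / ‖v‖) • v with hy₂def
    have hdnorm : ‖y₂ - ystar‖ = ε := by
      have h0 : y₂ - ystar = (ε / ‖v‖) • v := by rw [hy₂def]; abel
      rw [h0, norm_smul, Real.norm_eq_abs, abs_of_pos (div_pos hε hvn),
        div_mul_cancel₀ _ (ne_of_gt hvn)]
    have h2mem : y₂ ∈ closedBall ystar ε := by
      rw [mem_closedBall_iff_norm, hdnorm]
    have h1mem : ystar ∈ closedBall ystar ε := mem_closedBall_self hε.le
    have hmono := hmonoA ustar hustar ystar h1mem y₂ h2mem
    have hlip := hlipA ustar hustar ystar h1mem y₂ h2mem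
    have hcs := real_inner_le_norm (A y₂ ustar - A ystar ustar) (y₂ - ystar)
    rw [hdnorm] at hmono hlip hcs
    nlinarith [hmono, hlip, hcs, hε, mul_le_mul_of_nonneg_right hlip hε.le,
      mul_pos hε hε]
  -- generic pair facts as a helper
  have hpair : ∀ u ∈ 𝒰hat, ∀ z₁ ∈ closedBall (ystar - Φ ystar ustar) η,
      ∀ z₂ ∈ closedBall (ystar - Φ ystar ustar) η,
      Ψ z₁ u ∈ closedBall ystar ε ∧ Ψ z₂ u ∈ closedBall ystar ε ∧
      z₂ - z₁ = (Ψ z₂ u - Ψ z₁ u) - (Φ (Ψ z₂ u) u - Φ (Ψ z₁ u) u) ∧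
      ‖Φ (Ψ z₂ u) u - Φ (Ψ z₁ u) u‖ ≤ LΦ * ‖Ψ z₂ u - Ψ z₁ u‖ ∧
      (1 - LΦ) * ‖Ψ z₂ u - Ψ z₁ u‖ ≤ ‖z₂ - z₁‖ ∧
      ‖z₂ - z₁‖ ≤ (1 + LΦ) * ‖Ψ z₂ u - Ψ z₁ u‖ := by
    intro u hu z₁ hz₁ z₂ hz₂
    obtain ⟨hy1mem, he1⟩ := hΨ z₁ (hsubball hz₁) u hu
    obtain ⟨hy2mem, he2⟩ := hΨ z₂ (hsubball hz₂) u hu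
    have hid : z₂ - z₁ = (Ψ z₂ u - Ψ z₁ u) - (Φ (Ψ z₂ u) u - Φ (Ψ z₁ u) u) := by
      calc z₂ - z₁ = (Ψ z₂ u - Φ (Ψ z₂ u) u) - (Ψ z₁ u - Φ (Ψ z₁ u) u) := by
            conv_lhs => rw [he2, he1]
        _ = (Ψ z₂ u - Ψ z₁ u) - (Φ (Ψ z₂ u) u - Φ (Ψ z₁ u) u) := by abel
    have hΦd : ‖Φ (Ψ z₂ u) u - Φ (Ψ z₁ u) u‖ ≤ LΦ * ‖Ψ z₂ u - Ψ z₁ u‖ :=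
      hlipΦ u (hsub hu) (Ψ z₁ u) hy1mem (Ψ z₂ u) hy2mem
    have htri1 : ‖Ψ z₂ u - Ψ z₁ u‖ ≤ ‖z₂ - z₁‖ + ‖Φ (Ψ z₂ u) u - Φ (Ψ z₁ u) u‖ := by
      have h0 : Ψ z₂ u - Ψ z₁ u = (z₂ - z₁) + (Φ (Ψ z₂ u) u - Φ (Ψ z₁ u) u) := by
        rw [hid]; abel
      rw [h0]
      exact norm_add_le _ _
    have htri2 : ‖z₂ - z₁‖ ≤ ‖Ψ z₂ u - Ψ z₁ u‖ + ‖Φ (Ψ z₂ u) u - Φ (Ψ z₁ u) u‖ := by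
      rw [hid]
      exact norm_sub_le _ _
    exact ⟨hy1mem, hy2mem, hid, hΦd, by linarith, by linarith⟩
  rcases hsmall with ha | ⟨hbs, g, hg⟩
  -- ================= CASE (a) =================
  · have hca : 0 < μA - LA * LΦ := by
      have := (lt_div_iff₀ hLA).mp ha
      linarith
    refine ⟨(μA - LA * LΦ) / (1 + LΦ) ^ 2, by positivity, LA / (1 - LΦ), hLtilde, ?_⟩
    intro u hu z₁ hz₁ z₂ hz₂
    obtain ⟨hy1mem, hy2mem, hid, hΦd, hk1, hk2⟩ := hpair u hu z₁ hz₁ z₂ hz₂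
    set P := A (Ψ z₂ u) u - A (Ψ z₁ u) u with hPdef
    set D := Ψ z₂ u - Ψ z₁ u with hDdef
    have hlip : ‖P‖ ≤ LA * ‖D‖ := hlipA u (hsub hu) (Ψ z₁ u) hy1mem (Ψ z₂ u) hy2mem
    have hmono : μA * ‖D‖ ^ 2 ≤ ⟪P, D⟫ := hmonoA u (hsub hu) (Ψ z₁ u) hy1mem (Ψ z₂ u) hy2mem
    constructor
    · have hsplit : ⟪P, z₂ - z₁⟫ = ⟪P, D⟫ - ⟪P, Φ (Ψ z₂ u) u - Φ (Ψ z₁ u) u⟫ := by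
        rw [hid, inner_sub_right]
      have hQ : ⟪P, Φ (Ψ z₂ u) u - Φ (Ψ z₁ u) u⟫ ≤ LA * ‖D‖ * (LΦ * ‖D‖) := by
        calc ⟪P, Φ (Ψ z₂ u) u - Φ (Ψ z₁ u) u⟫ ≤ ‖P‖ * ‖Φ (Ψ z₂ u) u - Φ (Ψ z₁ u) u‖ :=
              real_inner_le_norm _ _
          _ ≤ LA * ‖D‖ * (LΦ * ‖D‖) := by
              apply mul_le_mul hlip hΦd (norm_nonneg _) (by positivity)
      have hstep1 : (μA - LA * LΦ) * ‖D‖ ^ 2 ≤ ⟪P, z₂ - z₁⟫ := by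
        rw [hsplit]
        nlinarith [hmono, hQ]
      have hzn : ‖z₂ - z₁‖ ^ 2 ≤ (1 + LΦ) ^ 2 * ‖D‖ ^ 2 := by
        nlinarith [hk2, norm_nonneg (z₂ - z₁), norm_nonneg D]
      calc (μA - LA * LΦ) / (1 + LΦ) ^ 2 * ‖z₂ - z₁‖ ^ 2
          ≤ (μA - LA * LΦ) / (1 + LΦ) ^ 2 * ((1 + LΦ) ^ 2 * ‖D‖ ^ 2) := by
            apply mul_le_mul_of_nonneg_left hzn (by positivity)
        _ = (μA - LA * LΦ) * ‖D‖ ^ 2 := by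
            field_simp
        _ ≤ ⟪P, z₂ - z₁⟫ := hstep1
    · calc ‖P‖ ≤ LA * ‖D‖ := hlip
        _ ≤ LA / (1 - LΦ) * ‖z₂ - z₁‖ := by
            rw [div_mul_eq_mul_div, le_div_iff₀ h1mLΦ]
            nlinarith [hk1, hLA]
  -- ================= CASE (b) =================
  · have hμLpos : 0 < μA * LA := mul_pos hμA hLA
    have hsq : 0 < Real.sqrt (μA * LA) := Real.sqrt_pos.mpr hμLpos
    have hThm : LΦ * (μA + LA) < 2 * Real.sqrt (μA * LA) := by
      have hY0 : 0 < 1 + LA / μA := by positivity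
      have h1 : LΦ * (1 + LA / μA) < 2 * Real.sqrt (LA / μA) :=
        (lt_div_iff₀ hY0).mp hbs
      have e1 : μA * Real.sqrt (LA / μA) = Real.sqrt (μA * LA) := by
        conv_lhs => rw [← Real.sqrt_sq hμA.le]
        rw [← Real.sqrt_mul (sq_nonneg μA)]
        congr 1
        field_simp
        rw [Real.sqrt_sq hμA.le]
      have e2 : (1 + LA / μA) * μA = μA + LA := by field_simp
      calc LΦ * (μA + LA) = LΦ * (1 + LA / μA) * μA := by rw [mul_assoc, e2]
        _ < 2 * Real.sqrt (LA / μA) * μA := by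
            apply mul_lt_mul_of_pos_right h1 hμA
        _ = 2 * Real.sqrt (μA * LA) := by rw [mul_assoc, mul_comm (Real.sqrt _) μA, e1]
    set s := LΦ * (μA + LA) / (2 * Real.sqrt (μA * LA)) with hsdef
    have hs0 : 0 ≤ s := by positivity
    have hs1 : s < 1 := (div_lt_one (by positivity)).mpr hThm
    set t := ((s + 1) / 2) ^ 2 with htdef
    have ht0 : 0 < t := by positivity
    have ht1 : t < 1 := by nlinarith [hs0, hs1]
    set μt := t * μA with hμtdef
    have hμt0 : 0 < μt := mul_pos ht0 hμA
    have hμtμ : μt ≤ μA := by nlinarith [ht1, hμA]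
    have hμtL : μt < LA := by nlinarith [ht1, hμA, hμL]
    have hKpos : 0 < LA - μt := by linarith
    have hkey : LΦ * (LA + μt) < 2 * Real.sqrt (μt * LA) := by
      have e3 : Real.sqrt (μt * LA) = (s + 1) / 2 * Real.sqrt (μA * LA) := by
        rw [show μt * LA = t * (μA * LA) by rw [hμtdef]; ring, htdef,
          Real.sqrt_mul (sq_nonneg _), Real.sqrt_sq (by positivity : (0:ℝ) ≤ (s + 1) / 2)]
      have e4 : s * (2 * Real.sqrt (μA * LA)) = LΦ * (μA + LA) := by
        rw [hsdef]
        exact div_mul_cancel₀ _ (by positivity)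
      have h5 : LΦ * (LA + μt) ≤ LΦ * (LA + μA) := by
        apply mul_le_mul_of_nonneg_left (by linarith) hLΦ0
      rw [e3]
      calc LΦ * (LA + μt) ≤ LΦ * (LA + μA) := h5
        _ = s * (2 * Real.sqrt (μA * LA)) := by rw [e4]; ring
        _ < (s + 1) / 2 * Real.sqrt (μA * LA) * 2 := by nlinarith [hs1, hsq]
        _ = 2 * ((s + 1) / 2 * Real.sqrt (μA * LA)) := by ring
    set c1 := μt * LA - (LA + μt) ^ 2 * LΦ ^ 2 / 4 with hc1def
    have hc1 : 0 < c1 := by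
      have hLHS0 : 0 ≤ LΦ * (LA + μt) := by positivity
      have hsq2 : (LΦ * (LA + μt)) ^ 2 < (2 * Real.sqrt (μt * LA)) ^ 2 := by
        exact pow_lt_pow_left₀ hkey hLHS0 (by norm_num)
      rw [mul_pow, mul_pow, Real.sq_sqrt (by positivity : (0:ℝ) ≤ μt * LA)] at hsq2
      rw [hc1def]
      nlinarith [hsq2]
    have hApos : 0 < LA + μt := by positivity
    refine ⟨c1 / ((LA + μt) * (1 + LΦ) ^ 2), by positivity, LA / (1 - LΦ), hLtilde, ?_⟩
    intro u hu z₁ hz₁ z₂ hz₂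
    obtain ⟨hy1mem, hy2mem, hid, hΦd, hk1, hk2⟩ := hpair u hu z₁ hz₁ z₂ hz₂
    set P := A (Ψ z₂ u) u - A (Ψ z₁ u) u with hPdef
    set D := Ψ z₂ u - Ψ z₁ u with hDdef
    have hlip : ‖P‖ ≤ LA * ‖D‖ := hlipA u (hsub hu) (Ψ z₁ u) hy1mem (Ψ z₂ u) hy2mem
    -- interpolation inequality from cocoercivity on the closed ball
    have hm' : ∀ y₁ ∈ closedBall ystar ε, ∀ y₂ ∈ closedBall ystar ε,
        μt * ‖y₂ - y₁‖ ^ 2 ≤ ⟪A y₂ u - A y₁ u, y₂ - y₁⟫ := by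
      intro y₁ h1 y₂ h2
      have := hmonoA u (hsub hu) y₁ h1 y₂ h2
      nlinarith [sq_nonneg ‖y₂ - y₁‖]
    have hcoco : ‖P - μt • D‖ ^ 2 ≤ (LA - μt) * ⟪P - μt • D, D⟫ := by
      have h0 := aux_coco_closedBall (c := ystar) (ε := ε) (F := fun y => A y u)
        (g := fun y => g y u) (m := μt) (L := LA) hε (hg u (hsub hu)) hm'
        (hlipA u (hsub hu)) hμt0.le hKpos hy1mem hy2mem
      exact h0
    have hexp1 : ‖P - μt • D‖ ^ 2 = ‖P‖ ^ 2 - 2 * (μt * ⟪P, D⟫) + μt ^ 2 * ‖D‖ ^ 2 := by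
      rw [norm_sub_sq_real, inner_smul_right, norm_smul, Real.norm_eq_abs,
        abs_of_pos hμt0, mul_pow]
    have hexp2 : ⟪P - μt • D, D⟫ = ⟪P, D⟫ - μt * ‖D‖ ^ 2 := by
      rw [inner_sub_left, real_inner_smul_left, real_inner_self_eq_norm_sq]
    rw [hexp1, hexp2] at hcoco
    have interp : ‖P‖ ^ 2 + μt * LA * ‖D‖ ^ 2 ≤ (LA + μt) * ⟪P, D⟫ := by nlinarith [hcoco]
    constructor
    · have hsplit : ⟪P, z₂ - z₁⟫ = ⟪P, D⟫ - ⟪P, Φ (Ψ z₂ u) u - Φ (Ψ z₁ u) u⟫ := by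
        rw [hid, inner_sub_right]
      have hQ : ⟪P, Φ (Ψ z₂ u) u - Φ (Ψ z₁ u) u⟫ ≤ ‖P‖ * (LΦ * ‖D‖) := by
        calc ⟪P, Φ (Ψ z₂ u) u - Φ (Ψ z₁ u) u⟫ ≤ ‖P‖ * ‖Φ (Ψ z₂ u) u - Φ (Ψ z₁ u) u‖ :=
              real_inner_le_norm _ _
          _ ≤ ‖P‖ * (LΦ * ‖D‖) := mul_le_mul_of_nonneg_left hΦd (norm_nonneg _)
      have hQ' : (LA + μt) * ⟪P, Φ (Ψ z₂ u) u - Φ (Ψ z₁ u) u⟫ ≤ (LA + μt) * (‖P‖ * (LΦ * ‖D‖)) :=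
        mul_le_mul_of_nonneg_left hQ hApos.le
      have hstep1 : c1 * ‖D‖ ^ 2 ≤ (LA + μt) * ⟪P, z₂ - z₁⟫ := by
        rw [hsplit, mul_sub, hc1def]
        nlinarith [interp, hQ', sq_nonneg (‖P‖ - (LA + μt) * (LΦ * ‖D‖) / 2)]
      have hzn : ‖z₂ - z₁‖ ^ 2 ≤ (1 + LΦ) ^ 2 * ‖D‖ ^ 2 := by
        nlinarith [hk2, norm_nonneg (z₂ - z₁), norm_nonneg D]
      calc c1 / ((LA + μt) * (1 + LΦ) ^ 2) * ‖z₂ - z₁‖ ^ 2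
          ≤ c1 / ((LA + μt) * (1 + LΦ) ^ 2) * ((1 + LΦ) ^ 2 * ‖D‖ ^ 2) := by
            apply mul_le_mul_of_nonneg_left hzn (by positivity)
        _ = c1 * ‖D‖ ^ 2 / (LA + μt) := by
            field_simp
        _ ≤ ⟪P, z₂ - z₁⟫ := by
            rw [div_le_iff₀ hApos]
            nlinarith [hstep1]
    · calc ‖P‖ ≤ LA * ‖D‖ := hlip
        _ ≤ LA / (1 - LΦ) * ‖z₂ - z₁‖ := by
            rw [div_mul_eq_mul_div, le_div_iff₀ h1mLΦ]
            nlinarith [hk1, hLA]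
end

section
/- Let (y*, u*) solve the quasi-generalized equation −A(y,u) ∈ B(y − Φ(y,u), u) under the standing assumptions, with Φ continuous at (y*,u*) and uniformly L_Φ-Lipschitz in its first variable on B_ε(y*) for u ∈ 𝒰, L_Φ ∈ [0,1), and assume Φ is directionally differentiable at (y*, u*). Let 𝒵, 𝒰̂ be neighborhoods of z* := y* − Φ(y*, u*) and u* on which Ψ(z,u) := (id − Φ(·,u))⁻¹(z) ∈ B_ε(y*) is well defined. Then Ψ is directionally differentiable at (z*, u*), and for every (k, h) ∈ Y × U the directional derivative δ = Ψ'(z*, u*; k, h) is the unique solution of δ − Φ'(y*, u*; δ, h) = k. -/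
open Filter Topology Metric Set
open scoped RealInnerProductSpace

/-- Lemma 4.10 / `lem:diff_psi`.
The local inverse `Ψ(z,u) := (id − Φ(·,u))⁻¹(z)` is directionally differentiable at
`(z*, u*)` and its directional derivative `δ = Ψ'(z*,u*;k,h)` is the unique solution of
`δ − Φ'(y*,u*;δ,h) = k`. -/
theorem stmt_15
    {Y : Type*} [NormedAddCommGroup Y] [InnerProductSpace ℝ Y] [CompleteSpace Y]
    {U : Type*} [NormedAddCommGroup U] [NormedSpace ℝ U] [CompleteSpace U]
    (A : Y → U → Y) (B : Y → U → Set Y) (Φ : Y → U → Y) (𝒰 : Set U)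
    (ystar : Y) (ustar : U)
    (h𝒰 : 𝒰 ∈ 𝓝 ustar) (hustar : ustar ∈ 𝒰)
    (ε μA LA LΦ : ℝ) (hε : 0 < ε) (hμA : 0 < μA) (hLA : 0 < LA)
    -- standing assumptions
    (hmonoA : ∀ u ∈ 𝒰, ∀ y₁ ∈ closedBall ystar ε, ∀ y₂ ∈ closedBall ystar ε,
      μA * ‖y₂ - y₁‖ ^ 2 ≤ ⟪A y₂ u - A y₁ u, y₂ - y₁⟫)
    (hlipA : ∀ u ∈ 𝒰, ∀ y₁ ∈ closedBall ystar ε, ∀ y₂ ∈ closedBall ystar ε,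
      ‖A y₂ u - A y₁ u‖ ≤ LA * ‖y₂ - y₁‖)
    (hB : ∀ u ∈ 𝒰, IsMaxMonotone (fun y => B y u))
    -- Φ: continuity at (y*,u*) and uniform Lipschitz continuity in the first variable
    (hΦcont : ContinuousAt (fun p : Y × U => Φ p.1 p.2) (ystar, ustar))
    (hLΦ : LΦ ∈ Set.Ico (0 : ℝ) 1)
    (hlipΦ : ∀ u ∈ 𝒰, ∀ y₁ ∈ closedBall ystar ε, ∀ y₂ ∈ closedBall ystar ε,
      ‖Φ y₂ u - Φ y₁ u‖ ≤ LΦ * ‖y₂ - y₁‖)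
    -- (y*, u*) solves the quasi-generalized equation
    (hsol : -A ystar ustar ∈ B (ystar - Φ ystar ustar) ustar)
    -- Φ is directionally differentiable at (y*, u*) with derivative Φ' = DΦ
    (DΦ : Y → U → Y)
    (hDΦ : ∀ (δ : Y) (h : U),
      Tendsto (fun t : ℝ => t⁻¹ • (Φ (ystar + t • δ) (ustar + t • h) - Φ ystar ustar))
        (𝓝[>] (0 : ℝ)) (𝓝 (DΦ δ h)))
    -- neighborhoods 𝒵 of z* and 𝒰̂ of u*, and the local inverse Ψ of id − Φ(·,u)
    (𝒵 : Set Y) (𝒰hat : Set U)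
    (h𝒵 : 𝒵 ∈ 𝓝 (ystar - Φ ystar ustar)) (h𝒰hat : 𝒰hat ∈ 𝓝 ustar) (hsub : 𝒰hat ⊆ 𝒰)
    (Ψ : Y → U → Y)
    (hΨ : ∀ z ∈ 𝒵, ∀ u ∈ 𝒰hat,
      Ψ z u ∈ closedBall ystar ε ∧ z = Ψ z u - Φ (Ψ z u) u) :
    ∃ DΨ : Y → U → Y,
      (∀ (k : Y) (h : U),
        Tendsto (fun t : ℝ =>
            t⁻¹ • (Ψ (ystar - Φ ystar ustar + t • k) (ustar + t • h)
              - Ψ (ystar - Φ ystar ustar) ustar))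
          (𝓝[>] (0 : ℝ)) (𝓝 (DΨ k h))) ∧
      (∀ (k : Y) (h : U),
        DΨ k h - DΦ (DΨ k h) h = k ∧ ∀ δ : Y, δ - DΦ δ h = k → δ = DΨ k h) := by

  obtain ⟨hLΦ0, hLΦ1⟩ := hLΦ
  set zs : Y := ystar - Φ ystar ustar with hzs
  -- basic eventual facts as t → 0⁺
  have htend : ∀ (v : Y) (w : U), ∀ᶠ t : ℝ in 𝓝[>] (0:ℝ),
      ystar + t • v ∈ closedBall ystar ε ∧ ustar + t • w ∈ 𝒰hat ∧
      zs + t • (v) ∈ 𝒵 := by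
    intro v w
    have h1 : Tendsto (fun t : ℝ => ystar + t • v) (𝓝 0) (𝓝 ystar) := by
      have : Continuous (fun t : ℝ => ystar + t • v) :=
        continuous_const.add (continuous_id.smul continuous_const)
      simpa using this.tendsto 0
    have h2 : Tendsto (fun t : ℝ => ustar + t • w) (𝓝 0) (𝓝 ustar) := by
      have : Continuous (fun t : ℝ => ustar + t • w) :=
        continuous_const.add (continuous_id.smul continuous_const)
      simpa using this.tendsto 0
    have h3 : Tendsto (fun t : ℝ => zs + t • v) (𝓝 0) (𝓝 zs) := by
      have : Continuous (fun t : ℝ => zs + t • v) :=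
        continuous_const.add (continuous_id.smul continuous_const)
      simpa using this.tendsto 0
    have e1 := h1.eventually (closedBall_mem_nhds ystar hε)
    have e2 := h2.eventually h𝒰hat
    have e3 := h3.eventually h𝒵
    exact ((e1.and (e2.and e3)).filter_mono nhdsWithin_le_nhds)
  -- DΦ (·, h) is LΦ-Lipschitz
  have hlipDΦ : ∀ (h : U) (δ₁ δ₂ : Y), ‖DΦ δ₁ h - DΦ δ₂ h‖ ≤ LΦ * ‖δ₁ - δ₂‖ := by
    intro h δ₁ δ₂
    have hq : Tendsto (fun t : ℝ =>
        t⁻¹ • (Φ (ystar + t • δ₁) (ustar + t • h) - Φ (ystar + t • δ₂) (ustar + t • h)))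
        (𝓝[>] (0:ℝ)) (𝓝 (DΦ δ₁ h - DΦ δ₂ h)) := by
      have := (hDΦ δ₁ h).sub (hDΦ δ₂ h)
      refine this.congr (fun t => ?_)
      rw [← smul_sub]
      congr 1
      abel
    have hbound : ∀ᶠ t : ℝ in 𝓝[>] (0:ℝ),
        ‖t⁻¹ • (Φ (ystar + t • δ₁) (ustar + t • h) - Φ (ystar + t • δ₂) (ustar + t • h))‖
          ≤ LΦ * ‖δ₁ - δ₂‖ := by
      filter_upwards [htend δ₁ h, htend δ₂ h, self_mem_nhdsWithin] with t h1 h2 ht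
      have htpos : (0:ℝ) < t := ht
      have hu : ustar + t • h ∈ 𝒰 := hsub h1.2.1
      have hl := hlipΦ _ hu _ h2.1 _ h1.1
      have hd : (ystar + t • δ₁) - (ystar + t • δ₂) = t • (δ₁ - δ₂) := by
        rw [smul_sub]; abel
      rw [hd, norm_smul, Real.norm_eq_abs, abs_of_pos htpos] at hl
      rw [norm_smul, Real.norm_eq_abs, abs_inv, abs_of_pos htpos]
      calc t⁻¹ * ‖Φ (ystar + t • δ₁) (ustar + t • h) - Φ (ystar + t • δ₂) (ustar + t • h)‖
          ≤ t⁻¹ * (LΦ * (t * ‖δ₁ - δ₂‖)) := by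
            exact mul_le_mul_of_nonneg_left hl (by positivity)
        _ = LΦ * ‖δ₁ - δ₂‖ := by field_simp
    exact le_of_tendsto hq.norm hbound
  -- existence and uniqueness of the fixed point δ = k + DΦ δ h
  have key : ∀ (k : Y) (h : U), ∃! δ : Y, δ - DΦ δ h = k := by
    intro k h
    set f : Y → Y := fun δ => k + DΦ δ h with hf
    have hcontr : ContractingWith LΦ.toNNReal f := by
      constructor
      · exact_mod_cast Real.toNNReal_lt_one.2 hLΦ1
      · refine LipschitzWith.of_dist_le_mul (fun δ₁ δ₂ => ?_)
        simp only [hf, dist_eq_norm, add_sub_add_left_eq_sub]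
        simpa [Real.coe_toNNReal _ hLΦ0] using hlipDΦ h δ₁ δ₂
    obtain ⟨δ, hδfix, -⟩ := hcontr.exists_fixedPoint ystar (edist_ne_top _ _)
    refine ⟨δ, ?_, fun δ' hδ' => ?_⟩
    · show δ - DΦ δ h = k
      have hfd : k + DΦ δ h = δ := hδfix
      linear_combination (norm := abel_nf) - hfd
    · exact hcontr.fixedPoint_unique'
        (show f δ' = δ' by show k + DΦ δ' h = δ'; linear_combination (norm := abel_nf) - hδ') hδfix
  choose DΨ hDΨ1 using fun (k : Y) (h : U) => (key k h).exists
  have huniq : ∀ (k : Y) (h : U) (δ : Y), δ - DΦ δ h = k → δ = DΨ k h := by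
    intro k h δ hδ
    exact ((key k h).unique hδ (hDΨ1 k h))
  -- Ψ z* u* = y*
  have hzsmem : zs ∈ 𝒵 := mem_of_mem_nhds h𝒵
  have husmem : ustar ∈ 𝒰hat := mem_of_mem_nhds h𝒰hat
  have hΨstar : Ψ zs ustar = ystar := by
    obtain ⟨hball, heq⟩ := hΨ zs hzsmem ustar husmem
    have hy0 : ystar ∈ closedBall ystar ε := mem_closedBall_self hε.le
    have h1 : Ψ zs ustar - ystar = Φ (Ψ zs ustar) ustar - Φ ystar ustar := by
      linear_combination (norm := abel_nf) hzs - heq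
    have h2 : ‖Ψ zs ustar - ystar‖ ≤ LΦ * ‖Ψ zs ustar - ystar‖ := by
      conv_lhs => rw [h1]
      exact hlipΦ ustar hustar ystar hy0 _ hball
    by_contra hne
    have hpos : 0 < ‖Ψ zs ustar - ystar‖ := by
      rw [norm_pos_iff, sub_ne_zero]
      exact fun hc => hne (by rw [← hc])
    nlinarith
  refine ⟨DΨ, fun k h => ?_, fun k h => ⟨hDΨ1 k h, huniq k h⟩⟩
  -- main convergence
  set δ := DΨ k h with hδdef
  have hδeq : δ - DΦ δ h = k := hDΨ1 k h
  set r : ℝ → Y := fun t =>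
    t⁻¹ • (Φ (ystar + t • δ) (ustar + t • h) - Φ ystar ustar) - DΦ δ h with hr
  have hrt : Tendsto r (𝓝[>] (0:ℝ)) (𝓝 0) := by
    have := (hDΦ δ h).sub (tendsto_const_nhds (x := DΦ δ h))
    simpa using this
  set d : ℝ → Y := fun t => t⁻¹ • (Ψ (zs + t • k) (ustar + t • h) - Ψ zs ustar) with hd
  have hbound : ∀ᶠ t : ℝ in 𝓝[>] (0:ℝ), ‖d t - δ‖ ≤ (1 - LΦ)⁻¹ * ‖r t‖ := by
    filter_upwards [htend δ h, htend k h, self_mem_nhdsWithin] with t h1 h2 ht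
    have htpos : (0:ℝ) < t := ht
    have hu : ustar + t • h ∈ 𝒰 := hsub h1.2.1
    obtain ⟨hyb, hye⟩ := hΨ (zs + t • k) h2.2.2 (ustar + t • h) h1.2.1
    set yt := Ψ (zs + t • k) (ustar + t • h) with hyt
    -- yt - ystar = t•k + Φ yt u_t - Φ ystar ustar
    have heq1 : yt - ystar = t • k + (Φ yt (ustar + t • h) - Φ ystar ustar) := by
      have h0 : zs + t • k = yt - Φ yt (ustar + t • h) := hye
      rw [hzs] at h0
      linear_combination (norm := abel_nf) - h0
    have hdt : d t - δ = t⁻¹ • (Φ yt (ustar + t • h) - Φ (ystar + t • δ) (ustar + t • h)) + r t := by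
      have hδk : δ = k + DΦ δ h := by linear_combination (norm := abel_nf) hδeq
      have hstep1 : d t = t⁻¹ • (yt - ystar) := by
        simp only [hd, hΨstar, ← hyt]
      calc d t - δ = t⁻¹ • (t • k + (Φ yt (ustar + t • h) - Φ ystar ustar)) - δ := by
            rw [hstep1, heq1]
        _ = k + t⁻¹ • (Φ yt (ustar + t • h) - Φ ystar ustar) - δ := by
            rw [smul_add, smul_smul, inv_mul_cancel₀ (ne_of_gt htpos), one_smul]
        _ = t⁻¹ • (Φ yt (ustar + t • h) - Φ ystar ustar) - DΦ δ h := by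
            conv_lhs => rw [hδk]
            abel
        _ = t⁻¹ • ((Φ yt (ustar + t • h) - Φ (ystar + t • δ) (ustar + t • h))
              + (Φ (ystar + t • δ) (ustar + t • h) - Φ ystar ustar)) - DΦ δ h := by
            congr 1
            congr 1
            abel
        _ = t⁻¹ • (Φ yt (ustar + t • h) - Φ (ystar + t • δ) (ustar + t • h)) + r t := by
            rw [smul_add, hr]
            abel
    have hnorm1 : ‖t⁻¹ • (Φ yt (ustar + t • h) - Φ (ystar + t • δ) (ustar + t • h))‖
        ≤ LΦ * ‖d t - δ‖ := by
      rw [norm_smul, Real.norm_eq_abs, abs_inv, abs_of_pos htpos]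
      have hl := hlipΦ _ hu _ h1.1 _ hyb
      have hdiff : yt - (ystar + t • δ) = t • (d t - δ) := by
        have hstep1 : d t = t⁻¹ • (yt - ystar) := by
          simp only [hd, hΨstar, ← hyt]
        have hc : t • (t⁻¹ • (yt - ystar)) = yt - ystar := by
          rw [smul_smul, mul_inv_cancel₀ (ne_of_gt htpos), one_smul]
        rw [hstep1, smul_sub, hc]
        abel
      rw [hdiff, norm_smul, Real.norm_eq_abs, abs_of_pos htpos] at hl
      calc t⁻¹ * ‖Φ yt (ustar + t • h) - Φ (ystar + t • δ) (ustar + t • h)‖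
          ≤ t⁻¹ * (LΦ * (t * ‖d t - δ‖)) := mul_le_mul_of_nonneg_left hl (by positivity)
        _ = LΦ * ‖d t - δ‖ := by field_simp
    have hnorm2 : ‖d t - δ‖ ≤ LΦ * ‖d t - δ‖ + ‖r t‖ := by
      calc ‖d t - δ‖ = ‖t⁻¹ • (Φ yt (ustar + t • h) - Φ (ystar + t • δ) (ustar + t • h)) + r t‖ := by
            rw [hdt]
        _ ≤ ‖t⁻¹ • (Φ yt (ustar + t • h) - Φ (ystar + t • δ) (ustar + t • h))‖ + ‖r t‖ :=
            norm_add_le _ _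
        _ ≤ LΦ * ‖d t - δ‖ + ‖r t‖ := add_le_add_left hnorm1 _
    have h1L : (0:ℝ) < 1 - LΦ := by linarith
    have hstep : (1 - LΦ) * ‖d t - δ‖ ≤ ‖r t‖ := by nlinarith
    calc ‖d t - δ‖ = (1 - LΦ)⁻¹ * ((1 - LΦ) * ‖d t - δ‖) := by field_simp
      _ ≤ (1 - LΦ)⁻¹ * ‖r t‖ := mul_le_mul_of_nonneg_left hstep (by positivity)
  have hg : Tendsto (fun t => (1 - LΦ)⁻¹ * ‖r t‖) (𝓝[>] (0:ℝ)) (𝓝 0) := by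
    have := hrt.norm
    simpa using (this.const_mul ((1 - LΦ)⁻¹))
  have hsq : Tendsto (fun t => d t - δ) (𝓝[>] (0:ℝ)) (𝓝 0) :=
    squeeze_zero_norm' hbound hg
  have : Tendsto d (𝓝[>] (0:ℝ)) (𝓝 δ) := by
    have := hsq.add (tendsto_const_nhds (x := δ))
    simpa using this
  simpa [hd, hzs] using this
end

section
/- Let (y*, u*) solve the quasi-generalized equation −A(y,u) ∈ B(y − Φ(y,u), u) under the standing assumptions (constants ε, μ_A, L_A), with Φ continuous at (y*,u*) and uniformly L_Φ-Lipschitz in its first variable on B_ε(y*) for u ∈ 𝒰, L_Φ ∈ [0,1). Fix ρ ∈ (0, 2μ_A/L_A²), set c := √(1 − 2ρμ_A + ρ²L_A²) ∈ (0,1), q*_ρ := y* − ρ·A(y*,u*) and φ* := Φ(y*,u*). Then for every r ∈ (0, ε] and every (φ, u) ∈ Y × 𝒰 satisfying 2‖φ − φ*‖ + ‖J_{ρB}(q*_ρ − φ*, u) − J_{ρB}(q*_ρ − φ*, u*)‖ + ρ‖A(y*,u) − A(y*,u*)‖ ≤ (1 − c)·r, the equation −A(z, u) ∈ B(z − φ,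 u) has a unique solution z ∈ B_r(y*). -/
open Filter Topology Metric Set
open scoped RealInnerProductSpace Pointwise

/-- Lemma 4.15 / `lem:solve_fix`.
For every `r ∈ (0,ε]` and `(φ,u) ∈ Y × 𝒰` satisfying the smallness estimate,
the equation `0 ∈ A(z,u) + B(z − φ, u)` has a unique solution `z ∈ B_r(y*)`. -/
theorem stmt_18
    {Y : Type*} [NormedAddCommGroup Y] [InnerProductSpace ℝ Y] [CompleteSpace Y]
    {U : Type*} [NormedAddCommGroup U] [NormedSpace ℝ U] [CompleteSpace U]
    (A : Y → U → Y) (B : Y → U → Set Y) (Φ : Y → U → Y) (𝒰 : Set U)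
    (ystar : Y) (ustar : U)
    (h𝒰 : 𝒰 ∈ 𝓝 ustar) (hustar : ustar ∈ 𝒰)
    (ε μA LA LΦ : ℝ) (hε : 0 < ε) (hμA : 0 < μA) (hLA : 0 < LA)
    -- standing assumptions
    (hmonoA : ∀ u ∈ 𝒰, ∀ y₁ ∈ closedBall ystar ε, ∀ y₂ ∈ closedBall ystar ε,
      μA * ‖y₂ - y₁‖ ^ 2 ≤ ⟪A y₂ u - A y₁ u, y₂ - y₁⟫)
    (hlipA : ∀ u ∈ 𝒰, ∀ y₁ ∈ closedBall ystar ε, ∀ y₂ ∈ closedBall ystar ε,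
      ‖A y₂ u - A y₁ u‖ ≤ LA * ‖y₂ - y₁‖)
    (hB : ∀ u ∈ 𝒰, IsMaxMonotone (fun y => B y u))
    -- Φ: continuity at (y*,u*), uniform Lipschitz continuity in the first variable
    (hΦcont : ContinuousAt (fun p : Y × U => Φ p.1 p.2) (ystar, ustar))
    (hLΦ : LΦ ∈ Set.Ico (0 : ℝ) 1)
    (hlipΦ : ∀ u ∈ 𝒰, ∀ y₁ ∈ closedBall ystar ε, ∀ y₂ ∈ closedBall ystar ε,
      ‖Φ y₂ u - Φ y₁ u‖ ≤ LΦ * ‖y₂ - y₁‖)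
    -- (y*, u*) solves the quasi-generalized equation
    (hsol : -A ystar ustar ∈ B (ystar - Φ ystar ustar) ustar)
    -- choice of ρ and c
    (ρ c : ℝ) (hρ : ρ ∈ Set.Ioo 0 (2 * μA / LA ^ 2))
    (hc : c = Real.sqrt (1 - 2 * ρ * μA + ρ ^ 2 * LA ^ 2))
    -- the resolvent J_{ρB}
    (J : Y → U → Y)
    (hJ : ∀ q : Y, ∀ u ∈ 𝒰, q - J q u ∈ ρ • B (J q u) u) :
    ∀ r ∈ Set.Ioc (0 : ℝ) ε, ∀ (φ : Y), ∀ u ∈ 𝒰,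
      2 * ‖φ - Φ ystar ustar‖
        + ‖J (ystar - ρ • A ystar ustar - Φ ystar ustar) u
            - J (ystar - ρ • A ystar ustar - Φ ystar ustar) ustar‖
        + ρ * ‖A ystar u - A ystar ustar‖ ≤ (1 - c) * r →
      ∃! z : Y, z ∈ closedBall ystar r ∧ -A z u ∈ B (z - φ) u := by
  obtain ⟨hρ0, hρ2⟩ := hρ
  have hρne : ρ ≠ 0 := hρ0.ne'
  have hρi : (0:ℝ) < ρ⁻¹ := inv_pos.mpr hρ0
  set k : ℝ := 1 - 2 * ρ * μA + ρ ^ 2 * LA ^ 2 with hkdef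
  have hc0 : 0 ≤ c := hc ▸ Real.sqrt_nonneg _
  have hk1 : k < 1 := by
    have h1 : ρ * LA ^ 2 < 2 * μA := (lt_div_iff₀ (by positivity)).mp hρ2
    have h2 : 0 < ρ * (2 * μA - ρ * LA ^ 2) := mul_pos hρ0 (by linarith)
    rw [hkdef]; nlinarith
  have hc1 : c < 1 := by
    rw [hc]
    exact (Real.sqrt_lt' one_pos).mpr (by simpa using hk1)
  -- the resolvent relation, rescaled
  have hres : ∀ u ∈ 𝒰, ∀ q : Y, ρ⁻¹ • (q - J q u) ∈ B (J q u) u := by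
    intro u hu q
    obtain ⟨ξ, hξ, hξeq⟩ := hJ q u hu
    rw [← hξeq, smul_smul, inv_mul_cancel₀ hρne, one_smul]
    exact hξ
  -- uniqueness of the resolvent
  have huniq : ∀ u ∈ 𝒰, ∀ q y : Y, ρ⁻¹ • (q - y) ∈ B y u → y = J q u := by
    intro u hu q y hy
    have h0 := (hB u hu).1 hy (hres u hu q)
    have heq : ⟪ρ⁻¹ • (q - J q u) - ρ⁻¹ • (q - y), J q u - y⟫ =
        -(ρ⁻¹ * ‖J q u - y‖ ^ 2) := by
      rw [← smul_sub, real_inner_smul_left,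
        show q - J q u - (q - y) = -(J q u - y) by abel, inner_neg_left,
        real_inner_self_eq_norm_sq]
      ring
    rw [heq] at h0
    have h1 : ρ⁻¹ * ‖J q u - y‖ ^ 2 ≤ 0 := by linarith
    have hsq : ‖J q u - y‖ ^ 2 ≤ 0 := by
      by_contra hcon
      push_neg at hcon
      exact absurd (mul_pos hρi hcon) (by linarith)
    have h2 : ‖J q u - y‖ ^ 2 = 0 := le_antisymm hsq (sq_nonneg _)
    have h3 : J q u - y = 0 :=
      norm_eq_zero.mp (pow_eq_zero_iff (by norm_num : (2:ℕ) ≠ 0) |>.mp h2)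
    rw [sub_eq_zero] at h3
    exact h3.symm
  -- nonexpansiveness of the resolvent
  have hnon : ∀ u ∈ 𝒰, ∀ q₁ q₂ : Y, ‖J q₂ u - J q₁ u‖ ≤ ‖q₂ - q₁‖ := by
    intro u hu q₁ q₂
    have h0 := (hB u hu).1 (hres u hu q₁) (hres u hu q₂)
    rw [← smul_sub,
      show q₂ - J q₂ u - (q₁ - J q₁ u) = (q₂ - q₁) - (J q₂ u - J q₁ u) by abel,
      real_inner_smul_left, inner_sub_left, real_inner_self_eq_norm_sq] at h0
    have h1 : 0 ≤ ⟪q₂ - q₁, J q₂ u - J q₁ u⟫ - ‖J q₂ u - J q₁ u‖ ^ 2 := by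
      by_contra hcon
      push_neg at hcon
      nlinarith [mul_pos hρi (neg_pos.mpr hcon)]
    have h3 := real_inner_le_norm (q₂ - q₁) (J q₂ u - J q₁ u)
    rcases (norm_nonneg (J q₂ u - J q₁ u)).eq_or_lt with h | h
    · rw [← h]; exact norm_nonneg _
    · nlinarith
  -- the contraction estimate for z ↦ z - ρ A z u
  have hcontr : ∀ u ∈ 𝒰, ∀ z₁ ∈ closedBall ystar ε, ∀ z₂ ∈ closedBall ystar ε,
      ‖(z₂ - ρ • A z₂ u) - (z₁ - ρ • A z₁ u)‖ ≤ c * ‖z₂ - z₁‖ := by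
    intro u hu z₁ h₁ z₂ h₂
    have hmono := hmonoA u hu z₁ h₁ z₂ h₂
    have hlip := hlipA u hu z₁ h₁ z₂ h₂
    have hw : (z₂ - ρ • A z₂ u) - (z₁ - ρ • A z₁ u)
        = (z₂ - z₁) - ρ • (A z₂ u - A z₁ u) := by rw [smul_sub]; abel
    rw [hw]
    set d := z₂ - z₁ with hd
    set a := A z₂ u - A z₁ u with ha
    have h1 : ‖d - ρ • a‖ ^ 2 = ‖d‖ ^ 2 - 2 * (ρ * ⟪a, d⟫) + ρ ^ 2 * ‖a‖ ^ 2 := by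
      rw [norm_sub_sq_real, real_inner_smul_right, norm_smul, real_inner_comm,
        Real.norm_eq_abs, abs_of_pos hρ0]
      ring
    have h2 : ‖a‖ ^ 2 ≤ LA ^ 2 * ‖d‖ ^ 2 := by nlinarith [norm_nonneg a, norm_nonneg d]
    have hsq : ‖d - ρ • a‖ ^ 2 ≤ k * ‖d‖ ^ 2 := by
      rw [hkdef]; nlinarith [norm_nonneg d]
    rcases le_or_gt 0 k with h | h
    · have h4 := Real.sqrt_le_sqrt hsq
      rwa [Real.sqrt_sq (norm_nonneg _), Real.sqrt_mul h,
        Real.sqrt_sq (norm_nonneg d), ← hc] at h4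
    · have h0 : ‖d - ρ • a‖ ^ 2 ≤ 0 :=
        hsq.trans (mul_nonpos_of_nonpos_of_nonneg h.le (sq_nonneg _))
      have h5 : ‖d - ρ • a‖ ^ 2 = 0 := le_antisymm h0 (sq_nonneg _)
      rw [pow_eq_zero_iff (by norm_num : (2:ℕ) ≠ 0) |>.mp h5]
      positivity
  -- main argument
  intro r hr φ u hu hsmall
  obtain ⟨hr0, hrε⟩ := hr
  have hsub : closedBall ystar r ⊆ closedBall ystar ε := closedBall_subset_closedBall hrε
  have hystarε : ystar ∈ closedBall ystar ε := mem_closedBall_self hε.le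
  set φs := Φ ystar ustar with hφs
  set qs : Y := ystar - ρ • A ystar ustar - φs with hqs
  -- y* - φ* is the resolvent at q*
  have hJstar : ystar - φs = J qs ustar := by
    apply huniq ustar hustar
    have h1 : ρ⁻¹ • (qs - (ystar - φs)) = -A ystar ustar := by
      rw [show qs - (ystar - φs) = -(ρ • A ystar ustar) by rw [hqs]; abel,
        smul_neg, smul_smul, inv_mul_cancel₀ hρne, one_smul]
    rw [h1]
    exact hsol
  set F : Y → Y := fun z => φ + J (z - ρ • A z u - φ) u with hF
  -- F maps the ball into itself
  have hself : ∀ z ∈ closedBall ystar r, F z ∈ closedBall ystar r := by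
    intro z hz
    have hzr : ‖z - ystar‖ ≤ r := by rwa [mem_closedBall, dist_eq_norm] at hz
    have hsplit : F z - ystar = (φ - φs) + (J (z - ρ • A z u - φ) u - J qs u)
        + (J qs u - J qs ustar) := by
      simp only [hF]
      rw [show ystar = φs + J qs ustar by rw [← hJstar]; abel]
      abel
    have e1 : ‖J (z - ρ • A z u - φ) u - J qs u‖ ≤ ‖(z - ρ • A z u - φ) - qs‖ :=
      hnon u hu _ _
    have e2 : ‖(z - ρ • A z u - φ) - qs‖ ≤ c * ‖z - ystar‖
        + ρ * ‖A ystar u - A ystar ustar‖ + ‖φ - φs‖ := by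
      have hdec : (z - ρ • A z u - φ) - qs
          = ((z - ρ • A z u) - (ystar - ρ • A ystar u))
            - ρ • (A ystar u - A ystar ustar) - (φ - φs) := by
        rw [hqs, smul_sub]; abel
      calc ‖(z - ρ • A z u - φ) - qs‖
          ≤ ‖(z - ρ • A z u) - (ystar - ρ • A ystar u)‖
            + ‖ρ • (A ystar u - A ystar ustar)‖ + ‖φ - φs‖ := by
            rw [hdec]
            exact (norm_sub_le _ _).trans (by gcongr; exact norm_sub_le _ _)
        _ ≤ c * ‖z - ystar‖ + ρ * ‖A ystar u - A ystar ustar‖ + ‖φ - φs‖ := by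
            gcongr
            · exact hcontr u hu ystar hystarε z (hsub hz)
            · rw [norm_smul, Real.norm_eq_abs, abs_of_pos hρ0]
    have e3 : c * ‖z - ystar‖ ≤ c * r := by gcongr
    rw [mem_closedBall, dist_eq_norm, hsplit]
    calc ‖(φ - φs) + (J (z - ρ • A z u - φ) u - J qs u) + (J qs u - J qs ustar)‖
        ≤ ‖φ - φs‖ + ‖J (z - ρ • A z u - φ) u - J qs u‖ + ‖J qs u - J qs ustar‖ :=
          norm_add₃_le
      _ ≤ r := by linarith [e1.trans e2]
  -- F is a contraction on the ball
  have hFc : ∀ z₁ ∈ closedBall ystar r, ∀ z₂ ∈ closedBall ystar r,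
      ‖F z₂ - F z₁‖ ≤ c * ‖z₂ - z₁‖ := by
    intro z₁ h₁ z₂ h₂
    have h3 : F z₂ - F z₁ = J (z₂ - ρ • A z₂ u - φ) u - J (z₁ - ρ • A z₁ u - φ) u := by
      simp only [hF]; abel
    rw [h3]
    calc ‖J (z₂ - ρ • A z₂ u - φ) u - J (z₁ - ρ • A z₁ u - φ) u‖
        ≤ ‖(z₂ - ρ • A z₂ u - φ) - (z₁ - ρ • A z₁ u - φ)‖ := hnon u hu _ _
      _ = ‖(z₂ - ρ • A z₂ u) - (z₁ - ρ • A z₁ u)‖ := by congr 1; abel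
      _ ≤ c * ‖z₂ - z₁‖ := hcontr u hu z₁ (hsub h₁) z₂ (hsub h₂)
  -- fixed points are exactly solutions
  have hfix_iff : ∀ z : Y, (F z = z ↔ -A z u ∈ B (z - φ) u) := by
    intro z
    constructor
    · intro hzf
      have hJz : J (z - ρ • A z u - φ) u = z - φ := by
        simp only [hF] at hzf
        rw [eq_sub_iff_add_eq, add_comm]
        exact hzf
      have h4 := hJ (z - ρ • A z u - φ) u hu
      rw [hJz, show z - ρ • A z u - φ - (z - φ) = ρ • (-A z u) by rw [smul_neg]; abel]
        at h4
      exact (smul_mem_smul_set_iff₀ hρne _ _).mp h4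
    · intro hzsol
      have h5 : z - φ = J (z - ρ • A z u - φ) u := by
        apply huniq u hu
        rw [show z - ρ • A z u - φ - (z - φ) = -(ρ • A z u) by abel, smul_neg,
          smul_smul, inv_mul_cancel₀ hρne, one_smul]
        exact hzsol
      simp only [hF]
      rw [← h5]
      abel
  -- Banach fixed point on the (complete, nonempty) closed ball
  haveI hne : Nonempty (closedBall ystar r) := ⟨⟨ystar, mem_closedBall_self hr0.le⟩⟩
  haveI hcs : CompleteSpace (closedBall ystar r) :=
    (isClosed_closedBall.isComplete).completeSpace_coe
  set g : closedBall ystar r → closedBall ystar r :=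
    fun z => ⟨F z.1, hself z.1 z.2⟩ with hg
  have hgc : ContractingWith ⟨c, hc0⟩ g := by
    constructor
    · exact_mod_cast hc1
    · apply LipschitzWith.of_dist_le_mul
      intro x y
      rw [Subtype.dist_eq, Subtype.dist_eq, dist_eq_norm, dist_eq_norm]
      exact hFc y.1 y.2 x.1 x.2
  set z0 : closedBall ystar r := ContractingWith.fixedPoint g hgc with hz0
  have hfix : F z0.1 = z0.1 := congrArg Subtype.val hgc.fixedPoint_isFixedPt
  refine ⟨z0.1, ⟨z0.2, (hfix_iff z0.1).mp hfix⟩, ?_⟩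
  rintro w ⟨hw1, hw2⟩
  have hwfix : F w = w := (hfix_iff w).mpr hw2
  have h6 := hFc z0.1 z0.2 w hw1
  rw [hwfix, hfix] at h6
  have hwz : (1 - c) * ‖w - z0.1‖ ≤ 0 := by linarith
  have h7 : ‖w - z0.1‖ ≤ 0 := by
    by_contra hcon
    push_neg at hcon
    exact absurd (mul_pos (by linarith : (0:ℝ) < 1 - c) hcon) (by linarith)
  rw [← sub_eq_zero]
  exact norm_eq_zero.mp (le_antisymm h7 (norm_nonneg _))
end

section
/- Let (y*, u*) solve the quasi-generalized equation −A(y,u) ∈ B(y − Φ(y,u), u) under the standing assumptions (constants ε, μ_A, L_A), with Φ continuous at (y*,u*) and uniformly L_Φ-Lipschitz in its first variable on B_ε(y*) for u ∈ 𝒰 (L_Φ ∈ [0,1)), and assume the smallness condition: either (a) L_Φ < μ_A/L_A, or (b) L_Φ < 2√γ_A/(1 + γ_A) with γ_A = L_A/μ_A and A(·,u) being on U_ε(y*) the Fréchet derivative of a real-valued g(·,u) for each u ∈ 𝒰. Fix ρ ∈ (0, 2μ_A/L_A²), c := √(1 − 2ρμ_A + ρ²L_A²), q*_ρ := y* − ρ·A(y*,u*),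 φ* := Φ(y*,u*), and define 𝒞_ρ(u) := 2‖Φ(y*,u) − Φ(y*,u*)‖ + ‖J_{ρB}(q*_ρ − φ*, u) − J_{ρB}(q*_ρ − φ*, u*)‖ + ρ‖A(y*,u) − A(y*,u*)‖. Let λ ∈ (0, ε] be such that for all y ∈ B_λ(y*) and u ∈ 𝒰 with 𝒞_ρ(u) ≤ (1−c)ε/2 the equation −A(z,u) ∈ B(z − Φ(y,u), u) has a unique solution z =: T_u(y) ∈ B_ε(y*). Then: (a) there exists c̃ ∈ (0,1) such that ‖T_u(y₂) − T_u(y₁)‖ ≤ c̃‖y₂ − y₁‖ for all y₁, y₂ ∈ B_λ(y*) and all such u ∈ 𝒰; (b) if u ∈ 𝒰 additionally satisfies 𝒞_ρ(u) ≤ (1−c)·min{(1−c̃)λ, ε}, then T_u maps B_λ(y*) into itself, T_u has a unique fixed point y_u ∈ B_λ(y*) (which solves −A(y_u,u) ∈ B(y_u − Φ(y_u,u), u)), and the iterates y_{u,0} := y*, y_{u,n} := T_u(y_{u,n−1}) satisfy ‖y_{u,n} − y_u‖ ≤ (c̃ⁿ/((1−c)(1−c̃)))·𝒞_ρ(u)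 for all n ∈ ℕ. -/
set_option linter.unusedSectionVars false
set_option linter.unusedVariables false
set_option linter.unreachableTactic false
set_option linter.unusedTactic false
set_option maxHeartbeats 1000000

open Filter Topology Metric Set
open scoped RealInnerProductSpace Pointwise

section Auxiliary

variable {Y : Type*} [NormedAddCommGroup Y] [InnerProductSpace ℝ Y] [CompleteSpace Y]

private lemma seg_mem {c₀ p q : Y} {ε t : ℝ} (hp : p ∈ ball c₀ ε) (hq : q ∈ ball c₀ ε)
    (ht0 : 0 ≤ t) (ht1 : t ≤ 1) : p + t • (q - p) ∈ ball c₀ ε := by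
  have h := (convex_ball c₀ ε) hp hq (by linarith : (0:ℝ) ≤ 1 - t) ht0 (by ring)
  convert h using 1
  module

private lemma seg_hasDerivAt {f : Y → ℝ} {G : Y → Y} {c₀ : Y} {ε : ℝ}
    (hd : ∀ y ∈ ball c₀ ε, HasFDerivAt f ((InnerProductSpace.toDual ℝ Y (G y) : Y →L[ℝ] ℝ)) y)
    {p q : Y} (hp : p ∈ ball c₀ ε) (hq : q ∈ ball c₀ ε) {t : ℝ} (ht0 : 0 ≤ t) (ht1 : t ≤ 1) :
    HasDerivAt (fun s : ℝ => f (p + s • (q - p))) ⟪G (p + t • (q - p)), q - p⟫ t := by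
  have hmem := seg_mem hp hq ht0 ht1
  have hγ : HasDerivAt (fun s : ℝ => p + s • (q - p)) (q - p) t := by
    simpa using ((hasDerivAt_id t).smul_const (q - p)).const_add p
  have h2 := (hd _ hmem).comp_hasDerivAt t hγ
  simp only [InnerProductSpace.toDual_apply_apply] at h2
  exact h2

private lemma seg_contOn {G : Y → Y} {c₀ : Y} {ε K : ℝ} (hK0 : 0 ≤ K)
    (hK : ∀ x ∈ ball c₀ ε, ∀ y ∈ ball c₀ ε, ‖G y - G x‖ ≤ K * ‖y - x‖)
    {p q : Y} (hp : p ∈ ball c₀ ε) (hq : q ∈ ball c₀ ε) :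
    ContinuousOn (fun t : ℝ => ⟪G (p + t • (q - p)), q - p⟫) (Icc (0:ℝ) 1) := by
  have : LipschitzOnWith (Real.toNNReal (K * ‖q - p‖ ^ 2))
      (fun t : ℝ => ⟪G (p + t • (q - p)), q - p⟫) (Icc (0:ℝ) 1) := by
    apply LipschitzOnWith.of_dist_le_mul
    intro a ha b hb
    have hma := seg_mem hp hq ha.1 ha.2
    have hmb := seg_mem hp hq hb.1 hb.2
    have h1 : dist (⟪G (p + a • (q - p)), q - p⟫ : ℝ) ⟪G (p + b • (q - p)), q - p⟫
        = |⟪G (p + a • (q - p)) - G (p + b • (q - p)), q - p⟫| := by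
      rw [Real.dist_eq, ← inner_sub_left]
    rw [h1]
    have h2 := abs_real_inner_le_norm (G (p + a • (q - p)) - G (p + b • (q - p))) (q - p)
    have h3 := hK _ hmb _ hma
    have h4 : ‖(p + a • (q - p)) - (p + b • (q - p))‖ = |a - b| * ‖q - p‖ := by
      have : (p + a • (q - p)) - (p + b • (q - p)) = (a - b) • (q - p) := by module
      rw [this, norm_smul, Real.norm_eq_abs]
    rw [h4] at h3
    have h5 : |⟪G (p + a • (q - p)) - G (p + b • (q - p)), q - p⟫|
        ≤ K * (|a - b| * ‖q - p‖) * ‖q - p‖ := by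
      calc |⟪G (p + a • (q - p)) - G (p + b • (q - p)), q - p⟫|
          ≤ ‖G (p + a • (q - p)) - G (p + b • (q - p))‖ * ‖q - p‖ := h2
        _ ≤ K * (|a - b| * ‖q - p‖) * ‖q - p‖ :=
            mul_le_mul_of_nonneg_right h3 (norm_nonneg _)
    have h6 : (Real.toNNReal (K * ‖q - p‖ ^ 2) : ℝ) = K * ‖q - p‖ ^ 2 :=
      Real.coe_toNNReal _ (by positivity)
    rw [h6, Real.dist_eq]
    nlinarith [abs_nonneg (a - b), norm_nonneg (q - p)]
  exact this.continuousOn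

private lemma seg_integral {f : Y → ℝ} {G : Y → Y} {c₀ : Y} {ε K : ℝ} (hK0 : 0 ≤ K)
    (hd : ∀ y ∈ ball c₀ ε, HasFDerivAt f ((InnerProductSpace.toDual ℝ Y (G y) : Y →L[ℝ] ℝ)) y)
    (hK : ∀ x ∈ ball c₀ ε, ∀ y ∈ ball c₀ ε, ‖G y - G x‖ ≤ K * ‖y - x‖)
    {p q : Y} (hp : p ∈ ball c₀ ε) (hq : q ∈ ball c₀ ε) :
    f q - f p = ∫ t in (0:ℝ)..1, ⟪G (p + t • (q - p)), q - p⟫ := by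
  have hcont := seg_contOn hK0 hK hp hq
  have hint : IntervalIntegrable (fun t : ℝ => ⟪G (p + t • (q - p)), q - p⟫)
      MeasureTheory.volume 0 1 :=
    ContinuousOn.intervalIntegrable (by rwa [uIcc_of_le zero_le_one]) 
  have h := intervalIntegral.integral_eq_sub_of_hasDerivAt
    (f := fun s : ℝ => f (p + s • (q - p))) (a := 0) (b := 1)
    (fun t ht => by
      rw [uIcc_of_le zero_le_one] at ht
      exact seg_hasDerivAt hd hp hq ht.1 ht.2) hint
  simp only [one_smul, zero_smul, add_zero] at h
  rw [show p + (q - p) = q by abel] at h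
  linarith [h]

private lemma seg_lower {f : Y → ℝ} {G : Y → Y} {c₀ : Y} {ε K : ℝ} (hK0 : 0 ≤ K)
    (hd : ∀ y ∈ ball c₀ ε, HasFDerivAt f ((InnerProductSpace.toDual ℝ Y (G y) : Y →L[ℝ] ℝ)) y)
    (hmono : ∀ x ∈ ball c₀ ε, ∀ y ∈ ball c₀ ε, 0 ≤ ⟪G y - G x, y - x⟫)
    (hK : ∀ x ∈ ball c₀ ε, ∀ y ∈ ball c₀ ε, ‖G y - G x‖ ≤ K * ‖y - x‖)
    {p q : Y} (hp : p ∈ ball c₀ ε) (hq : q ∈ ball c₀ ε) :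
    f p + ⟪G p, q - p⟫ ≤ f q := by
  have heq := seg_integral hK0 hd hK hp hq
  have hcont := seg_contOn hK0 hK hp hq
  have hint : IntervalIntegrable (fun t : ℝ => ⟪G (p + t • (q - p)), q - p⟫)
      MeasureTheory.volume 0 1 :=
    ContinuousOn.intervalIntegrable (by rwa [uIcc_of_le zero_le_one])
  have hlow : ∀ t ∈ Icc (0:ℝ) 1, ⟪G p, q - p⟫ ≤ ⟪G (p + t • (q - p)), q - p⟫ := by
    intro t ht
    have hmem := seg_mem hp hq ht.1 ht.2
    have key : 0 ≤ ⟪G (p + t • (q - p)) - G p, q - p⟫ := by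
      rcases eq_or_lt_of_le ht.1 with h0 | h0
      · simp [← h0]
      · have h := hmono p hp _ hmem
        have h2 : (p + t • (q - p)) - p = t • (q - p) := by module
        rw [h2, real_inner_smul_right] at h
        nlinarith
    have := inner_sub_left (𝕜 := ℝ) (G (p + t • (q - p))) (G p) (q - p)
    linarith [this, key]
  have hmono2 := intervalIntegral.integral_mono_on (μ := MeasureTheory.volume)
    zero_le_one (intervalIntegrable_const (c := ⟪G p, q - p⟫)) hint hlow
  rw [intervalIntegral.integral_const] at hmono2
  simp only [sub_zero, one_smul, smul_eq_mul] at hmono2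
  linarith [heq, hmono2]

private lemma seg_upper {f : Y → ℝ} {G : Y → Y} {c₀ : Y} {ε K Lb : ℝ} (hK0 : 0 ≤ K)
    (hd : ∀ y ∈ ball c₀ ε, HasFDerivAt f ((InnerProductSpace.toDual ℝ Y (G y) : Y →L[ℝ] ℝ)) y)
    (hup : ∀ x ∈ ball c₀ ε, ∀ y ∈ ball c₀ ε, ⟪G y - G x, y - x⟫ ≤ Lb * ‖y - x‖ ^ 2)
    (hK : ∀ x ∈ ball c₀ ε, ∀ y ∈ ball c₀ ε, ‖G y - G x‖ ≤ K * ‖y - x‖)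
    {p q : Y} (hp : p ∈ ball c₀ ε) (hq : q ∈ ball c₀ ε) :
    f q ≤ f p + ⟪G p, q - p⟫ + Lb / 2 * ‖q - p‖ ^ 2 := by
  have heq := seg_integral hK0 hd hK hp hq
  have hcont := seg_contOn hK0 hK hp hq
  have hint : IntervalIntegrable (fun t : ℝ => ⟪G (p + t • (q - p)), q - p⟫)
      MeasureTheory.volume 0 1 :=
    ContinuousOn.intervalIntegrable (by rwa [uIcc_of_le zero_le_one])
  have hint2 : IntervalIntegrable (fun t : ℝ => ⟪G p, q - p⟫ + Lb * ‖q - p‖ ^ 2 * t)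
      MeasureTheory.volume 0 1 := by
    apply IntervalIntegrable.add intervalIntegrable_const
    exact (IntervalIntegrable.const_mul intervalIntegral.intervalIntegrable_id _)
  have hup2 : ∀ t ∈ Icc (0:ℝ) 1,
      ⟪G (p + t • (q - p)), q - p⟫ ≤ ⟪G p, q - p⟫ + Lb * ‖q - p‖ ^ 2 * t := by
    intro t ht
    have hmem := seg_mem hp hq ht.1 ht.2
    have key : ⟪G (p + t • (q - p)) - G p, q - p⟫ ≤ Lb * ‖q - p‖ ^ 2 * t := by
      rcases eq_or_lt_of_le ht.1 with h0 | h0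
      · simp [← h0]
      · have h := hup p hp _ hmem
        have h2 : (p + t • (q - p)) - p = t • (q - p) := by module
        rw [h2, real_inner_smul_right, norm_smul, Real.norm_eq_abs,
          abs_of_pos h0, mul_pow] at h
        nlinarith
    have := inner_sub_left (𝕜 := ℝ) (G (p + t • (q - p))) (G p) (q - p)
    linarith [this, key]
  have hmono2 := intervalIntegral.integral_mono_on (μ := MeasureTheory.volume)
    zero_le_one hint hint2 hup2
  rw [intervalIntegral.integral_add intervalIntegrable_const
    ((IntervalIntegrable.const_mul intervalIntegral.intervalIntegrable_id _)),
    intervalIntegral.integral_const, intervalIntegral.integral_const_mul,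
    integral_id] at hmono2
  simp only [sub_zero, one_smul, smul_eq_mul, one_pow] at hmono2
  nlinarith [heq, hmono2]

private lemma descent_half {f : Y → ℝ} {G : Y → Y} {c₀ : Y} {ε K Lb : ℝ} (hK0 : 0 ≤ K) (hLb : 0 < Lb)
    (hd : ∀ y ∈ ball c₀ ε, HasFDerivAt f ((InnerProductSpace.toDual ℝ Y (G y) : Y →L[ℝ] ℝ)) y)
    (hmono : ∀ x ∈ ball c₀ ε, ∀ y ∈ ball c₀ ε, 0 ≤ ⟪G y - G x, y - x⟫)
    (hup : ∀ x ∈ ball c₀ ε, ∀ y ∈ ball c₀ ε, ⟪G y - G x, y - x⟫ ≤ Lb * ‖y - x‖ ^ 2)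
    (hK : ∀ x ∈ ball c₀ ε, ∀ y ∈ ball c₀ ε, ‖G y - G x‖ ≤ K * ‖y - x‖)
    {x y : Y} (hx : x ∈ ball c₀ ε) (hy : y ∈ ball c₀ ε)
    (hz : y - Lb⁻¹ • (G y - G x) ∈ ball c₀ ε) :
    f x + ⟪G x, y - x⟫ + 1 / (2 * Lb) * ‖G y - G x‖ ^ 2 ≤ f y := by
  set φ : Y → ℝ := fun w => f w - ⟪G x, w⟫ with hφ
  set Gφ : Y → Y := fun w => G w - G x with hGφ
  have hdφ : ∀ w ∈ ball c₀ ε,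
      HasFDerivAt φ ((InnerProductSpace.toDual ℝ Y (Gφ w) : Y →L[ℝ] ℝ)) w := by
    intro w hw
    have h1 := (hd w hw).sub
      ((InnerProductSpace.toDual ℝ Y (G x) : Y →L[ℝ] ℝ).hasFDerivAt (x := w))
    have h2 : (InnerProductSpace.toDual ℝ Y (Gφ w) : Y →L[ℝ] ℝ)
        = (InnerProductSpace.toDual ℝ Y (G w) : Y →L[ℝ] ℝ)
          - (InnerProductSpace.toDual ℝ Y (G x) : Y →L[ℝ] ℝ) := by
      rw [hGφ]; exact map_sub _ _ _
    have hfun : φ = fun w => f w - (InnerProductSpace.toDual ℝ Y (G x) : Y →L[ℝ] ℝ) w := by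
      funext v; simp [hφ, InnerProductSpace.toDual_apply_apply]
    rw [h2, hfun]
    exact h1
  have hmφ : ∀ a ∈ ball c₀ ε, ∀ b ∈ ball c₀ ε, 0 ≤ ⟪Gφ b - Gφ a, b - a⟫ := by
    intro a ha b hb
    have : Gφ b - Gφ a = G b - G a := by rw [hGφ]; exact sub_sub_sub_cancel_right _ _ _
    rw [this]; exact hmono a ha b hb
  have huφ : ∀ a ∈ ball c₀ ε, ∀ b ∈ ball c₀ ε, ⟪Gφ b - Gφ a, b - a⟫ ≤ Lb * ‖b - a‖ ^ 2 := by
    intro a ha b hb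
    have : Gφ b - Gφ a = G b - G a := by rw [hGφ]; exact sub_sub_sub_cancel_right _ _ _
    rw [this]; exact hup a ha b hb
  have hKφ : ∀ a ∈ ball c₀ ε, ∀ b ∈ ball c₀ ε, ‖Gφ b - Gφ a‖ ≤ K * ‖b - a‖ := by
    intro a ha b hb
    have : Gφ b - Gφ a = G b - G a := by rw [hGφ]; exact sub_sub_sub_cancel_right _ _ _
    rw [this]; exact hK a ha b hb
  set z := y - Lb⁻¹ • (G y - G x) with hzdef
  have h4 : φ x ≤ φ z := by
    have h := seg_lower hK0 hdφ hmφ hKφ hx hz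
    have h0 : Gφ x = 0 := by rw [hGφ]; simp
    rw [h0] at h
    simpa using h
  have h5 := seg_upper hK0 hdφ huφ hKφ hy hz
  have hzy : z - y = -(Lb⁻¹ • (G y - G x)) := by rw [hzdef]; abel
  rw [hzy] at h5
  have hGφy : Gφ y = G y - G x := by rw [hGφ]
  rw [hGφy] at h5
  have hin : ⟪G y - G x, -(Lb⁻¹ • (G y - G x))⟫ = -(Lb⁻¹ * ‖G y - G x‖ ^ 2) := by
    rw [inner_neg_right, real_inner_smul_right, real_inner_self_eq_norm_sq]
  have hnr : ‖-(Lb⁻¹ • (G y - G x))‖ ^ 2 = Lb⁻¹ ^ 2 * ‖G y - G x‖ ^ 2 := by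
    rw [norm_neg, norm_smul, Real.norm_eq_abs, abs_of_pos (by positivity), mul_pow]
  rw [hin, hnr] at h5
  have hφx : φ x = f x - ⟪G x, x⟫ := rfl
  have hφy : φ y = f y - ⟪G x, y⟫ := rfl
  have hφz : φ z = f z - ⟪G x, z⟫ := rfl
  have hsub : ⟪G x, y - x⟫ = ⟪G x, y⟫ - ⟪G x, x⟫ := inner_sub_right _ _ _
  have harith : Lb⁻¹ * ‖G y - G x‖ ^ 2 - Lb / 2 * (Lb⁻¹ ^ 2 * ‖G y - G x‖ ^ 2)
      = 1 / (2 * Lb) * ‖G y - G x‖ ^ 2 := by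
    field_simp; ring
  nlinarith [h4, h5]

private lemma local_coco {f : Y → ℝ} {G : Y → Y} {c₀ : Y} {ε K Lb : ℝ} (hK0 : 0 ≤ K) (hLb : 0 < Lb)
    (hd : ∀ y ∈ ball c₀ ε, HasFDerivAt f ((InnerProductSpace.toDual ℝ Y (G y) : Y →L[ℝ] ℝ)) y)
    (hmono : ∀ x ∈ ball c₀ ε, ∀ y ∈ ball c₀ ε, 0 ≤ ⟪G y - G x, y - x⟫)
    (hup : ∀ x ∈ ball c₀ ε, ∀ y ∈ ball c₀ ε, ⟪G y - G x, y - x⟫ ≤ Lb * ‖y - x‖ ^ 2)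
    (hK : ∀ x ∈ ball c₀ ε, ∀ y ∈ ball c₀ ε, ‖G y - G x‖ ≤ K * ‖y - x‖)
    {x y : Y} (hx : x ∈ ball c₀ ε) (hy : y ∈ ball c₀ ε)
    (hz1 : y - Lb⁻¹ • (G y - G x) ∈ ball c₀ ε) (hz2 : x - Lb⁻¹ • (G x - G y) ∈ ball c₀ ε) :
    ‖G y - G x‖ ^ 2 ≤ Lb * ⟪G y - G x, y - x⟫ := by
  have h1 := descent_half hK0 hLb hd hmono hup hK hx hy hz1
  have h2 := descent_half hK0 hLb hd hmono hup hK hy hx hz2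
  rw [norm_sub_rev (G x) (G y)] at h2
  have h3 : ⟪G x, y - x⟫ + ⟪G y, x - y⟫ = -⟪G y - G x, y - x⟫ := by
    rw [inner_sub_left]
    have : (⟪G y, x - y⟫ : ℝ) = -⟪G y, y - x⟫ := by
      rw [show x - y = -(y - x) by abel, inner_neg_right]
    rw [this]; ring
  have e : 1 / Lb * ‖G y - G x‖ ^ 2
      = 1 / (2 * Lb) * ‖G y - G x‖ ^ 2 + 1 / (2 * Lb) * ‖G y - G x‖ ^ 2 := by ring
  have h4 : 1 / Lb * ‖G y - G x‖ ^ 2 ≤ ⟪G y - G x, y - x⟫ := by linarith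
  have h5 := mul_le_mul_of_nonneg_left h4 hLb.le
  have e2 : Lb * (1 / Lb * ‖G y - G x‖ ^ 2) = ‖G y - G x‖ ^ 2 := by field_simp
  linarith

private lemma chainA {f : Y → ℝ} {G : Y → Y} {c₀ : Y} {ε K Lb δ : ℝ} (hK0 : 0 < K) (hLb : 0 < Lb)
    (hδ : 0 < δ)
    (hd : ∀ y ∈ ball c₀ ε, HasFDerivAt f ((InnerProductSpace.toDual ℝ Y (G y) : Y →L[ℝ] ℝ)) y)
    (hmono : ∀ x ∈ ball c₀ ε, ∀ y ∈ ball c₀ ε, 0 ≤ ⟪G y - G x, y - x⟫)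
    (hup : ∀ x ∈ ball c₀ ε, ∀ y ∈ ball c₀ ε, ⟪G y - G x, y - x⟫ ≤ Lb * ‖y - x‖ ^ 2)
    (hK : ∀ x ∈ ball c₀ ε, ∀ y ∈ ball c₀ ε, ‖G y - G x‖ ≤ K * ‖y - x‖)
    {x y : Y} (hx : x ∈ closedBall c₀ (ε - δ)) (hy : y ∈ closedBall c₀ (ε - δ)) :
    ‖G y - G x‖ ^ 2 ≤ Lb * ⟪G y - G x, y - x⟫ := by
  rcases eq_or_ne y x with rfl | hne
  · simp
  have hdpos : 0 < ‖y - x‖ := by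
    rw [norm_pos_iff, sub_ne_zero]; exact hne
  obtain ⟨n, hn⟩ := exists_nat_gt (K / Lb * ‖y - x‖ / δ)
  have hnpos : 0 < (n : ℝ) := lt_of_le_of_lt (by positivity) hn
  have hn0 : (n : ℝ) ≠ 0 := ne_of_gt hnpos
  set v := y - x with hv
  set u : ℕ → Y := fun i => x + ((i : ℝ) / n) • v with hu
  have humem : ∀ i : ℕ, (i : ℝ) ≤ (n : ℝ) → u i ∈ closedBall c₀ (ε - δ) := by
    intro i hi
    have h0 : (0:ℝ) ≤ (i:ℝ)/n := by positivity
    have h1 : ((i:ℝ)/n) ≤ 1 := by rw [div_le_one hnpos]; exact hi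
    have h := (convex_closedBall c₀ (ε - δ)) hx hy (by linarith : (0:ℝ) ≤ 1 - (i:ℝ)/n) h0
      (by ring)
    convert h using 1
    simp only [hu, hv]; module
  have hballmem : ∀ i : ℕ, (i : ℝ) ≤ (n : ℝ) → u i ∈ ball c₀ ε := by
    intro i hi
    have := mem_closedBall.mp (humem i hi)
    exact mem_ball.mpr (lt_of_le_of_lt this (by linarith))
  have hdiff : ∀ i : ℕ, u (i+1) - u i = (n:ℝ)⁻¹ • v := by
    intro i
    have h : u (i+1) - u i = (((i:ℝ)+1)/n - (i:ℝ)/n) • v := by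
      rw [hu]; push_cast; module
    have h2 : ((i:ℝ)+1)/n - (i:ℝ)/n = (n:ℝ)⁻¹ := by field_simp; ring
    rw [h, h2]
  have hdiffnorm : ∀ i : ℕ, ‖u (i+1) - u i‖ = (n:ℝ)⁻¹ * ‖v‖ := by
    intro i
    rw [hdiff i, norm_smul, Real.norm_eq_abs, abs_of_pos (by positivity)]
  have hstepfit : (K / Lb) * ((n:ℝ)⁻¹ * ‖v‖) < δ := by
    rw [div_lt_iff₀ hδ] at hn
    have : K / Lb * ‖y - x‖ < δ * n := by linarith [hn]
    rw [hv]
    calc K / Lb * ((n:ℝ)⁻¹ * ‖y - x‖) = (K / Lb * ‖y - x‖) * (n:ℝ)⁻¹ := by ring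
      _ < (δ * n) * (n:ℝ)⁻¹ := by
          apply mul_lt_mul_of_pos_right this (by positivity)
      _ = δ := by field_simp
  have hstep : ∀ i : ℕ, i < n →
      ‖G (u (i+1)) - G (u i)‖ ^ 2 ≤ Lb * ⟪G (u (i+1)) - G (u i), u (i+1) - u i⟫ := by
    intro i hi
    have hii : (i : ℝ) ≤ (n : ℝ) := by exact_mod_cast Nat.le_of_lt hi
    have hii1 : ((i+1 : ℕ) : ℝ) ≤ (n : ℝ) := by exact_mod_cast hi
    have hmi := hballmem i hii
    have hmi1 := hballmem (i+1) hii1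
    have hmci := humem i hii
    have hmci1 := humem (i+1) hii1
    -- step points are in the ball
    have hstep1 : u (i+1) - Lb⁻¹ • (G (u (i+1)) - G (u i)) ∈ ball c₀ ε := by
      rw [mem_ball, dist_eq_norm]
      have hGn : ‖G (u (i+1)) - G (u i)‖ ≤ K * ((n:ℝ)⁻¹ * ‖v‖) := by
        have := hK _ hmi _ hmi1
        rwa [hdiffnorm i] at this
      calc ‖u (i+1) - Lb⁻¹ • (G (u (i+1)) - G (u i)) - c₀‖
          ≤ ‖u (i+1) - c₀‖ + ‖Lb⁻¹ • (G (u (i+1)) - G (u i))‖ := by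
            rw [show u (i+1) - Lb⁻¹ • (G (u (i+1)) - G (u i)) - c₀
              = (u (i+1) - c₀) - Lb⁻¹ • (G (u (i+1)) - G (u i)) by abel]
            exact norm_sub_le _ _
        _ ≤ (ε - δ) + Lb⁻¹ * (K * ((n:ℝ)⁻¹ * ‖v‖)) := by
            have h1 : ‖u (i+1) - c₀‖ ≤ ε - δ := by
              have := mem_closedBall.mp hmci1; rwa [dist_eq_norm] at this
            have h2 : ‖Lb⁻¹ • (G (u (i+1)) - G (u i))‖ = Lb⁻¹ * ‖G (u (i+1)) - G (u i)‖ := by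
              rw [norm_smul, Real.norm_eq_abs, abs_of_pos (by positivity)]
            rw [h2]
            have h3 : Lb⁻¹ * ‖G (u (i+1)) - G (u i)‖ ≤ Lb⁻¹ * (K * ((n:ℝ)⁻¹ * ‖v‖)) :=
              mul_le_mul_of_nonneg_left hGn (by positivity)
            linarith
        _ < ε := by
            have : Lb⁻¹ * (K * ((n:ℝ)⁻¹ * ‖v‖)) = (K / Lb) * ((n:ℝ)⁻¹ * ‖v‖) := by ring
            rw [this]; linarith [hstepfit]
    have hstep2 : u i - Lb⁻¹ • (G (u i) - G (u (i+1))) ∈ ball c₀ ε := by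
      rw [mem_ball, dist_eq_norm]
      have hGn : ‖G (u i) - G (u (i+1))‖ ≤ K * ((n:ℝ)⁻¹ * ‖v‖) := by
        have := hK _ hmi _ hmi1
        rw [hdiffnorm i] at this
        rwa [norm_sub_rev]
      calc ‖u i - Lb⁻¹ • (G (u i) - G (u (i+1))) - c₀‖
          ≤ ‖u i - c₀‖ + ‖Lb⁻¹ • (G (u i) - G (u (i+1)))‖ := by
            rw [show u i - Lb⁻¹ • (G (u i) - G (u (i+1))) - c₀
              = (u i - c₀) - Lb⁻¹ • (G (u i) - G (u (i+1))) by abel]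
            exact norm_sub_le _ _
        _ ≤ (ε - δ) + Lb⁻¹ * (K * ((n:ℝ)⁻¹ * ‖v‖)) := by
            have h1 : ‖u i - c₀‖ ≤ ε - δ := by
              have := mem_closedBall.mp hmci; rwa [dist_eq_norm] at this
            have h2 : ‖Lb⁻¹ • (G (u i) - G (u (i+1)))‖ = Lb⁻¹ * ‖G (u i) - G (u (i+1))‖ := by
              rw [norm_smul, Real.norm_eq_abs, abs_of_pos (by positivity)]
            rw [h2]
            have h3 : Lb⁻¹ * ‖G (u i) - G (u (i+1))‖ ≤ Lb⁻¹ * (K * ((n:ℝ)⁻¹ * ‖v‖)) :=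
              mul_le_mul_of_nonneg_left hGn (by positivity)
            linarith
        _ < ε := by
            have : Lb⁻¹ * (K * ((n:ℝ)⁻¹ * ‖v‖)) = (K / Lb) * ((n:ℝ)⁻¹ * ‖v‖) := by ring
            rw [this]; linarith [hstepfit]
    exact local_coco hK0.le hLb hd hmono hup hK hmi hmi1 hstep1 hstep2
  -- summation
  have htel : ∑ i ∈ Finset.range n, (G (u (i+1)) - G (u i)) = G (u n) - G (u 0) :=
    Finset.sum_range_sub (fun i => G (u i)) n
  have hun : u n = y := by
    rw [hu]
    simp only
    rw [div_self hn0, one_smul, hv]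
    abel
  have hu0 : u 0 = x := by
    rw [hu]; simp
  have hperterm : ∀ i ∈ Finset.range n,
      (n:ℝ)/Lb * ‖G (u (i+1)) - G (u i)‖ ^ 2 ≤ ⟪G (u (i+1)) - G (u i), v⟫ := by
    intro i hi
    have h := hstep i (Finset.mem_range.mp hi)
    rw [hdiff i, real_inner_smul_right] at h
    have h2 := mul_le_mul_of_nonneg_left h (by positivity : (0:ℝ) ≤ (n:ℝ)/Lb)
    have h3 : (n:ℝ)/Lb * (Lb * ((n:ℝ)⁻¹ * ⟪G (u (i+1)) - G (u i), v⟫))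
        = ⟪G (u (i+1)) - G (u i), v⟫ := by
      field_simp
    linarith
  have hsum1 : ∑ i ∈ Finset.range n, ((n:ℝ)/Lb * ‖G (u (i+1)) - G (u i)‖ ^ 2)
      ≤ ∑ i ∈ Finset.range n, ⟪G (u (i+1)) - G (u i), v⟫ :=
    Finset.sum_le_sum hperterm
  have hsum2 : ∑ i ∈ Finset.range n, ⟪G (u (i+1)) - G (u i), v⟫ = ⟪G y - G x, v⟫ := by
    rw [← sum_inner, htel, hun, hu0]
  have hCS : (∑ i ∈ Finset.range n, ‖G (u (i+1)) - G (u i)‖) ^ 2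
      ≤ (n:ℝ) * ∑ i ∈ Finset.range n, ‖G (u (i+1)) - G (u i)‖ ^ 2 := by
    have := sq_sum_le_card_mul_sum_sq (s := Finset.range n)
      (f := fun i => ‖G (u (i+1)) - G (u i)‖)
    simpa using this
  have hnorm : ‖G y - G x‖ ≤ ∑ i ∈ Finset.range n, ‖G (u (i+1)) - G (u i)‖ := by
    calc ‖G y - G x‖ = ‖∑ i ∈ Finset.range n, (G (u (i+1)) - G (u i))‖ := by
          rw [htel, hun, hu0]
      _ ≤ ∑ i ∈ Finset.range n, ‖G (u (i+1)) - G (u i)‖ := norm_sum_le _ _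
  -- combine
  set S1 := ∑ i ∈ Finset.range n, ‖G (u (i+1)) - G (u i)‖ with hS1
  set S2 := ∑ i ∈ Finset.range n, ‖G (u (i+1)) - G (u i)‖ ^ 2 with hS2
  have hS1n : 0 ≤ S1 := Finset.sum_nonneg fun i _ => norm_nonneg _
  have hsq : ‖G y - G x‖ ^ 2 ≤ S1 ^ 2 := pow_le_pow_left₀ (norm_nonneg _) hnorm 2
  have hsum1' : (n:ℝ)/Lb * S2 ≤ ⟪G y - G x, v⟫ := by
    rw [← hsum2, hS2, Finset.mul_sum]
    exact hsum1
  have hfinal : (n:ℝ) * S2 ≤ Lb * ⟪G y - G x, v⟫ := by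
    have h2 := mul_le_mul_of_nonneg_left hsum1' hLb.le
    have h3 : Lb * ((n:ℝ)/Lb * S2) = (n:ℝ) * S2 := by field_simp
    linarith
  have : ‖G y - G x‖ ^ 2 ≤ Lb * ⟪G y - G x, v⟫ := by linarith
  rwa [hv] at this

private lemma coco_closed {f : Y → ℝ} {G : Y → Y} {c₀ : Y} {ε K Lb : ℝ} (hK0 : 0 < K) (hLb : 0 < Lb)
    (hε : 0 < ε)
    (hd : ∀ y ∈ ball c₀ ε, HasFDerivAt f ((InnerProductSpace.toDual ℝ Y (G y) : Y →L[ℝ] ℝ)) y)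
    (hmono : ∀ x ∈ closedBall c₀ ε, ∀ y ∈ closedBall c₀ ε, 0 ≤ ⟪G y - G x, y - x⟫)
    (hup : ∀ x ∈ closedBall c₀ ε, ∀ y ∈ closedBall c₀ ε, ⟪G y - G x, y - x⟫ ≤ Lb * ‖y - x‖ ^ 2)
    (hK : ∀ x ∈ closedBall c₀ ε, ∀ y ∈ closedBall c₀ ε, ‖G y - G x‖ ≤ K * ‖y - x‖)
    {x y : Y} (hx : x ∈ closedBall c₀ ε) (hy : y ∈ closedBall c₀ ε) :
    ‖G y - G x‖ ^ 2 ≤ Lb * ⟪G y - G x, y - x⟫ := by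
  have hsub : ball c₀ ε ⊆ closedBall c₀ ε := ball_subset_closedBall
  have hmono' : ∀ a ∈ ball c₀ ε, ∀ b ∈ ball c₀ ε, 0 ≤ ⟪G b - G a, b - a⟫ :=
    fun a ha b hb => hmono a (hsub ha) b (hsub hb)
  have hup' : ∀ a ∈ ball c₀ ε, ∀ b ∈ ball c₀ ε, ⟪G b - G a, b - a⟫ ≤ Lb * ‖b - a‖ ^ 2 :=
    fun a ha b hb => hup a (hsub ha) b (hsub hb)
  have hK' : ∀ a ∈ ball c₀ ε, ∀ b ∈ ball c₀ ε, ‖G b - G a‖ ≤ K * ‖b - a‖ :=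
    fun a ha b hb => hK a (hsub ha) b (hsub hb)
  -- approximating sequences
  set xs : ℕ → Y := fun k => c₀ + (1 - ((k:ℝ)+2)⁻¹) • (x - c₀) with hxs
  set ys : ℕ → Y := fun k => c₀ + (1 - ((k:ℝ)+2)⁻¹) • (y - c₀) with hys
  have htk : ∀ k : ℕ, 0 ≤ 1 - ((k:ℝ)+2)⁻¹ ∧ ((k:ℝ)+2)⁻¹ > 0 := by
    intro k
    constructor
    · have h1 : ((k:ℝ)+2)⁻¹ ≤ 1 := by
        rw [inv_le_one_iff₀]; right; linarith [Nat.cast_nonneg (α := ℝ) k]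
      linarith
    · positivity
  have hmem : ∀ (z : Y), z ∈ closedBall c₀ ε → ∀ k : ℕ,
      c₀ + (1 - ((k:ℝ)+2)⁻¹) • (z - c₀) ∈ closedBall c₀ (ε - ε * ((k:ℝ)+2)⁻¹) := by
    intro z hz k
    rw [mem_closedBall, dist_eq_norm]
    have h1 : c₀ + (1 - ((k:ℝ)+2)⁻¹) • (z - c₀) - c₀ = (1 - ((k:ℝ)+2)⁻¹) • (z - c₀) := by abel
    rw [h1, norm_smul, Real.norm_eq_abs, abs_of_nonneg (htk k).1]
    have h2 : ‖z - c₀‖ ≤ ε := by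
      have := mem_closedBall.mp hz; rwa [dist_eq_norm] at this
    calc (1 - ((k:ℝ)+2)⁻¹) * ‖z - c₀‖ ≤ (1 - ((k:ℝ)+2)⁻¹) * ε :=
          mul_le_mul_of_nonneg_left h2 (htk k).1
      _ = ε - ε * ((k:ℝ)+2)⁻¹ := by ring
  have hineq : ∀ k : ℕ, ‖G (ys k) - G (xs k)‖ ^ 2 ≤ Lb * ⟪G (ys k) - G (xs k), ys k - xs k⟫ := by
    intro k
    exact chainA hK0 hLb (by positivity : 0 < ε * ((k:ℝ)+2)⁻¹) hd hmono' hup' hK'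
      (hmem x hx k) (hmem y hy k)
  -- limits
  have hinv : Tendsto (fun k : ℕ => ((k:ℝ)+2)⁻¹) atTop (𝓝 0) := by
    apply Tendsto.inv_tendsto_atTop
    exact tendsto_atTop_add_const_right atTop 2 tendsto_natCast_atTop_atTop
  have hxs_tend : Tendsto xs atTop (𝓝 x) := by
    have h1 : ∀ k : ℕ, xs k = x - ((k:ℝ)+2)⁻¹ • (x - c₀) := by
      intro k; rw [hxs]; simp only; rw [sub_smul, one_smul]; abel
    have h2 : Tendsto (fun k : ℕ => x - ((k:ℝ)+2)⁻¹ • (x - c₀)) atTop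
        (𝓝 (x - (0:ℝ) • (x - c₀))) := tendsto_const_nhds.sub (hinv.smul_const (x - c₀))
    rw [zero_smul, sub_zero] at h2
    exact h2.congr (fun k => (h1 k).symm)
  have hys_tend : Tendsto ys atTop (𝓝 y) := by
    have h1 : ∀ k : ℕ, ys k = y - ((k:ℝ)+2)⁻¹ • (y - c₀) := by
      intro k; rw [hys]; simp only; rw [sub_smul, one_smul]; abel
    have h2 : Tendsto (fun k : ℕ => y - ((k:ℝ)+2)⁻¹ • (y - c₀)) atTop
        (𝓝 (y - (0:ℝ) • (y - c₀))) := tendsto_const_nhds.sub (hinv.smul_const (y - c₀))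
    rw [zero_smul, sub_zero] at h2
    exact h2.congr (fun k => (h1 k).symm)
  have hmemc : ∀ k : ℕ, xs k ∈ closedBall c₀ ε := by
    intro k
    have := hmem x hx k
    apply closedBall_subset_closedBall (by nlinarith [(htk k).2] : ε - ε*((k:ℝ)+2)⁻¹ ≤ ε) this
  have hmemc' : ∀ k : ℕ, ys k ∈ closedBall c₀ ε := by
    intro k
    have := hmem y hy k
    apply closedBall_subset_closedBall (by nlinarith [(htk k).2] : ε - ε*((k:ℝ)+2)⁻¹ ≤ ε) this
  have hGxs : Tendsto (fun k => G (xs k)) atTop (𝓝 (G x)) := by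
    rw [tendsto_iff_norm_sub_tendsto_zero]
    apply squeeze_zero (fun k => norm_nonneg _) (fun k => hK _ hx _ (hmemc k))
    have : Tendsto (fun k : ℕ => K * ‖xs k - x‖) atTop (𝓝 (K * 0)) := by
      apply Tendsto.const_mul
      rw [← tendsto_iff_norm_sub_tendsto_zero]
      exact hxs_tend
    simpa using this
  have hGys : Tendsto (fun k => G (ys k)) atTop (𝓝 (G y)) := by
    rw [tendsto_iff_norm_sub_tendsto_zero]
    apply squeeze_zero (fun k => norm_nonneg _) (fun k => hK _ hy _ (hmemc' k))
    have : Tendsto (fun k : ℕ => K * ‖ys k - y‖) atTop (𝓝 (K * 0)) := by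
      apply Tendsto.const_mul
      rw [← tendsto_iff_norm_sub_tendsto_zero]
      exact hys_tend
    simpa using this
  have hlhs : Tendsto (fun k => ‖G (ys k) - G (xs k)‖ ^ 2) atTop (𝓝 (‖G y - G x‖ ^ 2)) :=
    ((hGys.sub hGxs).norm).pow 2
  have hrhs : Tendsto (fun k => Lb * ⟪G (ys k) - G (xs k), ys k - xs k⟫) atTop
      (𝓝 (Lb * ⟪G y - G x, y - x⟫)) :=
    (((hGys.sub hGxs).inner (hys_tend.sub hxs_tend))).const_mul Lb
  exact le_of_tendsto_of_tendsto' hlhs hrhs hineq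

private lemma interp_lemma {f : Y → ℝ} {G : Y → Y} {c₀ : Y} {ε μ L : ℝ} (hε : 0 < ε) (hμ : 0 < μ)
    (hL : 0 < L)
    (hd : ∀ y ∈ ball c₀ ε, HasFDerivAt f ((InnerProductSpace.toDual ℝ Y (G y) : Y →L[ℝ] ℝ)) y)
    (hmono : ∀ x ∈ closedBall c₀ ε, ∀ y ∈ closedBall c₀ ε, μ * ‖y - x‖ ^ 2 ≤ ⟪G y - G x, y - x⟫)
    (hlip : ∀ x ∈ closedBall c₀ ε, ∀ y ∈ closedBall c₀ ε, ‖G y - G x‖ ≤ L * ‖y - x‖)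
    {x y : Y} (hx : x ∈ closedBall c₀ ε) (hy : y ∈ closedBall c₀ ε) :
    ‖G y - G x‖ ^ 2 + μ * L * ‖y - x‖ ^ 2 ≤ (L + μ) * ⟪G y - G x, y - x⟫ := by
  have hmono0 : ∀ a ∈ closedBall c₀ ε, ∀ b ∈ closedBall c₀ ε, 0 ≤ ⟪G b - G a, b - a⟫ := by
    intro a ha b hb
    have := hmono a ha b hb
    nlinarith [norm_nonneg (b - a)]
  have hup : ∀ a ∈ closedBall c₀ ε, ∀ b ∈ closedBall c₀ ε, ⟪G b - G a, b - a⟫ ≤ L * ‖b - a‖ ^ 2 := by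
    intro a ha b hb
    have h1 := real_inner_le_norm (G b - G a) (b - a)
    have h2 := hlip a ha b hb
    nlinarith [norm_nonneg (b - a)]
  rcases lt_trichotomy μ L with hμL | hμL | hμL
  · -- μ < L : use the shifted function
    set h : Y → ℝ := fun w => f w - μ/2 * ‖w‖ ^ 2 with hh
    set Gh : Y → Y := fun w => G w - μ • w with hGh
    have hdh : ∀ w ∈ ball c₀ ε,
        HasFDerivAt h ((InnerProductSpace.toDual ℝ Y (Gh w) : Y →L[ℝ] ℝ)) w := by
      intro w hw
      have h1 : HasFDerivAt (fun w : Y => ‖w‖ ^ 2)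
          (2 • (innerSL ℝ w)) w := by
        simpa using (hasFDerivAt_id w).norm_sq
      have h2 := (hd w hw).sub (h1.const_mul (μ/2))
      have h3 : (InnerProductSpace.toDual ℝ Y (Gh w) : Y →L[ℝ] ℝ)
          = (InnerProductSpace.toDual ℝ Y (G w) : Y →L[ℝ] ℝ) - (μ/2) • (2 • (innerSL ℝ w)) := by
        apply ContinuousLinearMap.ext
        intro z
        simp only [hGh, ContinuousLinearMap.sub_apply, ContinuousLinearMap.smul_apply,
          InnerProductSpace.toDual_apply_apply, innerSL_apply_apply, inner_sub_left, real_inner_smul_left,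
          smul_eq_mul]
        ring
      rw [h3]
      exact h2
    have hmh : ∀ a ∈ closedBall c₀ ε, ∀ b ∈ closedBall c₀ ε, 0 ≤ ⟪Gh b - Gh a, b - a⟫ := by
      intro a ha b hb
      have he : Gh b - Gh a = (G b - G a) - μ • (b - a) := by
        rw [hGh]; simp only; rw [smul_sub]; abel
      rw [he, inner_sub_left, real_inner_smul_left, real_inner_self_eq_norm_sq]
      have := hmono a ha b hb
      nlinarith
    have huh : ∀ a ∈ closedBall c₀ ε, ∀ b ∈ closedBall c₀ ε,
        ⟪Gh b - Gh a, b - a⟫ ≤ (L - μ) * ‖b - a‖ ^ 2 := by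
      intro a ha b hb
      have he : Gh b - Gh a = (G b - G a) - μ • (b - a) := by
        rw [hGh]; simp only; rw [smul_sub]; abel
      rw [he, inner_sub_left, real_inner_smul_left, real_inner_self_eq_norm_sq]
      have := hup a ha b hb
      nlinarith
    have hKh : ∀ a ∈ closedBall c₀ ε, ∀ b ∈ closedBall c₀ ε,
        ‖Gh b - Gh a‖ ≤ (L + μ) * ‖b - a‖ := by
      intro a ha b hb
      have he : Gh b - Gh a = (G b - G a) - μ • (b - a) := by
        rw [hGh]; simp only; rw [smul_sub]; abel
      rw [he]
      calc ‖(G b - G a) - μ • (b - a)‖ ≤ ‖G b - G a‖ + ‖μ • (b - a)‖ := norm_sub_le _ _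
        _ ≤ L * ‖b - a‖ + μ * ‖b - a‖ := by
            have := hlip a ha b hb
            rw [norm_smul, Real.norm_eq_abs, abs_of_pos hμ]
            linarith
        _ = (L + μ) * ‖b - a‖ := by ring
    have hcoco := coco_closed (by positivity : (0:ℝ) < L + μ) (by linarith : (0:ℝ) < L - μ)
      hε hdh hmh huh hKh hx hy
    have he : Gh y - Gh x = (G y - G x) - μ • (y - x) := by
      rw [hGh]; simp only; rw [smul_sub]; abel
    rw [he] at hcoco
    have e1 : ‖(G y - G x) - μ • (y - x)‖ ^ 2
        = ‖G y - G x‖ ^ 2 - 2 * μ * ⟪G y - G x, y - x⟫ + μ^2 * ‖y - x‖ ^ 2 := by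
      rw [norm_sub_sq_real, real_inner_smul_right, norm_smul, Real.norm_eq_abs,
        abs_of_pos hμ, mul_pow]
      ring
    have e2 : ⟪(G y - G x) - μ • (y - x), y - x⟫
        = ⟪G y - G x, y - x⟫ - μ * ‖y - x‖ ^ 2 := by
      rw [inner_sub_left, real_inner_smul_left, real_inner_self_eq_norm_sq]
    rw [e1, e2] at hcoco
    nlinarith [hcoco]
  · -- μ = L
    subst hμL
    have hcoco := coco_closed hμ hμ hε hd hmono0 hup hlip hx hy
    have h2 := hmono x hx y hy
    nlinarith [h2, hcoco]
  · -- μ > L : degenerate, ball pairs coincide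
    have h1 := hmono x hx y hy
    have h2 := real_inner_le_norm (G y - G x) (y - x)
    have h3 := hlip x hx y hy
    have hd2 : ‖y - x‖ ^ 2 ≤ 0 := by
      nlinarith [mul_le_mul_of_nonneg_right h3 (norm_nonneg (y - x))]
    have hd0 : ‖y - x‖ = 0 := sq_eq_zero_iff.mp (le_antisymm hd2 (sq_nonneg _))
    have hyx : y = x := by
      rw [← sub_eq_zero]; exact norm_eq_zero.mp hd0
    subst hyx
    simp

end Auxiliary

/-- Lemma 4.17 / `lem:BFP_it`.
(a) The map `T_u` is a uniform contraction on `B_λ(y*)`; (b) for `u` with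
`𝒞_ρ(u) ≤ (1−c)·min{(1−c̃)λ, ε}`, `T_u` maps `B_λ(y*)` into itself, has a unique fixed point
`y_u` (which solves the quasi-generalized equation) and the fixed-point iterates satisfy
`‖y_{u,n} − y_u‖ ≤ (c̃ⁿ/((1−c)(1−c̃)))·𝒞_ρ(u)`. -/
theorem stmt_19
    {Y : Type*} [NormedAddCommGroup Y] [InnerProductSpace ℝ Y] [CompleteSpace Y]
    {U : Type*} [NormedAddCommGroup U] [NormedSpace ℝ U] [CompleteSpace U]
    (A : Y → U → Y) (B : Y → U → Set Y) (Φ : Y → U → Y) (𝒰 : Set U)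
    (ystar : Y) (ustar : U)
    (h𝒰 : 𝒰 ∈ 𝓝 ustar) (hustar : ustar ∈ 𝒰)
    (ε μA LA LΦ : ℝ) (hε : 0 < ε) (hμA : 0 < μA) (hLA : 0 < LA)
    -- standing assumptions
    (hmonoA : ∀ u ∈ 𝒰, ∀ y₁ ∈ closedBall ystar ε, ∀ y₂ ∈ closedBall ystar ε,
      μA * ‖y₂ - y₁‖ ^ 2 ≤ ⟪A y₂ u - A y₁ u, y₂ - y₁⟫)
    (hlipA : ∀ u ∈ 𝒰, ∀ y₁ ∈ closedBall ystar ε, ∀ y₂ ∈ closedBall ystar ε,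
      ‖A y₂ u - A y₁ u‖ ≤ LA * ‖y₂ - y₁‖)
    (hB : ∀ u ∈ 𝒰, IsMaxMonotone (fun y => B y u))
    -- Φ: continuity at (y*,u*), uniform Lipschitz continuity in the first variable
    (hΦcont : ContinuousAt (fun p : Y × U => Φ p.1 p.2) (ystar, ustar))
    (hLΦ : LΦ ∈ Set.Ico (0 : ℝ) 1)
    (hlipΦ : ∀ u ∈ 𝒰, ∀ y₁ ∈ closedBall ystar ε, ∀ y₂ ∈ closedBall ystar ε,
      ‖Φ y₂ u - Φ y₁ u‖ ≤ LΦ * ‖y₂ - y₁‖)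
    -- smallness condition: (a) or (b)
    (hsmall : LΦ < μA / LA ∨
      (LΦ < 2 * Real.sqrt (LA / μA) / (1 + LA / μA) ∧
        ∃ g : Y → U → ℝ, ∀ u ∈ 𝒰, ∀ y ∈ ball ystar ε,
          HasFDerivAt (fun z => g z u)
            ((InnerProductSpace.toDual ℝ Y (A y u) : Y →L[ℝ] ℝ)) y))
    -- (y*, u*) solves the quasi-generalized equation
    (hsol : -A ystar ustar ∈ B (ystar - Φ ystar ustar) ustar)
    -- choice of ρ and c
    (ρ c : ℝ) (hρ : ρ ∈ Set.Ioo 0 (2 * μA / LA ^ 2))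
    (hc : c = Real.sqrt (1 - 2 * ρ * μA + ρ ^ 2 * LA ^ 2))
    -- the resolvent J_{ρB}
    (J : Y → U → Y)
    (hJ : ∀ q : Y, ∀ u ∈ 𝒰, q - J q u ∈ ρ • B (J q u) u)
    -- the quantity 𝒞_ρ(u)
    (Cρ : U → ℝ)
    (hCρ : ∀ u : U, Cρ u =
      2 * ‖Φ ystar u - Φ ystar ustar‖
        + ‖J (ystar - ρ • A ystar ustar - Φ ystar ustar) u
            - J (ystar - ρ • A ystar ustar - Φ ystar ustar) ustar‖
        + ρ * ‖A ystar u - A ystar ustar‖)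
    -- λ as provided by the preceding solvability lemma, and the induced map T_u
    (lam : ℝ) (hlam : lam ∈ Set.Ioc (0 : ℝ) ε)
    (T : Y → U → Y)
    (hT : ∀ y ∈ closedBall ystar lam, ∀ u ∈ 𝒰, Cρ u ≤ (1 - c) * ε / 2 →
      (T y u ∈ closedBall ystar ε ∧ -A (T y u) u ∈ B (T y u - Φ y u) u) ∧
      (∀ z ∈ closedBall ystar ε, -A z u ∈ B (z - Φ y u) u → z = T y u)) :
    ∃ ctilde ∈ Set.Ioo (0 : ℝ) 1,
      -- (a) T_u : B_λ(y*) → B_ε(y*) is Lipschitz with modulus c̃, uniformly in u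
      (∀ u ∈ 𝒰, Cρ u ≤ (1 - c) * ε / 2 →
        ∀ y₁ ∈ closedBall ystar lam, ∀ y₂ ∈ closedBall ystar lam,
          ‖T y₂ u - T y₁ u‖ ≤ ctilde * ‖y₂ - y₁‖) ∧
      -- (b) for u with the stronger bound, T_u is a self-map of B_λ(y*) with unique fixed
      -- point y_u solving the quasi-generalized equation, and the iterates converge
      (∀ u ∈ 𝒰, Cρ u ≤ (1 - c) * ε / 2 →
        Cρ u ≤ (1 - c) * min ((1 - ctilde) * lam) ε →
        (∀ y ∈ closedBall ystar lam, T y u ∈ closedBall ystar lam) ∧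
        ∃ yu : Y, (yu ∈ closedBall ystar lam ∧ T yu u = yu) ∧
          (∀ y' ∈ closedBall ystar lam, T y' u = y' → y' = yu) ∧
          -A yu u ∈ B (yu - Φ yu u) u ∧
          (∀ yseq : ℕ → Y, yseq 0 = ystar → (∀ n : ℕ, yseq (n + 1) = T (yseq n) u) →
            ∀ n : ℕ, ‖yseq n - yu‖ ≤ ctilde ^ n / ((1 - c) * (1 - ctilde)) * Cρ u)) := by
  classical
  have hLΦ0 : 0 ≤ LΦ := hLΦ.1
  have hρ0 : 0 < ρ := hρ.1
  have hc0 : 0 ≤ c := hc ▸ Real.sqrt_nonneg _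
  have hrlt1 : 1 - 2*ρ*μA + ρ^2*LA^2 < 1 := by
    have h1 : ρ * LA^2 < 2*μA := by
      have h2 := hρ.2
      rw [lt_div_iff₀ (by positivity : (0:ℝ) < LA^2)] at h2
      linarith
    nlinarith [hρ.1]
  have hc1 : c < 1 := by
    rw [hc]
    exact (Real.sqrt_lt' one_pos).mpr (by nlinarith)
  have h1c : 0 < 1 - c := by linarith
  -- contraction of I - ρ A
  have cmono : ∀ u ∈ 𝒰, ∀ a ∈ closedBall ystar ε, ∀ b ∈ closedBall ystar ε,
      ‖(b - ρ • A b u) - (a - ρ • A a u)‖ ≤ c * ‖b - a‖ := by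
    intro u hu a ha b hb
    have hm := hmonoA u hu a ha b hb
    have hl := hlipA u hu a ha b hb
    have e1 : (b - ρ • A b u) - (a - ρ • A a u) = (b - a) - ρ • (A b u - A a u) := by
      rw [smul_sub]; abel
    rw [e1]
    have e2 : ‖(b - a) - ρ • (A b u - A a u)‖ ^ 2
        = ‖b - a‖^2 - 2*(ρ*⟪A b u - A a u, b - a⟫) + ρ^2 * ‖A b u - A a u‖^2 := by
      rw [norm_sub_sq_real, real_inner_smul_right, real_inner_comm, norm_smul,
        Real.norm_eq_abs, abs_of_pos hρ0, mul_pow]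
      all_goals ring
    have hsq : ‖(b - a) - ρ • (A b u - A a u)‖ ^ 2
        ≤ (1 - 2*ρ*μA + ρ^2*LA^2) * ‖b - a‖^2 := by
      rw [e2]
      nlinarith [hm, hρ0, norm_nonneg (A b u - A a u), norm_nonneg (b - a),
        mul_le_mul hl hl (norm_nonneg _) (by positivity : (0:ℝ) ≤ LA * ‖b - a‖)]
    rcases le_or_gt 0 (1 - 2*ρ*μA + ρ^2*LA^2) with hr | hr
    · have h3 : ‖(b - a) - ρ • (A b u - A a u)‖
          ≤ Real.sqrt ((1-2*ρ*μA+ρ^2*LA^2) * ‖b-a‖^2) := by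
        rw [← Real.sqrt_sq (norm_nonneg ((b - a) - ρ • (A b u - A a u)))]
        exact Real.sqrt_le_sqrt hsq
      rwa [Real.sqrt_mul hr, Real.sqrt_sq (norm_nonneg (b - a)), ← hc] at h3
    · have h4 : (1-2*ρ*μA+ρ^2*LA^2) * ‖b-a‖^2 ≤ 0 := by
        nlinarith [sq_nonneg ‖b-a‖, mul_le_mul_of_nonneg_right hr.le (sq_nonneg ‖b-a‖)]
      have h5 : ‖(b - a) - ρ • (A b u - A a u)‖ = 0 :=
        sq_eq_zero_iff.mp (le_antisymm (le_trans hsq h4) (sq_nonneg _))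
      rw [h5]; positivity
  -- resolvent uniqueness
  have runiq : ∀ u ∈ 𝒰, ∀ q p : Y, q - p ∈ ρ • B p u → p = J q u := by
    intro u hu q p hp
    rcases Set.mem_smul_set.mp (hJ q u hu) with ⟨b1, hb1, he1⟩
    rcases Set.mem_smul_set.mp hp with ⟨b2, hb2, he2⟩
    have hm := (hB u hu).1 hb1 hb2
    have hkey : ρ • (b2 - b1) = (J q u) - p := by rw [smul_sub, he1, he2]; abel
    have h2 : (⟪b2 - b1, p - J q u⟫ : ℝ) = ρ⁻¹ * ⟪ρ • (b2 - b1), p - J q u⟫ := by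
      rw [real_inner_smul_left]; field_simp
    rw [h2, hkey] at hm
    have h3 : (⟪J q u - p, p - J q u⟫ : ℝ) = -‖p - J q u‖^2 := by
      rw [show J q u - p = -(p - J q u) by abel, inner_neg_left, real_inner_self_eq_norm_sq]
    rw [h3] at hm
    have hρinv : (0:ℝ) < ρ⁻¹ := by positivity
    have h4 : ‖p - J q u‖^2 ≤ 0 := by nlinarith
    have h5 := sq_eq_zero_iff.mp (le_antisymm h4 (sq_nonneg _))
    exact sub_eq_zero.mp (norm_eq_zero.mp h5)
  -- nonexpansiveness of the resolvent
  have jnonexp : ∀ u ∈ 𝒰, ∀ q1 q2 : Y, ‖J q2 u - J q1 u‖ ≤ ‖q2 - q1‖ := by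
    intro u hu q1 q2
    rcases Set.mem_smul_set.mp (hJ q1 u hu) with ⟨b1, hb1, he1⟩
    rcases Set.mem_smul_set.mp (hJ q2 u hu) with ⟨b2, hb2, he2⟩
    have hm := (hB u hu).1 hb1 hb2
    have hkey : ρ • (b2 - b1) = (q2 - q1) - (J q2 u - J q1 u) := by
      rw [smul_sub, he1, he2]; abel
    have h2 : (0:ℝ) ≤ ⟪ρ • (b2 - b1), J q2 u - J q1 u⟫ := by
      rw [real_inner_smul_left]; exact mul_nonneg hρ0.le hm
    rw [hkey, inner_sub_left, real_inner_self_eq_norm_sq] at h2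
    have h3 := real_inner_le_norm (q2 - q1) (J q2 u - J q1 u)
    rcases eq_or_lt_of_le (norm_nonneg (J q2 u - J q1 u)) with h0 | h0
    · rw [← h0]; exact norm_nonneg _
    · nlinarith
  -- the uniform contraction estimate
  have hcontract : ∃ ct : ℝ, ct ∈ Set.Ioo (0:ℝ) 1 ∧
      ∀ u ∈ 𝒰, ∀ w₁ ∈ closedBall ystar ε, ∀ w₂ ∈ closedBall ystar ε, ∀ (m : ℝ) (φ₁ φ₂ : Y),
        0 ≤ m → ‖φ₂ - φ₁‖ ≤ LΦ * m →
        ⟪A w₂ u - A w₁ u, (w₂ - w₁) - (φ₂ - φ₁)⟫ ≤ 0 →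
        ‖w₂ - w₁‖ ≤ ct * m := by
    rcases hsmall with hsm | ⟨hsm, g, hg⟩
    · refine ⟨max (LA * LΦ / μA) 2⁻¹, ⟨lt_max_of_lt_right (by norm_num), ?_⟩, ?_⟩
      · apply max_lt
        · rw [div_lt_one hμA]
          rw [lt_div_iff₀ hLA] at hsm
          linarith
        · norm_num
      · intro u hu w₁ hw₁ w₂ hw₂ m φ₁ φ₂ hm hφ hiq
        have hmo := hmonoA u hu w₁ hw₁ w₂ hw₂
        have hli := hlipA u hu w₁ hw₁ w₂ hw₂
        have h1 : (⟪A w₂ u - A w₁ u, w₂ - w₁⟫:ℝ) ≤ ⟪A w₂ u - A w₁ u, φ₂ - φ₁⟫ := by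
          rw [inner_sub_right] at hiq; linarith
        have h2 : (⟪A w₂ u - A w₁ u, φ₂ - φ₁⟫:ℝ) ≤ ‖A w₂ u - A w₁ u‖ * (LΦ * m) := by
          calc (⟪A w₂ u - A w₁ u, φ₂ - φ₁⟫:ℝ) ≤ ‖A w₂ u - A w₁ u‖ * ‖φ₂ - φ₁‖ :=
              real_inner_le_norm _ _
            _ ≤ ‖A w₂ u - A w₁ u‖ * (LΦ * m) :=
              mul_le_mul_of_nonneg_left hφ (norm_nonneg _)
        rcases eq_or_lt_of_le (norm_nonneg (w₂ - w₁)) with h0 | h0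
        · rw [← h0]; positivity
        · have h3 : μA * ‖w₂ - w₁‖^2 ≤ LA * ‖w₂ - w₁‖ * (LΦ * m) := by
            have h4 : ‖A w₂ u - A w₁ u‖ * (LΦ * m) ≤ LA * ‖w₂ - w₁‖ * (LΦ * m) :=
              mul_le_mul_of_nonneg_right hli (by positivity)
            linarith
          have h5 : ‖w₂ - w₁‖ ≤ LA * LΦ / μA * m := by
            rw [div_mul_eq_mul_div, le_div_iff₀ hμA]
            nlinarith
          exact le_trans h5 (mul_le_mul_of_nonneg_right (le_max_left _ _) hm)
    · set σ := Real.sqrt (μA * LA) with hσ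
      have hσpos : 0 < σ := Real.sqrt_pos.mpr (by positivity)
      have hσsq : σ^2 = μA * LA := Real.sq_sqrt (by positivity)
      have hthr : 2 * Real.sqrt (LA/μA) / (1 + LA/μA) = 2*σ/(LA + μA) := by
        have h1 : Real.sqrt (LA/μA) = σ/μA := by
          rw [show LA/μA = (σ/μA)^2 by rw [div_pow, hσsq]; field_simp]
          exact Real.sqrt_sq (by positivity)
        rw [h1]
        field_simp
        ring
      rw [hthr] at hsm
      have hctb1 : (LA + μA) * LΦ / (2*σ) < 1 := by
        rw [div_lt_one (by positivity)]
        rw [lt_div_iff₀ (by positivity : (0:ℝ) < LA + μA)] at hsm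
        linarith
      refine ⟨max ((LA + μA) * LΦ / (2*σ)) 2⁻¹, ⟨lt_max_of_lt_right (by norm_num), ?_⟩, ?_⟩
      · exact max_lt hctb1 (by norm_num)
      · intro u hu w₁ hw₁ w₂ hw₂ m φ₁ φ₂ hm hφ hiq
        have hint := interp_lemma hε hμA hLA (fun y hy => hg u hu y hy)
          (hmonoA u hu) (hlipA u hu) hw₁ hw₂
        have h1 : (⟪A w₂ u - A w₁ u, w₂ - w₁⟫:ℝ) ≤ ⟪A w₂ u - A w₁ u, φ₂ - φ₁⟫ := by
          rw [inner_sub_right] at hiq; linarith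
        have h2 : (⟪A w₂ u - A w₁ u, φ₂ - φ₁⟫:ℝ) ≤ ‖A w₂ u - A w₁ u‖ * (LΦ * m) := by
          calc (⟪A w₂ u - A w₁ u, φ₂ - φ₁⟫:ℝ) ≤ ‖A w₂ u - A w₁ u‖ * ‖φ₂ - φ₁‖ :=
              real_inner_le_norm _ _
            _ ≤ ‖A w₂ u - A w₁ u‖ * (LΦ * m) :=
              mul_le_mul_of_nonneg_left hφ (norm_nonneg _)
        have h3 : μA * LA * ‖w₂ - w₁‖^2 ≤ ((LA + μA) * (LΦ * m))^2 / 4 := by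
          nlinarith [hint, h1, h2, sq_nonneg (‖A w₂ u - A w₁ u‖ - (LA + μA) * (LΦ * m) / 2),
            norm_nonneg (A w₂ u - A w₁ u)]
        have h6 : (σ * ‖w₂ - w₁‖)^2 ≤ ((LA + μA) * (LΦ * m) / 2)^2 := by
          rw [mul_pow, hσsq]; nlinarith [h3]
        have h7 : σ * ‖w₂ - w₁‖ ≤ (LA + μA) * (LΦ * m) / 2 := by
          nlinarith [h6, mul_nonneg hσpos.le (norm_nonneg (w₂ - w₁)),
            (by positivity : (0:ℝ) ≤ (LA + μA) * (LΦ * m) / 2)]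
        have h8 : ‖w₂ - w₁‖ ≤ (LA + μA) * LΦ / (2*σ) * m := by
          rw [div_mul_eq_mul_div, le_div_iff₀ (by positivity : (0:ℝ) < 2*σ)]
          nlinarith [h7]
        exact le_trans h8 (mul_le_mul_of_nonneg_right (le_max_left _ _) hm)
  obtain ⟨ct, hctIoo, hkey⟩ := hcontract
  have hct0 : 0 < ct := hctIoo.1
  have hct1 : ct < 1 := hctIoo.2
  have hylam : closedBall ystar lam ⊆ closedBall ystar ε :=
    closedBall_subset_closedBall hlam.2
  -- part (a): uniform contraction of T
  have hcontr : ∀ u ∈ 𝒰, Cρ u ≤ (1 - c) * ε / 2 →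
      ∀ y₁ ∈ closedBall ystar lam, ∀ y₂ ∈ closedBall ystar lam,
        ‖T y₂ u - T y₁ u‖ ≤ ct * ‖y₂ - y₁‖ := by
    intro u hu hCu y₁ hy₁ y₂ hy₂
    obtain ⟨⟨hw₁b, hw₁s⟩, -⟩ := hT y₁ hy₁ u hu hCu
    obtain ⟨⟨hw₂b, hw₂s⟩, -⟩ := hT y₂ hy₂ u hu hCu
    have hmB := (hB u hu).1 hw₁s hw₂s
    have hiq : (⟪A (T y₂ u) u - A (T y₁ u) u,
        (T y₂ u - T y₁ u) - (Φ y₂ u - Φ y₁ u)⟫:ℝ) ≤ 0 := by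
      have he1 : -A (T y₂ u) u - -A (T y₁ u) u = -(A (T y₂ u) u - A (T y₁ u) u) := by abel
      have he2 : (T y₂ u - Φ y₂ u) - (T y₁ u - Φ y₁ u)
          = (T y₂ u - T y₁ u) - (Φ y₂ u - Φ y₁ u) := by abel
      rw [he1, he2, inner_neg_left] at hmB
      linarith
    have hφ : ‖Φ y₂ u - Φ y₁ u‖ ≤ LΦ * ‖y₂ - y₁‖ :=
      hlipΦ u hu y₁ (hylam hy₁) y₂ (hylam hy₂)
    exact hkey u hu _ hw₁b _ hw₂b _ _ _ (norm_nonneg _) hφ hiq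
  -- key estimate at y = ystar
  have hTest : ∀ u ∈ 𝒰, Cρ u ≤ (1 - c) * ε / 2 → ‖T ystar u - ystar‖ ≤ Cρ u / (1 - c) := by
    intro u hu hCu
    have hystar_lam : ystar ∈ closedBall ystar lam := mem_closedBall_self hlam.1.le
    obtain ⟨⟨hwb, hws⟩, -⟩ := hT ystar hystar_lam u hu hCu
    have hyscb : ystar ∈ closedBall ystar ε := mem_closedBall_self hε.le
    set w := T ystar u with hw
    set q1 := w - ρ • A w u - Φ ystar u with hq1
    set qs := ystar - ρ • A ystar ustar - Φ ystar ustar with hqs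
    have hp1 : w - Φ ystar u = J q1 u := by
      apply runiq u hu
      exact Set.mem_smul_set.mpr ⟨-A w u, hws, by rw [smul_neg, hq1]; abel⟩
    have hps : ystar - Φ ystar ustar = J qs ustar := by
      apply runiq ustar hustar
      exact Set.mem_smul_set.mpr ⟨-A ystar ustar, hsol, by rw [smul_neg, hqs]; abel⟩
    have hstep1 : ‖w - ystar‖ ≤ ‖(w - Φ ystar u) - (ystar - Φ ystar ustar)‖
        + ‖Φ ystar u - Φ ystar ustar‖ := by
      rw [show w - ystar = ((w - Φ ystar u) - (ystar - Φ ystar ustar))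
          + (Φ ystar u - Φ ystar ustar) by abel]
      exact norm_add_le _ _
    have hstep2 : ‖(w - Φ ystar u) - (ystar - Φ ystar ustar)‖
        ≤ ‖q1 - qs‖ + ‖J qs u - J qs ustar‖ := by
      rw [hp1, hps]
      have htri := dist_triangle (J q1 u) (J qs u) (J qs ustar)
      simp only [dist_eq_norm] at htri
      have hne := jnonexp u hu qs q1
      linarith
    have hstep3 : ‖q1 - qs‖ ≤ c * ‖w - ystar‖ + ρ * ‖A ystar u - A ystar ustar‖
        + ‖Φ ystar u - Φ ystar ustar‖ := by
      have he : q1 - qs = (((w - ρ • A w u) - (ystar - ρ • A ystar u))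
          - ρ • (A ystar u - A ystar ustar)) - (Φ ystar u - Φ ystar ustar) := by
        rw [hq1, hqs, smul_sub]; abel
      rw [he]
      have t1 : ‖(((w - ρ • A w u) - (ystar - ρ • A ystar u))
          - ρ • (A ystar u - A ystar ustar)) - (Φ ystar u - Φ ystar ustar)‖
          ≤ ‖((w - ρ • A w u) - (ystar - ρ • A ystar u))
          - ρ • (A ystar u - A ystar ustar)‖ + ‖Φ ystar u - Φ ystar ustar‖ :=
        norm_sub_le _ _
      have t2 : ‖((w - ρ • A w u) - (ystar - ρ • A ystar u))
          - ρ • (A ystar u - A ystar ustar)‖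
          ≤ ‖(w - ρ • A w u) - (ystar - ρ • A ystar u)‖
            + ‖ρ • (A ystar u - A ystar ustar)‖ := norm_sub_le _ _
      have t3 := cmono u hu ystar hyscb w hwb
      have t4 : ‖ρ • (A ystar u - A ystar ustar)‖ = ρ * ‖A ystar u - A ystar ustar‖ := by
        rw [norm_smul, Real.norm_eq_abs, abs_of_pos hρ0]
      linarith
    have hCval := hCρ u
    rw [le_div_iff₀ h1c]
    have hJrw : ‖J qs u - J qs ustar‖
        = ‖J (ystar - ρ • A ystar ustar - Φ ystar ustar) u
            - J (ystar - ρ • A ystar ustar - Φ ystar ustar) ustar‖ := by rw [hqs]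
    nlinarith [hstep1, hstep2, hstep3, hCval, hJrw]
  -- assemble the conclusion
  refine ⟨ct, hctIoo, ?_, ?_⟩
  · intro u hu hCu y₁ hy₁ y₂ hy₂
    exact hcontr u hu hCu y₁ hy₁ y₂ hy₂
  · intro u hu hCu hCu2
    have hystar_lam : ystar ∈ closedBall ystar lam := mem_closedBall_self hlam.1.le
    have hbase : ‖T ystar u - ystar‖ ≤ min ((1 - ct) * lam) ε := by
      have h1 := hTest u hu hCu
      have h2 : Cρ u / (1 - c) ≤ min ((1 - ct) * lam) ε := by
        rw [div_le_iff₀ h1c]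
        calc Cρ u ≤ (1-c) * min ((1-ct)*lam) ε := hCu2
          _ = min ((1-ct)*lam) ε * (1-c) := by ring
      linarith
    have hself : ∀ y ∈ closedBall ystar lam, T y u ∈ closedBall ystar lam := by
      intro y hy
      rw [mem_closedBall, dist_eq_norm]
      have h1 : ‖T y u - ystar‖ ≤ ‖T y u - T ystar u‖ + ‖T ystar u - ystar‖ := by
        rw [show T y u - ystar = (T y u - T ystar u) + (T ystar u - ystar) by abel]
        exact norm_add_le _ _
      have h2 := hcontr u hu hCu ystar hystar_lam y hy
      have h3 : ‖y - ystar‖ ≤ lam := by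
        have := mem_closedBall.mp hy; rwa [dist_eq_norm] at this
      have h4 : ‖T ystar u - ystar‖ ≤ (1 - ct) * lam := le_trans hbase (min_le_left _ _)
      calc ‖T y u - ystar‖ ≤ ct * ‖y - ystar‖ + (1-ct)*lam := by linarith
        _ ≤ ct * lam + (1-ct)*lam := by nlinarith
        _ = lam := by ring
    refine ⟨hself, ?_⟩
    -- fixed point via Banach
    haveI : Nonempty (closedBall ystar lam) := ⟨⟨ystar, hystar_lam⟩⟩
    haveI : CompleteSpace (closedBall ystar lam) :=
      isClosed_closedBall.completeSpace_coe
    set F : closedBall ystar lam → closedBall ystar lam :=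
      fun p => ⟨T p.1 u, hself p.1 p.2⟩ with hF
    have hLip : LipschitzWith (Real.toNNReal ct) F := by
      apply LipschitzWith.of_dist_le_mul
      intro a b
      have h := hcontr u hu hCu b.1 b.2 a.1 a.2
      rw [Subtype.dist_eq, Subtype.dist_eq, dist_eq_norm, dist_eq_norm,
        Real.coe_toNNReal ct hct0.le]
      exact h
    have hCW : ContractingWith (Real.toNNReal ct) F := by
      constructor
      · rw [← Real.toNNReal_one]
        exact (Real.toNNReal_lt_toNNReal_iff one_pos).mpr hct1
      · exact hLip
    set yup := ContractingWith.fixedPoint F hCW with hyup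
    have hfixF : F yup = yup := hCW.fixedPoint_isFixedPt
    have hTeq : T yup.1 u = yup.1 := congrArg Subtype.val hfixF
    refine ⟨yup.1, ⟨yup.2, hTeq⟩, ?_, ?_, ?_⟩
    · -- uniqueness
      intro y' hy' hfix'
      have h := hcontr u hu hCu yup.1 yup.2 y' hy'
      rw [hfix', hTeq] at h
      have h2 : ‖y' - yup.1‖ ≤ 0 := by nlinarith [norm_nonneg (y' - yup.1)]
      exact sub_eq_zero.mp (norm_eq_zero.mp (le_antisymm h2 (norm_nonneg _)))
    · -- solves the quasi-generalized equation
      have h := (hT yup.1 yup.2 u hu hCu).1.2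
      rwa [hTeq] at h
    · -- iterates
      intro yseq h0 hrec
      have hmemseq : ∀ n, yseq n ∈ closedBall ystar lam := by
        intro n
        induction n with
        | zero => rw [h0]; exact hystar_lam
        | succ n ih => rw [hrec n]; exact hself _ ih
      have hub : ‖ystar - yup.1‖ ≤ Cρ u / ((1 - c) * (1 - ct)) := by
        have h1 : ‖ystar - yup.1‖ ≤ ‖ystar - T ystar u‖ + ‖T ystar u - yup.1‖ := by
          rw [show ystar - yup.1 = (ystar - T ystar u) + (T ystar u - yup.1) by abel]
          exact norm_add_le _ _
        have h2 : ‖T ystar u - yup.1‖ = ‖T ystar u - T yup.1 u‖ := by rw [hTeq]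
        have h3 := hcontr u hu hCu yup.1 yup.2 ystar hystar_lam
        have h4 : ‖ystar - T ystar u‖ = ‖T ystar u - ystar‖ := norm_sub_rev _ _
        have h5 := hTest u hu hCu
        have h6 : (1 - ct) * ‖ystar - yup.1‖ ≤ Cρ u / (1 - c) := by linarith
        rw [le_div_iff₀ (mul_pos h1c (by linarith : (0:ℝ) < 1 - ct))]
        have h7 : Cρ u / (1-c) * (1-c) = Cρ u := div_mul_cancel₀ _ (ne_of_gt h1c)
        nlinarith [mul_le_mul_of_nonneg_right h6 h1c.le]
      have hiter : ∀ n, ‖yseq n - yup.1‖ ≤ ct^n * ‖ystar - yup.1‖ := by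
        intro n
        induction n with
        | zero => rw [h0, pow_zero, one_mul]
        | succ n ih =>
          rw [hrec n]
          have h2 := hcontr u hu hCu yup.1 yup.2 (yseq n) (hmemseq n)
          rw [hTeq] at h2
          calc ‖T (yseq n) u - yup.1‖ ≤ ct * ‖yseq n - yup.1‖ := h2
            _ ≤ ct * (ct^n * ‖ystar - yup.1‖) := mul_le_mul_of_nonneg_left ih hct0.le
            _ = ct^(n+1) * ‖ystar - yup.1‖ := by ring
      intro n
      calc ‖yseq n - yup.1‖ ≤ ct^n * ‖ystar - yup.1‖ := hiter n
        _ ≤ ct^n * (Cρ u / ((1-c)*(1-ct))) :=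
            mul_le_mul_of_nonneg_left hub (by positivity)
        _ = ct^n / ((1-c)*(1-ct)) * Cρ u := by ring
end
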